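/- arXiv:1710.00293 — 5 statements merged into one kernel-verified Lean document; each statement's English description precedes it below -/
import Mathlib

section
/- Let M be a nonempty connected compact topological n-dimensional manifold with nonempty boundary, and let Int(M) = M − ∂M denote its interior. For every integer k ≥ 1, the inclusion map F(Int(M),k) → F(M,k), (x_1,…,x_k) ↦ (x_1,…,x_k), is a homotopy equivalence of topological spaces. -/
open scoped Topology

/-- Ordered configuration space of `k` points in `X`: tuples of pairwise
distinct points, i.e. injective functions `Fin k → X`, topologized as a
subspace of the product `X^k`. -/
abbrev Conf (X : Type*) [TopologicalSpace X] (k : ℕ) : Type _ :=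
  {f : Fin k → X // Function.Injective f}

/-- Interior of a topological manifold with boundary: the set of points having
an open neighborhood homeomorphic to `ℝ^n`. -/
def mfdInterior (n : ℕ) (M : Type*) [TopologicalSpace M] : Set M :=
  {x | ∃ U : Set M, IsOpen U ∧ x ∈ U ∧ Nonempty (U ≃ₜ EuclideanSpace ℝ (Fin n))}

/-- Inclusion `F(S,k) → F(X,k)` of the configuration space of a subspace
`S ⊆ X` into the configuration space of the ambient space. -/
def confIncl {X : Type*} [TopologicalSpace X] (S : Set X) (k : ℕ) :
    C(Conf (↥S) k, Conf X k) where
  toFun f := ⟨fun i => (f.1 i : X), fun i j hij => f.2 (Subtype.val_injective hij)⟩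
  continuous_toFun := by
    apply Continuous.subtype_mk
    exact continuous_pi fun i =>
      continuous_subtype_val.comp ((continuous_apply i).comp continuous_subtype_val)

/-- A continuous map `f` is a homotopy equivalence if it has a homotopy
inverse. -/
def IsHomotopyEquiv {X Y : Type*} [TopologicalSpace X] [TopologicalSpace Y]
    (f : C(X, Y)) : Prop :=
  ∃ g : C(Y, X), (g.comp f).Homotopic (ContinuousMap.id X) ∧
    (f.comp g).Homotopic (ContinuousMap.id Y)

open Metric Set
noncomputable section
namespace CfgPush
variable {n : ℕ} [NeZero n]
abbrev Ee (n : ℕ) := EuclideanSpace ℝ (Fin n)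
def e0 (n : ℕ) [NeZero n] : Ee n := EuclideanSpace.single 0 1

lemma e0_apply_zero : e0 n 0 = 1 := by simp [e0, EuclideanSpace.single_apply]
lemma e0_apply_ne {i : Fin n} (hi : i ≠ 0) : e0 n i = 0 := by
  simp [e0, EuclideanSpace.single_apply, hi]
lemma norm_e0 : ‖e0 n‖ = 1 := by simp [e0, EuclideanSpace.norm_single]

def τ (t : ℝ) : ℝ := max 0 (min 1 t)
lemma τ_nonneg (t : ℝ) : 0 ≤ τ t := le_max_left _ _
lemma τ_le_one (t : ℝ) : τ t ≤ 1 := max_le zero_le_one (min_le_left _ _)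
lemma τ_zero : τ 0 = 0 := by simp [τ]
lemma τ_one : τ 1 = 1 := by norm_num [τ]
lemma τ_cont : Continuous τ := continuous_const.max (continuous_const.min continuous_id)

def pr (x : Ee n) : Ee n := x - x 0 • e0 n
lemma pr_apply_zero (x : Ee n) : pr x 0 = 0 := by
  simp [pr, PiLp.sub_apply, PiLp.smul_apply, e0_apply_zero]
lemma pr_apply_ne (x : Ee n) {i : Fin n} (hi : i ≠ 0) : pr x i = x i := by
  simp [pr, PiLp.sub_apply, PiLp.smul_apply, e0_apply_ne hi]
lemma pr_cont : Continuous (pr (n := n)) :=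
  continuous_id.sub (((EuclideanSpace.proj (0 : Fin n) : _ →L[ℝ] ℝ).continuous).smul
    continuous_const)
lemma sub_pr (x : Ee n) : x - pr x = x 0 • e0 n := by simp [pr]

variable {r : ℝ} {c : Ee n}

def γ (r s : ℝ) : ℝ := max 0 (1 - s / r)
lemma γ_nonneg (s : ℝ) : 0 ≤ γ r s := le_max_left _ _
lemma γ_le_one (hr : 0 < r) {s : ℝ} (hs : 0 ≤ s) : γ r s ≤ 1 :=
  max_le zero_le_one (by have : 0 ≤ s / r := div_nonneg hs hr.le; linarith)
lemma γ_zero : γ r 0 = 1 := by simp [γ]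
lemma γ_eq_zero (hr : 0 < r) {s : ℝ} (hs : r ≤ s) : γ r s = 0 := by
  have : 1 - s / r ≤ 0 := by
    have := (div_le_div_iff_of_pos_right hr).2 hs
    rw [div_self hr.ne'] at this; linarith
  simp [γ, max_eq_left this]
lemma γ_lip (hr : 0 < r) (a b : ℝ) : |γ r a - γ r b| ≤ |a - b| / r := by
  have h1 : |γ r a - γ r b| ≤ |(1 - a / r) - (1 - b / r)| := by
    rw [γ, γ, max_comm 0 _, max_comm 0 _]
    exact abs_max_sub_max_le_abs _ _ _
  have h2 : (1 - a / r) - (1 - b / r) = (b - a) / r := by ring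
  rw [h2, abs_div, abs_of_pos hr, abs_sub_comm b a] at h1
  exact h1

def β (r : ℝ) (c x : Ee n) : ℝ := max 0 (min 1 (2 - dist (pr x) (pr c) / r))
lemma β_nonneg (x : Ee n) : 0 ≤ β r c x := le_max_left _ _
lemma β_le_one (x : Ee n) : β r c x ≤ 1 := max_le zero_le_one (min_le_left _ _)
lemma β_eq_one (hr : 0 < r) {x : Ee n} (h : dist (pr x) (pr c) ≤ r) : β r c x = 1 := by
  have h2 : (1:ℝ) ≤ 2 - dist (pr x) (pr c) / r := by
    have := (div_le_div_iff_of_pos_right hr).2 h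
    rw [div_self hr.ne'] at this; linarith
  rw [β, min_eq_left h2, max_eq_right zero_le_one]
lemma β_support (hr : 0 < r) {x : Ee n} (h : β r c x ≠ 0) : dist (pr x) (pr c) < 2 * r := by
  by_contra hd
  push_neg at hd
  have h0 : 2 - dist (pr x) (pr c) / r ≤ 0 := by
    have := (div_le_div_iff_of_pos_right hr).2 hd
    rw [mul_div_assoc, div_self hr.ne', mul_one] at this; linarith
  exact h (max_eq_left ((min_le_right _ _).trans h0))
lemma β_cont : Continuous (β r c) :=
  continuous_const.max (continuous_const.min
    (continuous_const.sub ((pr_cont.dist continuous_const).div_const r)))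
lemma β_congr {x y : Ee n} (h : pr x = pr y) : β r c x = β r c y := by rw [β, β, h]

def δ (r : ℝ) (c : Ee n) (t : ℝ) (x : Ee n) : ℝ := r / 2 * (τ t * (β r c x * γ r (x 0)))

lemma δ_nonneg (hr : 0 < r) (t : ℝ) (x : Ee n) : 0 ≤ δ r c t x :=
  mul_nonneg (by linarith) (mul_nonneg (τ_nonneg t) (mul_nonneg (β_nonneg x) (γ_nonneg _)))
lemma δ_le (hr : 0 < r) (t : ℝ) {x : Ee n} (hx : 0 ≤ x 0) : δ r c t x ≤ r / 2 := by
  have h1 : τ t * (β r c x * γ r (x 0)) ≤ 1 :=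
    mul_le_one₀ (τ_le_one t) (mul_nonneg (β_nonneg x) (γ_nonneg _))
      (mul_le_one₀ (β_le_one x) (γ_nonneg _) (γ_le_one hr hx))
  calc δ r c t x ≤ r / 2 * 1 := by
        apply mul_le_mul_of_nonneg_left h1 (by linarith)
    _ = r / 2 := mul_one _
lemma δ_t_zero (x : Ee n) : δ r c 0 x = 0 := by simp [δ, τ_zero]
lemma δ_cont : Continuous fun q : ℝ × Ee n => δ r c q.1 q.2 := by
  refine continuous_const.mul (Continuous.mul (τ_cont.comp continuous_fst) ?_)
  refine Continuous.mul (β_cont.comp continuous_snd) ?_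
  exact continuous_const.max (continuous_const.sub (((EuclideanSpace.proj (0 : Fin n) :
    _ →L[ℝ] ℝ).continuous.comp continuous_snd).div_const r))
lemma δ_support (hr : 0 < r) {t : ℝ} {x : Ee n} (h : δ r c t x ≠ 0) :
    dist (pr x) (pr c) < 2 * r ∧ x 0 < r := by
  have hβ : β r c x ≠ 0 := fun h0 => h (by simp [δ, h0])
  have hγ : γ r (x 0) ≠ 0 := fun h0 => h (by simp [δ, h0])
  refine ⟨β_support hr hβ, ?_⟩
  by_contra hx; push_neg at hx
  exact hγ (γ_eq_zero hr hx)


def Ψ (r : ℝ) (c : Ee n) (t : ℝ) (x : Ee n) : Ee n := x + δ r c t x • e0 n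

lemma Ψ_apply_zero (t : ℝ) (x : Ee n) : Ψ r c t x 0 = x 0 + δ r c t x := by
  simp [Ψ, PiLp.add_apply, PiLp.smul_apply, e0_apply_zero]
lemma Ψ_apply_ne (t : ℝ) (x : Ee n) {i : Fin n} (hi : i ≠ 0) : Ψ r c t x i = x i := by
  simp [Ψ, PiLp.add_apply, PiLp.smul_apply, e0_apply_ne hi]
lemma pr_Ψ (t : ℝ) (x : Ee n) : pr (Ψ r c t x) = pr x := by
  ext i
  rcases eq_or_ne i 0 with rfl | hi
  · rw [pr_apply_zero, pr_apply_zero]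
  · rw [pr_apply_ne _ hi, pr_apply_ne _ hi, Ψ_apply_ne _ _ hi]
lemma Ψ_t_zero (x : Ee n) : Ψ r c 0 x = x := by simp [Ψ, δ_t_zero]
lemma Ψ_cont : Continuous fun q : ℝ × Ee n => Ψ r c q.1 q.2 :=
  continuous_snd.add (δ_cont.smul continuous_const)

lemma Ψ_self_of_δ_eq_zero {t : ℝ} {x : Ee n} (h : δ r c t x = 0) : Ψ r c t x = x := by
  simp [Ψ, h]

lemma dist_Ψ (hr : 0 < r) (t : ℝ) {x : Ee n} (hx : 0 ≤ x 0) : dist (Ψ r c t x) x ≤ r / 2 := by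
  rw [dist_eq_norm]
  have : Ψ r c t x - x = δ r c t x • e0 n := by rw [Ψ]; abel
  rw [this, norm_smul, norm_e0, mul_one, Real.norm_eq_abs,
    abs_of_nonneg (δ_nonneg hr t x)]
  exact δ_le hr t hx

lemma Ψ_inj (hr : 0 < r) (t : ℝ) : Function.Injective (Ψ r c t) := by
  intro x y h
  have hne : ∀ i : Fin n, i ≠ 0 → x i = y i := by
    intro i hi
    have := congrFun (congrArg WithLp.ofLp h) i
    rwa [Ψ_apply_ne _ _ hi, Ψ_apply_ne _ _ hi] at this
  have hpr : pr x = pr y := by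
    ext i
    rcases eq_or_ne i 0 with rfl | hi
    · rw [pr_apply_zero, pr_apply_zero]
    · rw [pr_apply_ne _ hi, pr_apply_ne _ hi, hne i hi]
  have hβ : β r c x = β r c y := β_congr hpr
  set a : ℝ := r / 2 * (τ t * β r c x) with ha
  have h0 : x 0 + a * γ r (x 0) = y 0 + a * γ r (y 0) := by
    have := congrFun (congrArg WithLp.ofLp h) (0 : Fin n)
    rw [Ψ_apply_zero, Ψ_apply_zero] at this
    rw [δ, δ, ← hβ] at this
    calc x 0 + a * γ r (x 0) = x 0 + r / 2 * (τ t * (β r c x * γ r (x 0))) := by ring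
      _ = y 0 + r / 2 * (τ t * (β r c x * γ r (y 0))) := this
      _ = y 0 + a * γ r (y 0) := by ring
  have haa : |a| ≤ r / 2 := by
    rw [abs_of_nonneg (mul_nonneg (by linarith) (mul_nonneg (τ_nonneg t) (β_nonneg x)))]
    calc r / 2 * (τ t * β r c x) ≤ r / 2 * 1 := by
          apply mul_le_mul_of_nonneg_left _ (by linarith)
          exact mul_le_one₀ (τ_le_one t) (β_nonneg x) (β_le_one x)
      _ = r / 2 := mul_one _
  have h00 : x 0 = y 0 := by
    by_contra hxy
    have key : |x 0 - y 0| ≤ |x 0 - y 0| / 2 := by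
      have hd : x 0 - y 0 = a * (γ r (y 0) - γ r (x 0)) := by linarith [h0]
      calc |x 0 - y 0| = |a| * |γ r (y 0) - γ r (x 0)| := by rw [hd, abs_mul]
        _ ≤ (r / 2) * (|y 0 - x 0| / r) :=
            mul_le_mul haa (γ_lip hr _ _) (abs_nonneg _) (by linarith)
        _ = |x 0 - y 0| / 2 := by rw [abs_sub_comm]; field_simp
    have : |x 0 - y 0| > 0 := abs_pos.2 (sub_ne_zero.2 hxy)
    linarith
  ext i
  rcases eq_or_ne i 0 with rfl | hi
  · exact h00
  · exact hne i hi

lemma Ψ_moved_close (hr : 0 < r) (hc : c 0 = 0) {t : ℝ} {x : Ee n} (hx : 0 ≤ x 0)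
    (h : δ r c t x ≠ 0) : dist x c < 3 * r ∧ dist (Ψ r c t x) c < 4 * r := by
  obtain ⟨h1, h2⟩ := δ_support hr h
  have hprc : pr c = c := by rw [pr, hc, zero_smul, sub_zero]
  have hd1 : dist x (pr x) = x 0 := by
    rw [dist_eq_norm, sub_pr, norm_smul, norm_e0, mul_one, Real.norm_eq_abs, abs_of_nonneg hx]
  have hxc : dist x c < 3 * r := by
    calc dist x c ≤ dist x (pr x) + dist (pr x) c := dist_triangle _ _ _
      _ = x 0 + dist (pr x) (pr c) := by rw [hd1, hprc]
      _ < r + 2 * r := by linarith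
      _ = 3 * r := by ring
  refine ⟨hxc, ?_⟩
  calc dist (Ψ r c t x) c ≤ dist (Ψ r c t x) x + dist x c := dist_triangle _ _ _
    _ ≤ r / 2 + dist x c := by linarith [dist_Ψ (c := c) hr t hx]
    _ < 4 * r := by linarith

lemma Ψ_coord0_nonneg (hr : 0 < r) (t : ℝ) {x : Ee n} (hx : 0 ≤ x 0) : 0 ≤ Ψ r c t x 0 := by
  rw [Ψ_apply_zero]; linarith [δ_nonneg (c := c) hr t x]
lemma Ψ_coord0_pos (hr : 0 < r) {t : ℝ} {x : Ee n} (hx : 0 ≤ x 0) (h : δ r c t x ≠ 0) :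
    0 < Ψ r c t x 0 := by
  rw [Ψ_apply_zero]
  have h1 : 0 ≤ δ r c t x := δ_nonneg (c := c) hr t x
  have : 0 < δ r c t x := lt_of_le_of_ne h1 (Ne.symm h)
  linarith
end CfgPush
open Metric Set
noncomputable section
namespace CfgPush
variable {n : ℕ} [NeZero n]


lemma ball_homeo (c : Ee n) {s : ℝ} (hs : 0 < s) :
    Nonempty ((Metric.ball c s : Set (Ee n)) ≃ₜ Ee n) := by
  let pb := OpenPartialHomeomorph.univBall (c : Ee n) s
  refine ⟨(Homeomorph.setCongr (OpenPartialHomeomorph.univBall_target c hs)).symm.trans <|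
    pb.toHomeomorphSourceTarget.symm.trans <|
    (Homeomorph.setCongr (OpenPartialHomeomorph.univBall_source c s)).trans
    (Homeomorph.Set.univ (Ee n))⟩

variable {M : Type} [TopologicalSpace M]

lemma mem_mfdInterior_of_chart (φ : OpenPartialHomeomorph M (EuclideanHalfSpace n))
    {z : M} (hz : z ∈ φ.source) (hpos : 0 < (φ z).1 0) : z ∈ mfdInterior n M := by
  obtain ⟨O, hO, hOt⟩ := isOpen_induced_iff.mp φ.open_target
  set c : Ee n := (φ z).1 with hc
  have hcO : c ∈ O ∩ {y : Ee n | 0 < y 0} := by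
    have h1 : φ z ∈ φ.target := φ.map_source hz
    rw [← hOt] at h1
    exact ⟨h1, hpos⟩
  obtain ⟨s, hs, hball⟩ := Metric.isOpen_iff.mp (hO.inter
    (isOpen_lt continuous_const ((EuclideanSpace.proj (0 : Fin n) : _ →L[ℝ] ℝ).continuous)))
    c hcO
  have hcont : ContinuousOn (fun w : M => (φ w).1) φ.source :=
    continuous_subtype_val.comp_continuousOn φ.continuousOn
  set W : Set M := φ.source ∩ (fun w : M => (φ w).1) ⁻¹' (Metric.ball c s) with hW
  have hWopen : IsOpen W := hcont.isOpen_inter_preimage φ.open_source isOpen_ball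
  have hzW : z ∈ W := ⟨hz, mem_ball_self hs⟩
  -- membership helpers
  have hmem : ∀ b : Ee n, b ∈ Metric.ball c s → 0 < b 0 := fun b hb => (hball hb).2
  have hmemT : ∀ (b : Ee n) (hb : b ∈ Metric.ball c s),
      (⟨b, (hmem b hb).le⟩ : EuclideanHalfSpace n) ∈ φ.target := by
    intro b hb
    rw [← hOt]; exact (hball hb).1
  have e1 : W ≃ₜ (Metric.ball c s : Set (Ee n)) := by
    refine
      { toFun := fun w => ⟨(φ w.1).1, w.2.2⟩
        invFun := fun b => ⟨φ.symm ⟨b.1, (hmem b.1 b.2).le⟩, ?_, ?_⟩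
        left_inv := ?_
        right_inv := ?_
        continuous_toFun := ?_
        continuous_invFun := ?_ }
    · exact φ.map_target (hmemT b.1 b.2)
    · show (φ (φ.symm ⟨b.1, (hmem b.1 b.2).le⟩)).1 ∈ Metric.ball c s
      rw [φ.right_inv (hmemT b.1 b.2)]
      exact b.2
    · intro w
      apply Subtype.ext
      show φ.symm ⟨(φ w.1).1, _⟩ = w.1
      have : (⟨(φ w.1).1, _⟩ : EuclideanHalfSpace n) = φ w.1 := Subtype.ext rfl
      rw [this]
      exact φ.left_inv w.2.1
    · intro b
      apply Subtype.ext
      show (φ (φ.symm ⟨b.1, _⟩)).1 = b.1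
      rw [φ.right_inv (hmemT b.1 b.2)]
    · apply Continuous.subtype_mk
      exact continuous_subtype_val.comp
        (φ.continuousOn.comp_continuous continuous_subtype_val fun w => w.2.1)
    · apply Continuous.subtype_mk
      refine φ.continuousOn_symm.comp_continuous ?_ ?_
      · exact continuous_subtype_val.subtype_mk _
      · exact fun b => hmemT b.1 b.2
  obtain ⟨e2⟩ := ball_homeo c hs
  exact ⟨W, hWopen, hzW, ⟨e1.trans e2⟩⟩

lemma mfdInterior_isOpen : IsOpen (mfdInterior n M) := by
  rw [isOpen_iff_forall_mem_open]
  rintro x ⟨U, hU, hxU, hne⟩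
  exact ⟨U, fun y hy => ⟨U, hU, hy, hne⟩, hU, hxU⟩

lemma coord0_eq_zero_of_not_interior (φ : OpenPartialHomeomorph M (EuclideanHalfSpace n))
    {z : M} (hz : z ∈ φ.source) (h : z ∉ mfdInterior n M) : (φ z).1 0 = 0 := by
  rcases lt_or_eq_of_le (φ z).2 with hlt | heq
  · exact absurd (mem_mfdInterior_of_chart φ hz hlt) h
  · exact heq.symm
end CfgPush
namespace CfgPush
open Metric Set
variable {n : ℕ} [NeZero n]

structure PushData (n : ℕ) [NeZero n] (M : Type) [TopologicalSpace M] where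
  P : ℝ → M → M
  cont : Continuous fun q : ℝ × M => P q.1 q.2
  zero : ∀ x, P 0 x = x
  inj : ∀ t, Function.Injective (P t)
  move : ∀ t x, P t x = x ∨ P t x ∈ mfdInterior n M
  W : Set M
  openW : IsOpen W
  pushes : ∀ x ∈ W, x ∉ mfdInterior n M → P 1 x ∈ mfdInterior n M

variable {M : Type} [TopologicalSpace M] [T2Space M] [ChartedSpace (EuclideanHalfSpace n) M]

lemma exists_pushData {p : M} (hp : p ∉ mfdInterior n M) : ∃ D : PushData n M, p ∈ D.W := by
  classical
  set φ := chartAt (EuclideanHalfSpace n) p with hφ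
  have hpU : p ∈ φ.source := mem_chart_source _ p
  set c : Ee n := (φ p).1 with hcdef
  have hc0 : c 0 = 0 := coord0_eq_zero_of_not_interior φ hpU hp
  obtain ⟨O, hO, hOt⟩ := isOpen_induced_iff.mp φ.open_target
  have hcO : c ∈ O := by
    have h1 : φ p ∈ φ.target := φ.map_source hpU
    rw [← hOt] at h1; exact h1
  obtain ⟨r0, hr0, hballO⟩ := Metric.isOpen_iff.mp hO c hcO
  set r : ℝ := r0 / 5 with hrdef
  have hr : 0 < r := by positivity
  have h4r : 4 * r < r0 := by rw [hrdef]; linarith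
  -- membership in target from ball
  have hballT : ∀ y : EuclideanHalfSpace n, y.1 ∈ Metric.ball c r0 → y ∈ φ.target := by
    intro y hy; rw [← hOt]; exact hballO hy
  -- the main membership lemma
  have hmemT : ∀ (t : ℝ) (z : M) (hz : z ∈ φ.source),
      (⟨Ψ r c t (φ z).1, Ψ_coord0_nonneg hr t (φ z).2⟩ : EuclideanHalfSpace n) ∈ φ.target := by
    intro t z hz
    by_cases hδ : δ r c t (φ z).1 = 0
    · have hΨ : Ψ r c t (φ z).1 = (φ z).1 := Ψ_self_of_δ_eq_zero hδ
      have : (⟨Ψ r c t (φ z).1, Ψ_coord0_nonneg hr t (φ z).2⟩ : EuclideanHalfSpace n) = φ z :=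
        Subtype.ext hΨ
      rw [this]; exact φ.map_source hz
    · apply hballT
      have := (Ψ_moved_close hr hc0 (φ z).2 hδ).2
      exact mem_ball.mpr (lt_trans this h4r)
  set Pf : ℝ → M → M := fun t z =>
    if hz : z ∈ φ.source then
      φ.symm ⟨Ψ r c t (φ z).1, Ψ_coord0_nonneg hr t (φ z).2⟩
    else z with hPfdef
  have hPf : ∀ (t : ℝ) (z : M) (hz : z ∈ φ.source),
      Pf t z = φ.symm ⟨Ψ r c t (φ z).1, Ψ_coord0_nonneg hr t (φ z).2⟩ := fun t z hz => dif_pos hz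
  have hPfmem : ∀ (t : ℝ) (z : M) (hz : z ∈ φ.source), Pf t z ∈ φ.source := by
    intro t z hz; rw [hPf t z hz]; exact φ.map_target (hmemT t z hz)
  have hPfchart : ∀ (t : ℝ) (z : M) (hz : z ∈ φ.source),
      φ (Pf t z) = ⟨Ψ r c t (φ z).1, Ψ_coord0_nonneg hr t (φ z).2⟩ := by
    intro t z hz; rw [hPf t z hz]; exact φ.right_inv (hmemT t z hz)
  have hPfself : ∀ (t : ℝ) (z : M) (hz : z ∈ φ.source), δ r c t (φ z).1 = 0 → Pf t z = z := by
    intro t z hz hδ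
    rw [hPf t z hz]
    have : (⟨Ψ r c t (φ z).1, Ψ_coord0_nonneg hr t (φ z).2⟩ : EuclideanHalfSpace n) = φ z :=
      Subtype.ext (Ψ_self_of_δ_eq_zero hδ)
    rw [this]; exact φ.left_inv hz
  -- the compact set outside which Pf is the identity
  set T : Set (EuclideanHalfSpace n) := {y | dist y.1 c ≤ 4 * r} with hTdef
  have hTtarget : T ⊆ φ.target := fun y hy => hballT y (lt_of_le_of_lt hy h4r)
  have hTcompact : IsCompact T := by
    rw [Subtype.isCompact_iff]
    have himg : Subtype.val '' T = Metric.closedBall c (4 * r) ∩ {x : Ee n | 0 ≤ x 0} := by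
      apply Set.eq_of_subset_of_subset
      · rintro x ⟨y, hy, rfl⟩; exact ⟨hy, y.2⟩
      · rintro x ⟨hx1, hx2⟩; exact ⟨⟨x, hx2⟩, hx1, rfl⟩
    rw [himg]
    exact (isCompact_closedBall c (4 * r)).inter_right
      (isClosed_le continuous_const ((EuclideanSpace.proj (0 : Fin n) : _ →L[ℝ] ℝ).continuous))
  set A : Set M := φ.symm '' T with hAdef
  have hAcompact : IsCompact A := hTcompact.image_of_continuousOn
    (φ.continuousOn_symm.mono hTtarget)
  have hAsource : A ⊆ φ.source := by
    rintro _ ⟨y, hy, rfl⟩; exact φ.map_target (hTtarget hy)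
  have hid : ∀ (t : ℝ) (z : M), z ∉ A → Pf t z = z := by
    intro t z hzA
    by_cases hz : z ∈ φ.source
    · by_cases hδ : δ r c t (φ z).1 = 0
      · exact hPfself t z hz hδ
      · exfalso
        apply hzA
        have h3 : dist (φ z).1 c < 3 * r := (Ψ_moved_close hr hc0 (φ z).2 hδ).1
        have hT : φ z ∈ T := by
          rw [hTdef]; exact le_of_lt (lt_of_lt_of_le h3 (by linarith))
        exact ⟨φ z, hT, φ.left_inv hz⟩
    · exact dif_neg hz
  -- continuity
  have hcont : Continuous fun q : ℝ × M => Pf q.1 q.2 := by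
    rw [continuous_iff_continuousAt]
    rintro ⟨t0, z0⟩
    by_cases hz0 : z0 ∈ φ.source
    · have c1 : ContinuousAt (fun q : ℝ × M => (φ q.2).1) (t0, z0) :=
        continuous_subtype_val.continuousAt.comp ((φ.continuousAt hz0).comp continuousAt_snd)
      have c2 : ContinuousAt (fun q : ℝ × M => Ψ r c q.1 (φ q.2).1) (t0, z0) :=
        Ψ_cont.continuousAt.comp (continuousAt_fst.prodMk c1)
      have c3 : ContinuousAt (fun q : ℝ × M =>
          (⟨Ψ r c q.1 (φ q.2).1, Ψ_coord0_nonneg hr q.1 (φ q.2).2⟩ :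
            EuclideanHalfSpace n)) (t0, z0) :=
        ContinuousAt.codRestrict (f := fun q : ℝ × M => Ψ r c q.1 (φ q.2).1)
          (t := {x : Ee n | 0 ≤ x 0}) (fun q => Ψ_coord0_nonneg hr q.1 (φ q.2).2) c2
      have c4 : ContinuousAt φ.symm
          (⟨Ψ r c t0 (φ z0).1, Ψ_coord0_nonneg hr t0 (φ z0).2⟩ : EuclideanHalfSpace n) := by
        apply φ.symm.continuousAt
        rw [OpenPartialHomeomorph.symm_source]
        exact hmemT t0 z0 hz0
      have hev : (fun q : ℝ × M => φ.symm
          (⟨Ψ r c q.1 (φ q.2).1, Ψ_coord0_nonneg hr q.1 (φ q.2).2⟩ : EuclideanHalfSpace n))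
          =ᶠ[nhds (t0, z0)] fun q : ℝ × M => Pf q.1 q.2 := by
        apply Filter.eventuallyEq_of_mem
          ((φ.open_source.preimage continuous_snd).mem_nhds (by exact hz0))
        intro q hq
        exact (hPf q.1 q.2 hq).symm
      exact (c4.comp c3).congr hev
    · have hz0A : z0 ∉ A := fun h => hz0 (hAsource h)
      have hev : (fun q : ℝ × M => q.2) =ᶠ[nhds (t0, z0)] fun q : ℝ × M => Pf q.1 q.2 := by
        apply Filter.eventuallyEq_of_mem
          ((hAcompact.isClosed.isOpen_compl.preimage continuous_snd).mem_nhds (by exact hz0A))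
        intro q hq
        exact (hid q.1 q.2 hq).symm
      exact continuousAt_snd.congr hev
  -- zero
  have hzero : ∀ z, Pf 0 z = z := by
    intro z
    by_cases hz : z ∈ φ.source
    · exact hPfself 0 z hz (δ_t_zero _)
    · exact dif_neg hz
  -- injectivity
  have hinj : ∀ t, Function.Injective (Pf t) := by
    intro t z1 z2 h
    by_cases h1 : z1 ∈ φ.source <;> by_cases h2 : z2 ∈ φ.source
    · have e1 := hPfchart t z1 h1
      have e2 := hPfchart t z2 h2
      rw [h] at e1
      have : (⟨Ψ r c t (φ z1).1, _⟩ : EuclideanHalfSpace n) = ⟨Ψ r c t (φ z2).1, _⟩ :=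
        e1.symm.trans e2
      have hΨeq : Ψ r c t (φ z1).1 = Ψ r c t (φ z2).1 := congrArg Subtype.val this
      have hval : (φ z1).1 = (φ z2).1 := Ψ_inj hr t hΨeq
      exact φ.injOn h1 h2 (Subtype.ext hval)
    · exfalso
      have h2' : Pf t z2 = z2 := dif_neg h2
      have := hPfmem t z1 h1
      rw [h, h2'] at this
      exact h2 this
    · exfalso
      have h1' : Pf t z1 = z1 := dif_neg h1
      have := hPfmem t z2 h2
      rw [← h, h1'] at this
      exact h1 this
    · have h1' : Pf t z1 = z1 := dif_neg h1
      have h2' : Pf t z2 = z2 := dif_neg h2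
      rw [h1', h2'] at h
      exact h
  -- pushing into the interior
  have hint : ∀ (t : ℝ) (z : M) (hz : z ∈ φ.source), δ r c t (φ z).1 ≠ 0 →
      Pf t z ∈ mfdInterior n M := by
    intro t z hz hδ
    apply mem_mfdInterior_of_chart φ (hPfmem t z hz)
    rw [hPfchart t z hz]
    exact Ψ_coord0_pos hr (φ z).2 hδ
  have hmove : ∀ (t : ℝ) (z : M), Pf t z = z ∨ Pf t z ∈ mfdInterior n M := by
    intro t z
    by_cases hz : z ∈ φ.source
    · by_cases hδ : δ r c t (φ z).1 = 0
      · exact Or.inl (hPfself t z hz hδ)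
      · exact Or.inr (hint t z hz hδ)
    · exact Or.inl (dif_neg hz)
  -- the open set W
  set W : Set M := φ.source ∩
      (fun z : M => (φ z).1) ⁻¹' {x : Ee n | dist (pr x) (pr c) < r ∧ x 0 < r} with hWdef
  have hWopen : IsOpen W := by
    apply (continuous_subtype_val.comp_continuousOn φ.continuousOn).isOpen_inter_preimage
      φ.open_source
    exact (isOpen_lt (pr_cont.dist continuous_const) continuous_const).inter
      (isOpen_lt ((EuclideanSpace.proj (0 : Fin n) : _ →L[ℝ] ℝ).continuous) continuous_const)
  have hpW : p ∈ W := by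
    refine ⟨hpU, ?_, ?_⟩
    · show dist (pr (φ p).1) (pr c) < r
      rw [← hcdef, dist_self]; exact hr
    · show (φ p).1 0 < r
      rw [← hcdef, hc0]; exact hr
  have hpushes : ∀ z ∈ W, z ∉ mfdInterior n M → Pf 1 z ∈ mfdInterior n M := by
    rintro z ⟨hz, hd, hx0⟩ hzint
    apply hint 1 z hz
    have h0 : (φ z).1 0 = 0 := coord0_eq_zero_of_not_interior φ hz hzint
    rw [δ, h0, γ_zero, τ_one, β_eq_one hr (le_of_lt hd)]
    simp only [one_mul, mul_one]
    positivity
  exact ⟨⟨Pf, hcont, hzero, hinj, hmove, W, hWopen, hpushes⟩, hpW⟩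
end CfgPush
namespace CfgPush
open Metric Set Function
variable {n : ℕ} [NeZero n] {M : Type} [TopologicalSpace M]

def compP : List (PushData n M) → ℝ → M → M
  | [], _, x => x
  | D :: L, t, x => compP L t (D.P t x)

lemma compP_cont (L : List (PushData n M)) :
    Continuous fun q : ℝ × M => compP L q.1 q.2 := by
  induction L with
  | nil => exact continuous_snd
  | cons D L ih =>
    show Continuous fun q : ℝ × M => compP L q.1 (D.P q.1 q.2)
    exact ih.comp (continuous_fst.prodMk D.cont)

lemma compP_zero (L : List (PushData n M)) (x : M) : compP L 0 x = x := by
  induction L with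
  | nil => rfl
  | cons D L ih => show compP L 0 (D.P 0 x) = x; rw [D.zero, ih]

lemma compP_inj (L : List (PushData n M)) (t : ℝ) : Function.Injective (compP L t) := by
  induction L with
  | nil => exact fun a b h => h
  | cons D L ih => exact fun a b h => D.inj t (ih h)

lemma compP_int (L : List (PushData n M)) (t : ℝ) (x : M) (hx : x ∈ mfdInterior n M) :
    compP L t x ∈ mfdInterior n M := by
  induction L generalizing x with
  | nil => exact hx
  | cons D L ih =>
    show compP L t (D.P t x) ∈ mfdInterior n M
    rcases D.move t x with h | h
    · rw [h]; exact ih x hx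
    · exact ih _ h

lemma compP_track (L : List (PushData n M)) (x : M) (h : compP L 1 x ∉ mfdInterior n M) :
    compP L 1 x = x ∧ ∀ D ∈ L, D.P 1 x = x := by
  induction L generalizing x with
  | nil => exact ⟨rfl, by simp⟩
  | cons D L ih =>
    have hcs : compP (D :: L) 1 x = compP L 1 (D.P 1 x) := rfl
    rw [hcs] at h
    obtain ⟨h1, h2⟩ := ih (D.P 1 x) h
    have hy : D.P 1 x ∉ mfdInterior n M := by rw [← h1]; exact h
    have hxy : D.P 1 x = x := by
      rcases D.move 1 x with he | hi
      · exact he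
      · exact absurd hi hy
    constructor
    · rw [hcs, hxy]
      rw [hxy] at h1
      exact h1
    · intro D' hD'
      rcases List.mem_cons.mp hD' with rfl | hD'
      · exact hxy
      · have := h2 D' hD'
        rwa [hxy] at this

lemma compP_final (L : List (PushData n M))
    (hcov : ∀ x, x ∉ mfdInterior n M → ∃ D ∈ L, x ∈ D.W) (x : M) :
    compP L 1 x ∈ mfdInterior n M := by
  by_contra h
  obtain ⟨h1, h2⟩ := compP_track L x h
  have hx : x ∉ mfdInterior n M := by rw [← h1]; exact h
  obtain ⟨D, hD, hxW⟩ := hcov x hx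
  have := D.pushes x hxW hx
  rw [h2 D hD] at this
  exact hx this

lemma exists_global [T2Space M] [CompactSpace M] [ChartedSpace (EuclideanHalfSpace n) M] :
    ∃ G : ℝ → M → M, Continuous (fun q : ℝ × M => G q.1 q.2) ∧ (∀ x, G 0 x = x) ∧
      (∀ t, Function.Injective (G t)) ∧
      (∀ t x, x ∈ mfdInterior n M → G t x ∈ mfdInterior n M) ∧
      (∀ x, G 1 x ∈ mfdInterior n M) := by
  classical
  set N : Set M := (mfdInterior n M)ᶜ with hN
  have hNc : IsCompact N := (mfdInterior_isOpen.isClosed_compl).isCompact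
  choose D hD using fun q : N => exists_pushData (n := n) (M := M) (p := q.1) q.2
  have hcover : N ⊆ ⋃ q : N, (D q).W := fun x hx => mem_iUnion.2 ⟨⟨x, hx⟩, hD _⟩
  obtain ⟨s, hs⟩ := hNc.elim_finite_subcover (fun q : N => (D q).W)
    (fun q => (D q).openW) hcover
  set L : List (PushData n M) := s.toList.map D with hL
  refine ⟨compP L, compP_cont L, compP_zero L, compP_inj L, compP_int L, ?_⟩
  apply compP_final L
  intro x hx
  obtain ⟨q, hqs, hxW⟩ := mem_iUnion₂.mp (hs hx)
  exact ⟨D q, List.mem_map.mpr ⟨q, (Finset.mem_toList).mpr hqs, rfl⟩, hxW⟩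
end CfgPush


/-- For a nonempty connected compact topological `n`-manifold `M` with
nonempty boundary and every `k ≥ 1`, the inclusion
`F(Int(M), k) → F(M, k)` is a homotopy equivalence. -/
theorem stmt0 (n : ℕ) [NeZero n] (M : Type) [TopologicalSpace M] [T2Space M]
    [SecondCountableTopology M] [CompactSpace M] [ConnectedSpace M]
    [ChartedSpace (EuclideanHalfSpace n) M]
    (hbd : ((mfdInterior n M)ᶜ : Set M).Nonempty)
    (k : ℕ) (hk : 1 ≤ k) :
    IsHomotopyEquiv (confIncl (mfdInterior n M) k) := by
  classical
  obtain ⟨G, hGc, hG0, hGinj, hGint, hG1⟩ := CfgPush.exists_global (n := n) (M := M)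
  have hcurry : ∀ t : ℝ, Continuous fun x : M => G t x :=
    fun t => hGc.comp (continuous_const.prodMk continuous_id)
  let g : C(Conf M k, Conf (↥(mfdInterior n M)) k) :=
    { toFun := fun f => ⟨fun i => ⟨G 1 (f.1 i), hG1 _⟩,
        fun i j hij => f.2 (hGinj 1 (congrArg Subtype.val hij))⟩
      continuous_toFun := by
        apply Continuous.subtype_mk
        apply continuous_pi
        intro i
        apply Continuous.subtype_mk
        exact (hcurry 1).comp ((continuous_apply i).comp continuous_subtype_val) }
  refine ⟨g, ?_, ?_⟩
  · apply ContinuousMap.Homotopic.symm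
    have hcont2 : Continuous fun q : unitInterval × Conf (↥(mfdInterior n M)) k =>
        (fun i => (⟨G q.1.1 ((q.2.1 i : M)), hGint _ _ (q.2.1 i).2⟩ :
          ↥(mfdInterior n M))) := by
      apply continuous_pi
      intro i
      apply Continuous.subtype_mk
      exact hGc.comp ((continuous_subtype_val.comp continuous_fst).prodMk
        (continuous_subtype_val.comp ((continuous_apply i).comp
          (continuous_subtype_val.comp continuous_snd))))
    exact ⟨⟨⟨fun q => ⟨fun i => ⟨G q.1.1 ((q.2.1 i : M)), hGint _ _ (q.2.1 i).2⟩,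
        fun i j hij => q.2.2 (Subtype.ext (hGinj q.1.1 (congrArg Subtype.val hij)))⟩,
        hcont2.subtype_mk _⟩,
      fun x => Subtype.ext (funext fun i => Subtype.ext (hG0 _)),
      fun x => Subtype.ext (funext fun i => Subtype.ext rfl)⟩⟩
  · apply ContinuousMap.Homotopic.symm
    have hcont3 : Continuous fun q : unitInterval × Conf M k =>
        (fun i => G q.1.1 (q.2.1 i)) := by
      apply continuous_pi
      intro i
      exact hGc.comp ((continuous_subtype_val.comp continuous_fst).prodMk
        (((continuous_apply i).comp continuous_subtype_val).comp continuous_snd))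
    exact ⟨⟨⟨fun q => ⟨fun i => G q.1.1 (q.2.1 i),
        fun i j hij => q.2.2 (hGinj q.1.1 hij)⟩,
        hcont3.subtype_mk _⟩,
      fun x => Subtype.ext (funext fun i => hG0 _),
      fun x => Subtype.ext (funext fun i => rfl)⟩⟩
end
end
end

section
/- Let M be a nonempty connected compact topological n-dimensional manifold with nonempty boundary and let Int(M) = M − ∂M. For every integer k ≥ 1, the configuration space F(M,k) is Σ_k-equivariantly homotopy equivalent to F(Int(M),k): there exist continuous maps f : F(Int(M),k) → F(M,k) and g : F(M,k) → F(Int(M),k) that are equivariant for the coordinate-permutation actions of the symmetric group Σ_k, together with homotopies H : F(M,k) × [0,1] → F(M,k) from f∘g to the identity and G : F(Int(M),k) × [0,1] → F(Int(M),k) from g∘f to the identity such that for each fixed t ∈ [0,1] the maps H(−,t) and G(−,t) are Σ_k-equivariant. -/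
open scoped Topology

/-- The coordinate-permutation action of the symmetric group `Σ_k` on the
configuration space: `σ • (x_1, …, x_k) = (x_{σ⁻¹(1)}, …, x_{σ⁻¹(k)})`. -/
def permAct {X : Type*} [TopologicalSpace X] {k : ℕ} (σ : Equiv.Perm (Fin k))
    (f : Conf X k) : Conf X k :=
  ⟨fun i => f.1 (σ⁻¹ i), fun _ _ hij => (Equiv.injective σ⁻¹) (f.2 hij)⟩

set_option linter.unusedSectionVars false
set_option linter.unusedVariables false
set_option maxHeartbeats 1000000

open Metric Set

noncomputable section
namespace ConfPush

attribute [local instance] Classical.propDecidable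

variable {n : ℕ} [NeZero n]

local notation "E" => EuclideanSpace ℝ (Fin n)

def e0 (n : ℕ) [NeZero n] : EuclideanSpace ℝ (Fin n) := EuclideanSpace.single 0 1

lemma e0_apply_zero : e0 n 0 = 1 := by
  simp [e0, EuclideanSpace.single_apply]

lemma e0_apply_ne {i : Fin n} (h : i ≠ 0) : e0 n i = 0 := by
  simp only [e0, EuclideanSpace.single_apply, if_neg h]

lemma abs_apply_le_norm (z : E) (i : Fin n) : |z i| ≤ ‖z‖ := by
  have h1 : (inner ℝ z (EuclideanSpace.single i (1:ℝ)) : ℝ) = z i := by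
    rw [EuclideanSpace.inner_single_right]; simp
  have h2 := abs_real_inner_le_norm z (EuclideanSpace.single i (1:ℝ))
  rw [h1, EuclideanSpace.norm_single] at h2
  simpa using h2

lemma cont_apply (i : Fin n) : Continuous fun z : E => z i :=
  (EuclideanSpace.proj (𝕜 := ℝ) i).continuous

/-- The horizontal distance to `c`: distance after killing coordinate `0` of `x - c`. -/
def dd (c x : EuclideanSpace ℝ (Fin n)) : ℝ := ‖(x - c) - ((x - c) 0) • e0 n‖

lemma dd_nonneg (c x : E) : 0 ≤ dd c x := norm_nonneg _

lemma dd_le_dist (c x : E) : dd c x ≤ dist x c := by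
  unfold dd
  rw [dist_eq_norm]
  set w : E := x - c with hw
  set v : E := w - (w 0) • e0 n with hv
  have horth : (inner ℝ v ((w 0) • e0 n) : ℝ) = 0 := by
    rw [real_inner_smul_right]
    have : (inner ℝ v (e0 n) : ℝ) = v 0 := by
      rw [e0, EuclideanSpace.inner_single_right]; simp
    rw [this]
    have : v 0 = 0 := by
      simp [hv, e0_apply_zero]
    rw [this]; ring
  have hsum : v + (w 0) • e0 n = w := by simp [hv]
  have := norm_add_sq_real v ((w 0) • e0 n)
  rw [hsum, horth] at this
  nlinarith [norm_nonneg v, norm_nonneg w, norm_nonneg ((w 0) • e0 n), sq_nonneg (‖(w 0) • e0 n‖)]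

lemma dist_le_dd_add (c x : E) : dist x c ≤ dd c x + |(x - c) 0| := by
  rw [dist_eq_norm]
  set w : E := x - c with hw
  set v : E := w - (w 0) • e0 n with hv
  have hsum : w = v + (w 0) • e0 n := by simp [hv]
  calc ‖w‖ = ‖v + (w 0) • e0 n‖ := by rw [← hsum]
    _ ≤ ‖v‖ + ‖(w 0) • e0 n‖ := norm_add_le _ _
    _ = dd c x + |w 0| := by
        rw [norm_smul, e0, EuclideanSpace.norm_single]
        simp [dd, hv, hw, Real.norm_eq_abs]

section Elevel
variable (c : EuclideanSpace ℝ (Fin n)) (r : ℝ)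

/-- Amount of upward push. -/
def uAmt (x : EuclideanSpace ℝ (Fin n)) (s : ℝ) : ℝ :=
  s * (r/4) * max (1 - dd c x / r) 0 * max (1 - 2 * x 0 / r) 0

/-- The local push map. -/
def P (x : EuclideanSpace ℝ (Fin n)) (s : ℝ) : EuclideanSpace ℝ (Fin n) :=
  x + uAmt c r x s • e0 n

variable {c r}

lemma uAmt_nonneg (hr : 0 < r) {s : ℝ} (hs : 0 ≤ s) (x : E) : 0 ≤ uAmt c r x s := by
  have := le_max_right (1 - dd c x / r) 0
  apply mul_nonneg (mul_nonneg (by positivity) (le_max_right _ _)) (le_max_right _ _)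

lemma uAmt_le (hr : 0 < r) {s : ℝ} (hs0 : 0 ≤ s) (hs1 : s ≤ 1) {x : E} (hx : 0 ≤ x 0) :
    uAmt c r x s ≤ r / 4 := by
  have h1 : max (1 - dd c x / r) 0 ≤ 1 := by
    apply max_le _ zero_le_one
    have : 0 ≤ dd c x / r := div_nonneg (dd_nonneg c x) hr.le
    linarith
  have h2 : max (1 - 2 * x 0 / r) 0 ≤ 1 := by
    apply max_le _ zero_le_one
    have : 0 ≤ 2 * x 0 / r := by positivity
    linarith
  calc uAmt c r x s ≤ 1 * (r/4) * 1 * 1 := by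
        apply mul_le_mul (mul_le_mul (by nlinarith) h1 (le_max_right _ _) (by positivity))
          h2 (le_max_right _ _) (by positivity)
    _ = r / 4 := by ring

lemma P_apply_zero (x : E) (s : ℝ) : P c r x s 0 = x 0 + uAmt c r x s := by
  simp [P, e0_apply_zero]

lemma P_apply_ne (x : E) (s : ℝ) {i : Fin n} (h : i ≠ 0) : P c r x s i = x i := by
  simp [P, e0_apply_ne h]

lemma dd_P (x : E) (s : ℝ) : dd c (P c r x s) = dd c x := by
  unfold dd
  congr 1
  ext i
  rcases eq_or_ne i 0 with rfl | hi
  · simp only [P_apply_zero, e0_apply_zero, PiLp.sub_apply, PiLp.smul_apply, smul_eq_mul]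
    ring
  · simp only [P_apply_ne x s hi, PiLp.sub_apply, PiLp.smul_apply, smul_eq_mul,
      e0_apply_ne hi, mul_zero]

lemma uAmt_ne_zero {x : E} {s : ℝ} (h : uAmt c r x s ≠ 0) (hr : 0 < r) :
    dd c x < r ∧ x 0 < r / 2 ∧ s ≠ 0 := by
  unfold uAmt at h
  have h1 : max (1 - dd c x / r) 0 ≠ 0 := fun h' => h (by rw [h']; ring)
  have h2 : max (1 - 2 * x 0 / r) 0 ≠ 0 := fun h' => h (by rw [h']; ring)
  have hs : s ≠ 0 := fun h' => h (by rw [h']; ring)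
  have h1' : 0 < 1 - dd c x / r := by
    rcases lt_or_ge 0 (1 - dd c x / r) with h | h
    · exact h
    · exact absurd (max_eq_right h) h1
  have h2' : 0 < 1 - 2 * x 0 / r := by
    rcases lt_or_ge 0 (1 - 2 * x 0 / r) with h | h
    · exact h
    · exact absurd (max_eq_right h) h2
  refine ⟨?_, ?_, hs⟩
  · have hdr : dd c x / r < 1 := by linarith
    have := (div_lt_one hr).mp hdr
    linarith
  · have hdr : 2 * x 0 / r < 1 := by linarith
    have := (div_lt_one hr).mp hdr
    linarith

lemma P_eq_of_uAmt_zero {x : E} {s : ℝ} (h : uAmt c r x s = 0) : P c r x s = x := by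
  simp [P, h]

lemma abs_max_sub : ∀ a b : ℝ, |max a 0 - max b 0| ≤ |a - b| := by
  intro a b
  have := abs_max_sub_max_le_abs a b 0
  exact this

lemma P_inj (hr : 0 < r) {s : ℝ} (hs0 : 0 ≤ s) (hs1 : s ≤ 1) {x y : E}
    (hx : 0 ≤ x 0) (hy : 0 ≤ y 0) (h : P c r x s = P c r y s) : x = y := by
  have hcoord : ∀ i : Fin n, i ≠ 0 → x i = y i := by
    intro i hi
    have := congrFun (congrArg WithLp.ofLp h) i
    rwa [P_apply_ne x s hi, P_apply_ne y s hi] at this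
  have hdd : dd c x = dd c y := by
    unfold dd
    congr 1
    ext i
    rcases eq_or_ne i 0 with rfl | hi
    · simp [e0_apply_zero]
    · simp [e0_apply_ne hi, hcoord i hi]
  have h0 := congrFun (congrArg WithLp.ofLp h) 0
  rw [P_apply_zero, P_apply_zero] at h0
  have ha0 : 0 ≤ max (1 - dd c x / r) 0 := le_max_right _ _
  have ha1 : max (1 - dd c x / r) 0 ≤ 1 := by
    apply max_le _ zero_le_one
    have : 0 ≤ dd c x / r := div_nonneg (dd_nonneg c x) hr.le
    linarith
  have hx0 : uAmt c r x s = (s * (r/4) * max (1 - dd c x / r) 0) * max (1 - 2 * x 0 / r) 0 := by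
    unfold uAmt; ring
  have hy0 : uAmt c r y s = (s * (r/4) * max (1 - dd c x / r) 0) * max (1 - 2 * y 0 / r) 0 := by
    unfold uAmt; rw [← hdd]
  have hsa : s * max (1 - dd c x / r) 0 ≤ 1 := by nlinarith
  set κ : ℝ := s * (r/4) * max (1 - dd c x / r) 0 with hκ
  have hκ0 : 0 ≤ κ := by rw [hκ]; positivity
  have hκle : κ ≤ r / 4 := by rw [hκ]; nlinarith
  rw [hx0, hy0] at h0
  -- x 0 + κ * m x = y 0 + κ * m y
  have hmax : |max (1 - 2 * x 0 / r) 0 - max (1 - 2 * y 0 / r) 0| ≤ 2 / r * |x 0 - y 0| := by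
    calc |max (1 - 2 * x 0 / r) 0 - max (1 - 2 * y 0 / r) 0|
        ≤ |(1 - 2 * x 0 / r) - (1 - 2 * y 0 / r)| := abs_max_sub _ _
      _ = 2 / r * |x 0 - y 0| := by
          rw [show (1 - 2 * x 0 / r) - (1 - 2 * y 0 / r) = 2 / r * (y 0 - x 0) by field_simp; ring]
          rw [abs_mul, abs_of_nonneg (by positivity : (0:ℝ) ≤ 2 / r), abs_sub_comm]
  have key : |x 0 - y 0| ≤ 1 / 2 * |x 0 - y 0| := by
    have heq : x 0 - y 0 = κ * (max (1 - 2 * y 0 / r) 0 - max (1 - 2 * x 0 / r) 0) := by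
      linarith
    calc |x 0 - y 0| = κ * |max (1 - 2 * y 0 / r) 0 - max (1 - 2 * x 0 / r) 0| := by
          rw [heq, abs_mul, abs_of_nonneg hκ0]
      _ ≤ κ * (2 / r * |x 0 - y 0|) := by
          apply mul_le_mul_of_nonneg_left _ hκ0
          rw [abs_sub_comm]; exact hmax
      _ ≤ (r/4) * (2 / r * |x 0 - y 0|) := by
          apply mul_le_mul_of_nonneg_right hκle (by positivity)
      _ = 1 / 2 * |x 0 - y 0| := by field_simp; ring
  have : |x 0 - y 0| = 0 := by
    have := abs_nonneg (x 0 - y 0)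
    linarith
  have h00 : x 0 = y 0 := by
    have := abs_eq_zero.mp this
    linarith
  ext i
  rcases eq_or_ne i 0 with rfl | hi
  · exact h00
  · exact hcoord i hi

lemma uAmt_pos (hr : 0 < r) {s : ℝ} (hs : 0 < s) {x : E} (hx0 : x 0 = 0)
    (hnear : dd c x ≤ r / 2) : 0 < uAmt c r x s := by
  unfold uAmt
  have h1 : (0:ℝ) < max (1 - dd c x / r) 0 := by
    apply lt_max_of_lt_left
    have : dd c x / r ≤ 1 / 2 := by
      rw [div_le_div_iff₀ hr (by norm_num)]
      linarith
    linarith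
  have h2 : (0:ℝ) < max (1 - 2 * x 0 / r) 0 := by
    apply lt_max_of_lt_left
    rw [hx0]
    simp
  positivity

lemma cont_uAmt (hr : 0 < r) : Continuous fun p : E × ℝ => uAmt c r p.1 p.2 := by
  unfold uAmt dd
  fun_prop

lemma cont_P (hr : 0 < r) : Continuous fun p : E × ℝ => P c r p.1 p.2 := by
  unfold P
  exact continuous_fst.add ((cont_uAmt hr).smul continuous_const)

lemma dist_P_lt (hr : 0 < r) (hc0 : c 0 = 0) {x : E} {s : ℝ} (hs0 : 0 ≤ s) (hs1 : s ≤ 1)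
    (hx : 0 ≤ x 0) (h : uAmt c r x s ≠ 0) : dist (P c r x s) c < 2 * r := by
  obtain ⟨hd, hx0, -⟩ := uAmt_ne_zero h hr
  have hle := dist_le_dd_add c (P c r x s)
  rw [dd_P] at hle
  have h0 : (P c r x s - c) 0 = x 0 + uAmt c r x s := by
    simp [P_apply_zero, hc0]
  have hu1 : uAmt c r x s ≤ r / 4 := uAmt_le hr hs0 hs1 hx
  have hu0 : 0 ≤ uAmt c r x s := uAmt_nonneg hr hs0 x
  rw [h0] at hle
  rw [abs_of_nonneg (by linarith)] at hle
  linarith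

lemma dist_lt_of_uAmt_ne_zero (hr : 0 < r) (hc0 : c 0 = 0) {x : E} {s : ℝ}
    (hx : 0 ≤ x 0) (h : uAmt c r x s ≠ 0) : dist x c < 3 / 2 * r := by
  obtain ⟨hd, hx0, -⟩ := uAmt_ne_zero h hr
  have hle := dist_le_dd_add c x
  have h0 : (x - c) 0 = x 0 := by simp [hc0]
  rw [h0, abs_of_nonneg hx] at hle
  linarith

lemma P_zero_nonneg (hr : 0 < r) {s : ℝ} (hs : 0 ≤ s) {x : E} (hx : 0 ≤ x 0) :
    0 ≤ P c r x s 0 := by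
  rw [P_apply_zero]
  have := uAmt_nonneg (c := c) hr hs x
  linarith

lemma P_s_zero (x : E) : P c r x 0 = x := by
  apply P_eq_of_uAmt_zero
  simp [uAmt]

end Elevel






def ballHomeo (c : EuclideanSpace ℝ (Fin n)) (ρ : ℝ) (hρ : 0 < ρ) :
    (Metric.ball c ρ) ≃ₜ EuclideanSpace ℝ (Fin n) :=
  ((Homeomorph.setCongr (OpenPartialHomeomorph.univBall_target c hρ)).symm.trans
    (OpenPartialHomeomorph.univBall c ρ).toHomeomorphSourceTarget.symm).trans
    ((Homeomorph.setCongr (OpenPartialHomeomorph.univBall_source c ρ)).trans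
      (Homeomorph.Set.univ _))

variable {M : Type} [TopologicalSpace M]

lemma isOpen_mfdInterior : IsOpen (mfdInterior n M) := by
  refine isOpen_iff_forall_mem_open.mpr ?_
  rintro x ⟨U, hU, hxU, hne⟩
  exact ⟨U, fun y hy => ⟨U, hU, hy, hne⟩, hU, hxU⟩

/-- If a point has positive 0-th coordinate in some half-space chart, it is an
interior point. -/
lemma mem_interior_of_chart (φ : OpenPartialHomeomorph M (EuclideanHalfSpace n)) (x : M)
    (hx : x ∈ φ.source) (h0 : 0 < (φ x).1 0) : x ∈ mfdInterior n M := by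
  obtain ⟨V, hVopen, hVeq⟩ := isOpen_induced_iff.mp φ.open_target
  have hcV : (φ x).1 ∈ V := by
    have : φ x ∈ φ.target := φ.map_source hx
    rw [← hVeq] at this
    exact this
  obtain ⟨ε, hε, hball⟩ := Metric.isOpen_iff.mp hVopen _ hcV
  set c : EuclideanSpace ℝ (Fin n) := (φ x).1 with hc
  set ρ : ℝ := min ε (c 0) with hρdef
  have hρ : 0 < ρ := lt_min hε h0
  -- points of the ball are in the half-space and correspond to points of the target
  have hmem : ∀ z : EuclideanSpace ℝ (Fin n), z ∈ Metric.ball c ρ → 0 ≤ z 0 := by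
    intro z hz
    have h1 : |z 0 - c 0| ≤ ‖z - c‖ := by
      have := abs_apply_le_norm (z - c) 0
      simpa using this
    have h2 : ‖z - c‖ < ρ := by rwa [Metric.mem_ball, dist_eq_norm] at hz
    have h3 : ρ ≤ c 0 := min_le_right _ _
    have h4 : c 0 - z 0 ≤ |z 0 - c 0| := by
      rw [abs_sub_comm]; exact le_abs_self _
    linarith
  have hballV : Metric.ball c ρ ⊆ V := fun z hz =>
    hball (Metric.ball_subset_ball (min_le_left _ _) hz)
  set U : Set M := φ.source ∩ φ ⁻¹' ((fun y : (EuclideanHalfSpace n) => y.1) ⁻¹' Metric.ball c ρ) with hU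
  have hUopen : IsOpen U :=
    φ.isOpen_inter_preimage ((Metric.isOpen_ball).preimage continuous_subtype_val)
  have hxU : x ∈ U := ⟨hx, by simp [Metric.mem_ball, hc, hρ]⟩
  -- the homeomorphism U ≃ₜ ball c ρ
  have hmemT : ∀ z : EuclideanSpace ℝ (Fin n), z ∈ Metric.ball c ρ →
      ∀ hz0 : 0 ≤ z 0, (⟨z, hz0⟩ : (EuclideanHalfSpace n)) ∈ φ.target := by
    intro z hz hz0
    have : (⟨z, hz0⟩ : (EuclideanHalfSpace n)) ∈ (fun y : (EuclideanHalfSpace n) => y.1) ⁻¹' V := hballV hz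
    rwa [hVeq] at this
  refine ⟨U, hUopen, hxU, ⟨?_⟩⟩
  have e1 : U ≃ₜ Metric.ball c ρ := by
    refine
      { toFun := fun u => ⟨(φ u.1).1, u.2.2⟩
        invFun := fun b => ⟨φ.symm ⟨b.1, hmem b.1 b.2⟩,
          φ.map_target (hmemT b.1 b.2 (hmem b.1 b.2)), ?_⟩
        left_inv := ?_
        right_inv := ?_
        continuous_toFun := ?_
        continuous_invFun := ?_ }
    · show (φ (φ.symm ⟨b.1, hmem b.1 b.2⟩)).1 ∈ Metric.ball c ρ
      rw [φ.right_inv (hmemT b.1 b.2 (hmem b.1 b.2))]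
      exact b.2
    · rintro ⟨u, hu1, hu2⟩
      exact Subtype.ext (φ.left_inv hu1)
    · rintro ⟨b, hb⟩
      apply Subtype.ext
      show (φ (φ.symm ⟨b, hmem b hb⟩)).1 = b
      rw [φ.right_inv (hmemT b hb (hmem b hb))]
    · apply Continuous.subtype_mk
      exact continuous_subtype_val.comp
        ((φ.continuousOn.mono inter_subset_left).restrict)
    · apply Continuous.subtype_mk
      apply φ.continuousOn_symm.comp_continuous
        (Continuous.subtype_mk continuous_subtype_val _)
      exact fun b => hmemT b.1 b.2 (hmem b.1 b.2)
  exact e1.trans (ballHomeo c ρ hρ)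

/-- A non-interior point in the source of a half-space chart has 0-th
coordinate zero. -/
lemma coord_eq_zero_of_not_interior (φ : OpenPartialHomeomorph M (EuclideanHalfSpace n)) (x : M)
    (hx : x ∈ φ.source) (hni : x ∉ mfdInterior n M) : (φ x).1 0 = 0 := by
  rcases eq_or_lt_of_le (φ x).2 with h | h
  · exact h.symm
  · exact absurd (mem_interior_of_chart φ x hx h) hni


/-! ### The chart-level push -/

/-- Clamp to `[0,1]`. -/
def cl (s : ℝ) : ℝ := max (min s 1) 0

lemma cl_nonneg (s : ℝ) : 0 ≤ cl s := le_max_right _ _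
lemma cl_le_one (s : ℝ) : cl s ≤ 1 := max_le (min_le_right _ _) zero_le_one
lemma cl_eq {s : ℝ} (h0 : 0 ≤ s) (h1 : s ≤ 1) : cl s = s := by
  unfold cl; rw [min_eq_left h1, max_eq_left h0]
lemma cl_zero : cl 0 = 0 := by norm_num [cl]
lemma cl_one : cl 1 = 1 := by norm_num [cl]
lemma cl_continuous : Continuous cl := by unfold cl; fun_prop

variable [T2Space M]
variable (φ : OpenPartialHomeomorph M (EuclideanHalfSpace n)) (cH : (EuclideanHalfSpace n)) (r : ℝ)

/-- Membership of the pushed point in the half-space. -/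
lemma P_mem_halfspace (hr : 0 < r) (x : M) (s : ℝ) :
    0 ≤ P cH.1 r (φ x).1 (cl s) 0 :=
  P_zero_nonneg hr (cl_nonneg s) (φ x).2

/-- The push of a chart: moves points of the chart inward, identity elsewhere. -/
def chartPush (hr : 0 < r) (x : M) (s : ℝ) : M :=
  if h : x ∈ φ.source then φ.symm ⟨P cH.1 r (φ x).1 (cl s), P_mem_halfspace φ cH r hr x s⟩
  else x

variable {φ cH r}

lemma P_mem_target (hr : 0 < r) (hc0 : cH.1 0 = 0)
    (hball : ∀ y : EuclideanHalfSpace n, dist y.1 cH.1 < 2 * r → y ∈ φ.target) (x : M) (hx : x ∈ φ.source) (s : ℝ) :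
    (⟨P cH.1 r (φ x).1 (cl s), P_mem_halfspace φ cH r hr x s⟩ : (EuclideanHalfSpace n)) ∈ φ.target := by
  by_cases hu : uAmt cH.1 r (φ x).1 (cl s) = 0
  · have hP : P cH.1 r (φ x).1 (cl s) = (φ x).1 := P_eq_of_uAmt_zero hu
    have : (⟨P cH.1 r (φ x).1 (cl s), P_mem_halfspace φ cH r hr x s⟩ : (EuclideanHalfSpace n)) = φ x :=
      Subtype.ext hP
    rw [this]
    exact φ.map_source hx
  · apply hball
    exact dist_P_lt hr hc0 (cl_nonneg s) (cl_le_one s) (φ x).2 hu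

lemma chartPush_mem_source (hr : 0 < r) (hc0 : cH.1 0 = 0)
    (hball : ∀ y : EuclideanHalfSpace n, dist y.1 cH.1 < 2 * r → y ∈ φ.target) (x : M) (hx : x ∈ φ.source) (s : ℝ) :
    chartPush φ cH r hr x s ∈ φ.source := by
  rw [chartPush, dif_pos hx]
  exact φ.map_target (P_mem_target hr hc0 hball x hx s)

lemma chartPush_chart (hr : 0 < r) (hc0 : cH.1 0 = 0)
    (hball : ∀ y : EuclideanHalfSpace n, dist y.1 cH.1 < 2 * r → y ∈ φ.target) (x : M) (hx : x ∈ φ.source) (s : ℝ) :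
    (φ (chartPush φ cH r hr x s)).1 = P cH.1 r (φ x).1 (cl s) := by
  rw [chartPush, dif_pos hx, φ.right_inv (P_mem_target hr hc0 hball x hx s)]

lemma chartPush_of_not_source (hr : 0 < r) (x : M) (hx : x ∉ φ.source) (s : ℝ) :
    chartPush φ cH r hr x s = x := by
  rw [chartPush, dif_neg hx]

lemma chartPush_of_uAmt_zero (hr : 0 < r) (x : M) (hx : x ∈ φ.source) (s : ℝ)
    (hu : uAmt cH.1 r (φ x).1 (cl s) = 0) : chartPush φ cH r hr x s = x := by
  rw [chartPush, dif_pos hx]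
  have : (⟨P cH.1 r (φ x).1 (cl s), P_mem_halfspace φ cH r hr x s⟩ : (EuclideanHalfSpace n)) = φ x :=
    Subtype.ext (P_eq_of_uAmt_zero hu)
  rw [this]
  exact φ.left_inv hx

lemma chartPush_zero (hr : 0 < r) (x : M) : chartPush φ cH r hr x 0 = x := by
  by_cases hx : x ∈ φ.source
  · exact chartPush_of_uAmt_zero hr x hx 0 (by rw [cl_zero]; simp [uAmt])
  · exact chartPush_of_not_source hr x hx 0

lemma chartPush_fix_or_interior (hr : 0 < r) (hc0 : cH.1 0 = 0)
    (hball : ∀ y : EuclideanHalfSpace n, dist y.1 cH.1 < 2 * r → y ∈ φ.target) (x : M) (s : ℝ) :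
    chartPush φ cH r hr x s = x ∨ chartPush φ cH r hr x s ∈ mfdInterior n M := by
  by_cases hx : x ∈ φ.source
  · by_cases hu : uAmt cH.1 r (φ x).1 (cl s) = 0
    · exact Or.inl (chartPush_of_uAmt_zero hr x hx s hu)
    · refine Or.inr ?_
      apply mem_interior_of_chart φ _ (chartPush_mem_source hr hc0 hball x hx s)
      rw [chartPush_chart hr hc0 hball x hx s, P_apply_zero]
      have h1 : 0 ≤ (φ x).1 0 := (φ x).2
      have h2 : 0 < uAmt cH.1 r (φ x).1 (cl s) :=
        lt_of_le_of_ne (uAmt_nonneg hr (cl_nonneg s) _) (Ne.symm hu)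
      linarith
  · exact Or.inl (chartPush_of_not_source hr x hx s)

lemma chartPush_interior (hr : 0 < r) (hc0 : cH.1 0 = 0)
    (hball : ∀ y : EuclideanHalfSpace n, dist y.1 cH.1 < 2 * r → y ∈ φ.target) (x : M) (s : ℝ) (hx : x ∈ mfdInterior n M) :
    chartPush φ cH r hr x s ∈ mfdInterior n M := by
  rcases chartPush_fix_or_interior hr hc0 hball x s with h | h
  · rwa [h]
  · exact h

lemma chartPush_trigger (hr : 0 < r) (hc0 : cH.1 0 = 0)
    (hball : ∀ y : EuclideanHalfSpace n, dist y.1 cH.1 < 2 * r → y ∈ φ.target) (x : M) (hx : x ∈ φ.source) (hni : x ∉ mfdInterior n M)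
    (hnear : dist (φ x).1 cH.1 < r / 2) : chartPush φ cH r hr x 1 ∈ mfdInterior n M := by
  have h0 : (φ x).1 0 = 0 := coord_eq_zero_of_not_interior φ x hx hni
  have hdd : dd cH.1 (φ x).1 ≤ r / 2 := le_trans (dd_le_dist _ _) hnear.le
  have hu : 0 < uAmt cH.1 r (φ x).1 (cl 1) := by
    rw [cl_one]
    exact uAmt_pos hr one_pos h0 hdd
  rcases chartPush_fix_or_interior hr hc0 hball x 1 with h | h
  · exfalso
    have hc := chartPush_chart hr hc0 hball x hx 1
    rw [h] at hc
    have h00 := congrFun (congrArg WithLp.ofLp hc) 0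
    rw [P_apply_zero] at h00
    linarith [hu]
  · exact h

lemma chartPush_inj (hr : 0 < r) (hc0 : cH.1 0 = 0)
    (hball : ∀ y : EuclideanHalfSpace n, dist y.1 cH.1 < 2 * r → y ∈ φ.target) (s : ℝ) : Function.Injective (fun x => chartPush φ cH r hr x s) := by
  intro x y h
  simp only at h
  by_cases hx : x ∈ φ.source <;> by_cases hy : y ∈ φ.source
  · rw [chartPush, dif_pos hx, chartPush, dif_pos hy] at h
    have hPx := P_mem_target hr hc0 hball x hx s
    have hPy := P_mem_target hr hc0 hball y hy s
    have h2 : (⟨P cH.1 r (φ x).1 (cl s), P_mem_halfspace φ cH r hr x s⟩ : (EuclideanHalfSpace n))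
        = ⟨P cH.1 r (φ y).1 (cl s), P_mem_halfspace φ cH r hr y s⟩ := by
      apply φ.symm.injOn _ _ h
      · exact hPx
      · exact hPy
    have h3 : P cH.1 r (φ x).1 (cl s) = P cH.1 r (φ y).1 (cl s) := congrArg Subtype.val h2
    have h4 : (φ x).1 = (φ y).1 :=
      P_inj hr (cl_nonneg s) (cl_le_one s) (φ x).2 (φ y).2 h3
    exact φ.injOn hx hy (Subtype.ext h4)
  · exfalso
    rw [chartPush, dif_pos hx, chartPush, dif_neg hy] at h
    have : chartPush φ cH r hr x s ∈ φ.source := chartPush_mem_source hr hc0 hball x hx s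
    rw [chartPush, dif_pos hx, h] at this
    exact hy this
  · exfalso
    rw [chartPush, dif_neg hx, chartPush, dif_pos hy] at h
    have : chartPush φ cH r hr y s ∈ φ.source := chartPush_mem_source hr hc0 hball y hy s
    rw [chartPush, dif_pos hy, ← h] at this
    exact hx this
  · rw [chartPush, dif_neg hx, chartPush, dif_neg hy] at h
    exact h

lemma chartPush_continuous (hr : 0 < r) (hc0 : cH.1 0 = 0)
    (hball : ∀ y : EuclideanHalfSpace n, dist y.1 cH.1 < 2 * r → y ∈ φ.target) :
    Continuous fun p : M × ℝ => chartPush φ cH r hr p.1 p.2 := by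
  rw [continuous_iff_continuousAt]
  rintro ⟨x, s⟩
  by_cases hx : x ∈ φ.source
  · -- near a point of the source, the map is given by the chart formula
    have hw : ContinuousOn (fun p : M × ℝ =>
        (⟨P cH.1 r (φ p.1).1 (cl p.2), P_mem_halfspace φ cH r hr p.1 p.2⟩ :
          EuclideanHalfSpace n)) (φ.source ×ˢ (univ : Set ℝ)) := by
      rw [Topology.IsEmbedding.subtypeVal.isInducing.continuousOn_iff]
      have h1 : ContinuousOn (fun p : M × ℝ => (φ p.1).1) (φ.source ×ˢ (univ : Set ℝ)) := by
        apply continuous_subtype_val.comp_continuousOn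
        exact φ.continuousOn.comp continuousOn_fst fun p hp => hp.1
      have h2 : ContinuousOn (fun p : M × ℝ => cl p.2) (φ.source ×ˢ (univ : Set ℝ)) :=
        (cl_continuous.comp continuous_snd).continuousOn
      exact (cont_P hr).comp_continuousOn (h1.prodMk h2)
    have hg : ContinuousOn (fun p : M × ℝ =>
        φ.symm ⟨P cH.1 r (φ p.1).1 (cl p.2), P_mem_halfspace φ cH r hr p.1 p.2⟩)
        (φ.source ×ˢ (univ : Set ℝ)) := by
      apply φ.continuousOn_symm.comp hw
      exact fun p hp => P_mem_target hr hc0 hball p.1 hp.1 p.2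
    have hmem : (φ.source ×ˢ (univ : Set ℝ)) ∈ nhds (x, s) :=
      prod_mem_nhds (φ.open_source.mem_nhds hx) Filter.univ_mem
    have hca := (hg.continuousAt hmem)
    apply hca.congr
    apply Filter.eventuallyEq_of_mem hmem
    rintro ⟨y, t⟩ hy
    show φ.symm _ = chartPush φ cH r hr y t
    rw [chartPush, dif_pos hy.1]
  · -- away from the compact support, the map is the identity
    have hclosedH : IsClosed {z : EuclideanSpace ℝ (Fin n) | 0 ≤ z 0} :=
      isClosed_le continuous_const (cont_apply 0)
    have hK0 : IsCompact (Metric.closedBall cH.1 (3/2*r) ∩ {z : EuclideanSpace ℝ (Fin n) | 0 ≤ z 0}) :=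
      (isCompact_closedBall _ _).inter_right hclosedH
    have hT : IsCompact ((fun y : EuclideanHalfSpace n => y.1) ⁻¹'
        (Metric.closedBall cH.1 (3/2*r) ∩ {z : EuclideanSpace ℝ (Fin n) | 0 ≤ z 0})) := by
      apply Topology.IsEmbedding.subtypeVal.isInducing.isCompact_preimage' hK0
      exact fun z hz => ⟨⟨z, hz.2⟩, rfl⟩
    have hTt : ((fun y : EuclideanHalfSpace n => y.1) ⁻¹'
        (Metric.closedBall cH.1 (3/2*r) ∩ {z : EuclideanSpace ℝ (Fin n) | 0 ≤ z 0})) ⊆ φ.target := by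
      intro y hy
      apply hball
      have := hy.1
      rw [Metric.mem_closedBall] at this
      linarith
    set S : Set M := φ.symm '' ((fun y : EuclideanHalfSpace n => y.1) ⁻¹'
        (Metric.closedBall cH.1 (3/2*r) ∩ {z : EuclideanSpace ℝ (Fin n) | 0 ≤ z 0})) with hS
    have hScompact : IsCompact S := hT.image_of_continuousOn (φ.continuousOn_symm.mono hTt)
    have hSsource : S ⊆ φ.source := by
      rintro _ ⟨y, hy, rfl⟩
      exact φ.map_target (hTt hy)
    have hxS : x ∉ S := fun h => hx (hSsource h)
    have hmem : ((Sᶜ : Set M) ×ˢ (univ : Set ℝ)) ∈ nhds (x, s) :=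
      prod_mem_nhds (hScompact.isClosed.isOpen_compl.mem_nhds hxS) Filter.univ_mem
    have hid : ∀ q ∈ ((Sᶜ : Set M) ×ˢ (univ : Set ℝ)), chartPush φ cH r hr q.1 q.2 = q.1 := by
      rintro ⟨y, t⟩ ⟨hyS, -⟩
      by_cases hy : y ∈ φ.source
      · apply chartPush_of_uAmt_zero hr y hy t
        by_contra hu
        have hd := dist_lt_of_uAmt_ne_zero hr hc0 (φ y).2 hu
        exact hyS ⟨φ y, ⟨Metric.mem_closedBall.mpr hd.le, (φ y).2⟩, φ.left_inv hy⟩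
      · exact chartPush_of_not_source hr y hy t
    apply ContinuousAt.congr continuousAt_fst
    apply Filter.eventuallyEq_of_mem hmem
    exact fun q hq => (hid q hq).symm

/-! ### Composition of pushes -/

structure PushData (n : ℕ) [NeZero n] (M : Type) [TopologicalSpace M] where
  K : Set M
  Ψ : M → ℝ → M
  hcont : Continuous fun p : M × ℝ => Ψ p.1 p.2
  hzero : ∀ x, Ψ x 0 = x
  hinj : ∀ s, Function.Injective fun x => Ψ x s
  hfix : ∀ x s, Ψ x s = x ∨ Ψ x s ∈ mfdInterior n M
  htrig : ∀ x, x ∉ mfdInterior n M → x ∈ K → Ψ x 1 ∈ mfdInterior n M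

lemma pushData_interior (d : PushData n M) (x : M) (s : ℝ) (hx : x ∈ mfdInterior n M) :
    d.Ψ x s ∈ mfdInterior n M := by
  rcases d.hfix x s with h | h
  · rwa [h]
  · exact h

variable [T2Space M] [ChartedSpace (EuclideanHalfSpace n) M]

lemma exists_pushData (b : M) (hb : b ∉ mfdInterior n M) :
    ∃ d : PushData n M, b ∈ d.K ∧ IsOpen d.K := by
  set φ : OpenPartialHomeomorph M (EuclideanHalfSpace n) := chartAt (EuclideanHalfSpace n) b with hφ
  have hbsrc : b ∈ φ.source := mem_chart_source _ b
  set cH : EuclideanHalfSpace n := φ b with hcH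
  have hc0 : cH.1 0 = 0 := coord_eq_zero_of_not_interior φ b hbsrc hb
  obtain ⟨V, hVopen, hVeq⟩ := isOpen_induced_iff.mp φ.open_target
  have hcV : cH.1 ∈ V := by
    have h1 : φ b ∈ φ.target := φ.map_source hbsrc
    rw [← hVeq] at h1
    exact h1
  obtain ⟨ε, hε, hballV⟩ := Metric.isOpen_iff.mp hVopen _ hcV
  set r : ℝ := ε / 3 with hrdef
  have hr : 0 < r := by positivity
  have hball : ∀ y : EuclideanHalfSpace n, dist y.1 cH.1 < 2 * r → y ∈ φ.target := by
    intro y hy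
    have : y.1 ∈ Metric.ball cH.1 ε := by
      rw [Metric.mem_ball]
      rw [hrdef] at hy
      linarith
    have : y ∈ (fun z : EuclideanHalfSpace n => z.1) ⁻¹' V := hballV this
    rwa [hVeq] at this
  refine ⟨{ K := φ.source ∩ φ ⁻¹' ((fun y : EuclideanHalfSpace n => y.1) ⁻¹'
              Metric.ball cH.1 (r/2))
            Ψ := chartPush φ cH r hr
            hcont := chartPush_continuous hr hc0 hball
            hzero := chartPush_zero hr
            hinj := fun s => chartPush_inj hr hc0 hball s
            hfix := fun x s => chartPush_fix_or_interior hr hc0 hball x s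
            htrig := ?_ }, ?_, ?_⟩
  · intro x hni hxK
    exact chartPush_trigger hr hc0 hball x hxK.1 hni hxK.2
  · refine ⟨hbsrc, ?_⟩
    show (φ b).1 ∈ Metric.ball cH.1 (r/2)
    rw [Metric.mem_ball, hcH]
    simpa using by positivity
  · exact φ.isOpen_inter_preimage ((Metric.isOpen_ball).preimage continuous_subtype_val)

/-- Composite of a list of pushes. -/
def compPush : List (PushData n M) → M → ℝ → M
  | [], x, _ => x
  | d :: tl, x, s => compPush tl (d.Ψ x s) s

lemma compPush_cont (l : List (PushData n M)) :
    Continuous fun p : M × ℝ => compPush l p.1 p.2 := by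
  induction l with
  | nil => exact continuous_fst
  | cons d tl ih =>
    show Continuous fun p : M × ℝ => compPush tl (d.Ψ p.1 p.2) p.2
    exact ih.comp (d.hcont.prodMk continuous_snd)

lemma compPush_zero (l : List (PushData n M)) (x : M) : compPush l x 0 = x := by
  induction l generalizing x with
  | nil => rfl
  | cons d tl ih =>
    show compPush tl (d.Ψ x 0) 0 = x
    rw [d.hzero, ih]

lemma compPush_inj (l : List (PushData n M)) (s : ℝ) :
    Function.Injective fun x => compPush l x s := by
  induction l with
  | nil => exact fun x y h => h
  | cons d tl ih =>
    intro x y h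
    exact d.hinj s (ih h)

lemma compPush_interior (l : List (PushData n M)) (x : M) (s : ℝ)
    (hx : x ∈ mfdInterior n M) : compPush l x s ∈ mfdInterior n M := by
  induction l generalizing x with
  | nil => exact hx
  | cons d tl ih =>
    exact ih _ (pushData_interior d x s hx)

lemma compPush_cover (l : List (PushData n M)) (x : M) (hni : x ∉ mfdInterior n M)
    (hc : ∃ d ∈ l, x ∈ d.K) : compPush l x 1 ∈ mfdInterior n M := by
  induction l generalizing x with
  | nil => obtain ⟨d, hd, -⟩ := hc; exact absurd hd List.not_mem_nil
  | cons d tl ih =>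
    show compPush tl (d.Ψ x 1) 1 ∈ mfdInterior n M
    rcases d.hfix x 1 with h | h
    · rw [h]
      obtain ⟨d', hd', hK⟩ := hc
      rcases List.mem_cons.mp hd' with rfl | hd'tl
      · exfalso
        have := d'.htrig x hni hK
        rw [h] at this
        exact hni this
      · exact ih x hni ⟨d', hd'tl, hK⟩
    · exact compPush_interior tl _ 1 h

/-- The global inward push of a compact manifold with boundary. -/
lemma exists_globalPush [CompactSpace M] :
    ∃ Φ : M → ℝ → M,
      (Continuous fun p : M × ℝ => Φ p.1 p.2) ∧
      (∀ x, Φ x 0 = x) ∧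
      (∀ s, Function.Injective fun x => Φ x s) ∧
      (∀ x s, x ∈ mfdInterior n M → Φ x s ∈ mfdInterior n M) ∧
      (∀ x, Φ x 1 ∈ mfdInterior n M) := by
  have hBclosed : IsClosed ((mfdInterior n M)ᶜ : Set M) :=
    (isOpen_mfdInterior (n := n) (M := M)).isClosed_compl
  have hBcompact : IsCompact ((mfdInterior n M)ᶜ : Set M) := hBclosed.isCompact
  have hD : ∀ b ∈ ((mfdInterior n M)ᶜ : Set M), ∃ d : PushData n M, b ∈ d.K ∧ IsOpen d.K :=
    fun b hb => exists_pushData b hb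
  choose D hDK hDopen using hD
  obtain ⟨t, ht⟩ := hBcompact.elim_nhds_subcover' (fun b hb => (D b hb).K)
    (fun b hb => (hDopen b hb).mem_nhds (hDK b hb))
  set l : List (PushData n M) := t.toList.map (fun b => D b.1 b.2) with hl
  refine ⟨compPush l, compPush_cont l, compPush_zero l, compPush_inj l,
    fun x s hx => compPush_interior l x s hx, ?_⟩
  intro x
  by_cases hx : x ∈ mfdInterior n M
  · exact compPush_interior l x 1 hx
  · apply compPush_cover l x hx
    have := ht hx
    rw [mem_iUnion₂] at this
    obtain ⟨b, hb, hxb⟩ := this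
    exact ⟨D b.1 b.2, List.mem_map.mpr ⟨b, Finset.mem_toList.mpr hb, rfl⟩, hxb⟩

end ConfPush

open ConfPush in
/-- `F(M,k)` is `Σ_k`-equivariantly homotopy equivalent to `F(Int(M),k)`. -/
theorem stmt1 (n : ℕ) [NeZero n] (M : Type) [TopologicalSpace M] [T2Space M]
    [SecondCountableTopology M] [CompactSpace M] [ConnectedSpace M]
    [ChartedSpace (EuclideanHalfSpace n) M]
    (hbd : ((mfdInterior n M)ᶜ : Set M).Nonempty)
    (k : ℕ) (hk : 1 ≤ k) :
    ∃ (f : C(Conf (↥(mfdInterior n M)) k, Conf M k))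
      (g : C(Conf M k, Conf (↥(mfdInterior n M)) k))
      (H : C(Conf M k × unitInterval, Conf M k))
      (G : C(Conf (↥(mfdInterior n M)) k × unitInterval, Conf (↥(mfdInterior n M)) k)),
      (∀ (σ : Equiv.Perm (Fin k)) x, f (permAct σ x) = permAct σ (f x)) ∧
      (∀ (σ : Equiv.Perm (Fin k)) x, g (permAct σ x) = permAct σ (g x)) ∧
      (∀ x, H (x, 0) = f (g x)) ∧
      (∀ x, H (x, 1) = x) ∧
      (∀ (t : unitInterval) (σ : Equiv.Perm (Fin k)) x,
        H (permAct σ x, t) = permAct σ (H (x, t))) ∧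
      (∀ x, G (x, 0) = g (f x)) ∧
      (∀ x, G (x, 1) = x) ∧
      (∀ (t : unitInterval) (σ : Equiv.Perm (Fin k)) x,
        G (permAct σ x, t) = permAct σ (G (x, t))) := by
  classical
  obtain ⟨Φ, hcont, hzero, hinj, hpres, hone⟩ := exists_globalPush (n := n) (M := M)
  -- the inclusion
  refine ⟨⟨fun x => ⟨fun i => (x.1 i).1, ?_⟩, ?_⟩,
          ⟨fun x => ⟨fun i => ⟨Φ (x.1 i) 1, hone _⟩, ?_⟩, ?_⟩,
          ⟨fun p => ⟨fun i => Φ (p.1.1 i) ((unitInterval.symm p.2 : unitInterval) : ℝ), ?_⟩, ?_⟩,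
          ⟨fun p => ⟨fun i => ⟨Φ ((p.1.1 i) : M) ((unitInterval.symm p.2 : unitInterval) : ℝ),
            hpres _ _ (p.1.1 i).2⟩, ?_⟩, ?_⟩, ?_, ?_, ?_, ?_, ?_, ?_, ?_, ?_⟩
  · -- injectivity of the inclusion
    intro i j h
    exact x.2 (Subtype.ext h)
  · -- continuity of f
    apply Continuous.subtype_mk
    exact continuous_pi fun i =>
      continuous_subtype_val.comp ((continuous_apply i).comp continuous_subtype_val)
  · -- injectivity of g's values
    intro i j h
    exact x.2 (hinj 1 (congrArg Subtype.val h))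
  · -- continuity of g
    apply Continuous.subtype_mk
    refine continuous_pi fun i => Continuous.subtype_mk ?_ _
    show Continuous ((fun q : M × ℝ => Φ q.1 q.2) ∘ (fun x : Conf M k => (x.1 i, (1:ℝ))))
    exact hcont.comp (((continuous_apply i).comp continuous_subtype_val).prodMk
      continuous_const)
  · -- injectivity of H's values
    intro i j h
    exact p.1.2 (hinj ((unitInterval.symm p.2 : unitInterval) : ℝ) h)
  · -- continuity of H
    apply Continuous.subtype_mk
    refine continuous_pi fun i => ?_
    show Continuous ((fun q : M × ℝ => Φ q.1 q.2) ∘ (fun p : Conf M k × unitInterval =>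
      (p.1.1 i, ((unitInterval.symm p.2 : unitInterval) : ℝ))))
    exact hcont.comp ((((continuous_apply i).comp
      (continuous_subtype_val.comp continuous_fst))).prodMk
      (continuous_subtype_val.comp (unitInterval.continuous_symm.comp continuous_snd)))
  · -- injectivity of G's values
    intro i j h
    have := hinj ((unitInterval.symm p.2 : unitInterval) : ℝ) (congrArg Subtype.val h)
    exact p.1.2 (Subtype.ext this)
  · -- continuity of G
    apply Continuous.subtype_mk
    refine continuous_pi fun i => Continuous.subtype_mk ?_ _
    show Continuous ((fun q : M × ℝ => Φ q.1 q.2) ∘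
      (fun p : Conf (↥(mfdInterior n M)) k × unitInterval =>
        (((p.1.1 i) : M), ((unitInterval.symm p.2 : unitInterval) : ℝ))))
    exact hcont.comp (((continuous_subtype_val.comp ((continuous_apply i).comp
      (continuous_subtype_val.comp continuous_fst)))).prodMk
      (continuous_subtype_val.comp (unitInterval.continuous_symm.comp continuous_snd)))
  · -- equivariance of f
    intro σ x
    rfl
  · -- equivariance of g
    intro σ x
    rfl
  · -- H at 0
    intro x
    apply Subtype.ext
    funext i
    show Φ (x.1 i) ((unitInterval.symm 0 : unitInterval) : ℝ) = Φ (x.1 i) 1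
    rw [unitInterval.symm_zero]
    norm_num
  · -- H at 1
    intro x
    apply Subtype.ext
    funext i
    show Φ (x.1 i) ((unitInterval.symm 1 : unitInterval) : ℝ) = x.1 i
    rw [unitInterval.symm_one]
    simpa using hzero (x.1 i)
  · -- equivariance of H
    intro t σ x
    rfl
  · -- G at 0
    intro x
    apply Subtype.ext
    funext i
    apply Subtype.ext
    show Φ ((x.1 i) : M) ((unitInterval.symm 0 : unitInterval) : ℝ) = Φ ((x.1 i) : M) 1
    rw [unitInterval.symm_zero]
    norm_num
  · -- G at 1
    intro x
    apply Subtype.ext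
    funext i
    apply Subtype.ext
    show Φ ((x.1 i) : M) ((unitInterval.symm 1 : unitInterval) : ℝ) = ((x.1 i) : M)
    rw [unitInterval.symm_one]
    simpa using hzero ((x.1 i) : M)
  · -- equivariance of G
    intro t σ x
    rfl
end
end

section
/- Let M be a nonempty connected compact topological n-dimensional manifold with nonempty boundary, let Int(M) = M − ∂M, and let Q_m = {q_1,…,q_m} be a finite set of m distinct points contained in Int(M). Then for every integer k ≥ 1, the inclusion map F(Int(M) − Q_m, k) → F(M − Q_m, k) is a homotopy equivalence. -/
open scoped Topology

/-- Inclusion `F(S,k) → F(T,k)` of configuration spaces induced by an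
inclusion of subspaces `S ⊆ T ⊆ X`. -/
def confInclOf {X : Type*} [TopologicalSpace X] {S T : Set X} (h : S ⊆ T) (k : ℕ) :
    C(Conf (↥S) k, Conf (↥T) k) where
  toFun f := ⟨fun i => ⟨(f.1 i : X), h (f.1 i).2⟩,
    fun i j hij => f.2 (Subtype.ext (congrArg (fun a : ↥T => (a : X)) hij))⟩
  continuous_toFun := by
    apply Continuous.subtype_mk
    exact continuous_pi fun i => Continuous.subtype_mk
      (continuous_subtype_val.comp ((continuous_apply i).comp continuous_subtype_val)) _

set_option maxHeartbeats 1000000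

section auxiliaries

open Set Metric

/-- If the big space `T` admits an isotopy (through injective self-maps) pushing it
into the subspace `S` and preserving `S`, then the induced inclusion of ordered
configuration spaces is a homotopy equivalence. -/
lemma conf_homotopyEquiv_of_isotopy {X : Type*} [TopologicalSpace X] {S T : Set X}
    (h : S ⊆ T) (k : ℕ)
    (H : C(unitInterval × ↥T, ↥T))
    (h0 : ∀ x, H (0, x) = x)
    (hinj : ∀ t, Function.Injective fun x => H (t, x))
    (hS : ∀ t (x : ↥T), (x : X) ∈ S → ((H (t, x) : ↥T) : X) ∈ S)
    (h1 : ∀ x : ↥T, ((H (1, x) : ↥T) : X) ∈ S) :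
    IsHomotopyEquiv (confInclOf h k) := by
  classical
  set σ := unitInterval.symm
  -- the homotopy inverse
  refine ⟨⟨fun f => ⟨fun i => ⟨(H (1, f.1 i) : X), h1 _⟩, ?_⟩, ?_⟩, ?_, ?_⟩
  · intro i j hij
    exact f.2 (hinj 1 (Subtype.ext (congrArg (fun a : ↥S => (a : X)) hij)))
  · apply Continuous.subtype_mk
    refine continuous_pi fun i => Continuous.subtype_mk ?_ _
    exact continuous_subtype_val.comp (H.continuous.comp
      (continuous_const.prodMk ((continuous_apply i).comp continuous_subtype_val)))
  · -- g ∘ ι ≃ id on Conf S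
    refine ⟨⟨⟨fun p => ⟨fun i => ⟨(H (σ p.1, ⟨((p.2.1 i : ↥S) : X), h (p.2.1 i).2⟩) : X),
        hS _ _ (p.2.1 i).2⟩, ?_⟩, ?_⟩, ?_, ?_⟩⟩
    · intro i j hij
      have := hinj (σ p.1) (Subtype.ext (congrArg (fun a : ↥S => (a : X)) hij))
      exact p.2.2 (Subtype.ext (congrArg (fun a : ↥T => (a : X)) this))
    · apply Continuous.subtype_mk
      refine continuous_pi fun i => Continuous.subtype_mk ?_ _
      refine continuous_subtype_val.comp (H.continuous.comp (Continuous.prodMk ?_ ?_))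
      · exact unitInterval.continuous_symm.comp continuous_fst
      · exact Continuous.subtype_mk (continuous_subtype_val.comp
          ((continuous_apply i).comp (continuous_subtype_val.comp continuous_snd))) _
    · intro f
      refine Subtype.ext (funext fun i => Subtype.ext ?_)
      simp only [σ, unitInterval.symm_zero]
      rfl
    · intro f
      refine Subtype.ext (funext fun i => Subtype.ext ?_)
      simp only [σ, unitInterval.symm_one]
      simp [h0]
  · -- ι ∘ g ≃ id on Conf T
    refine ⟨⟨⟨fun p => ⟨fun i => H (σ p.1, p.2.1 i), ?_⟩, ?_⟩, ?_, ?_⟩⟩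
    · intro i j hij
      exact p.2.2 (hinj (σ p.1) hij)
    · apply Continuous.subtype_mk
      refine continuous_pi fun i => H.continuous.comp (Continuous.prodMk ?_ ?_)
      · exact unitInterval.continuous_symm.comp continuous_fst
      · exact (continuous_apply i).comp (continuous_subtype_val.comp continuous_snd)
    · intro f
      refine Subtype.ext (funext fun i => Subtype.ext ?_)
      simp only [σ, unitInterval.symm_zero]
      rfl
    · intro f
      refine Subtype.ext (funext fun i => ?_)
      simp only [σ, unitInterval.symm_one]
      exact h0 _

section chartsA
variable {n : ℕ} [NeZero n] {M : Type} [TopologicalSpace M]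

variable {n : ℕ} [NeZero n] {M : Type} [TopologicalSpace M]

omit [NeZero n] in
lemma isOpen_mfdInterior : IsOpen (mfdInterior n M) := by
  rw [isOpen_iff_forall_mem_open]
  rintro x ⟨U, hU, hxU, hne⟩
  exact ⟨U, fun y hy => ⟨U, hU, hy, hne⟩, hU, hxU⟩

lemma halfSpace_chart_homeo (φ : OpenPartialHomeomorph M (EuclideanHalfSpace n))
    (B'' : Set (EuclideanSpace ℝ (Fin n)))
    (hpos' : ∀ z ∈ B'', 0 ≤ z 0)
    (hB'target : Subtype.val ⁻¹' B'' ⊆ φ.target) :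
    Nonempty ((↥(φ.source ∩ φ ⁻¹' (Subtype.val ⁻¹' B''))) ≃ₜ ↥B'') := by
  constructor
  refine
    { toFun := fun u => ⟨(φ u.1).1, u.2.2⟩
      invFun := fun z => ⟨φ.symm ⟨z.1, hpos' z.1 z.2⟩, ?_, ?_⟩
      left_inv := ?_
      right_inv := ?_
      continuous_toFun := ?_
      continuous_invFun := ?_ }
  · exact φ.map_target (hB'target z.2)
  · show φ (φ.symm _) ∈ Subtype.val ⁻¹' B''
    rw [φ.right_inv (hB'target z.2)]
    exact z.2
  · rintro ⟨u, hu⟩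
    have h1 : (⟨(φ u).1, hpos' _ hu.2⟩ : EuclideanHalfSpace n) = φ u := Subtype.ext rfl
    simp only [h1]
    exact Subtype.ext (φ.left_inv hu.1)
  · rintro ⟨z, hz⟩
    apply Subtype.ext
    show (φ (φ.symm _)).1 = z
    rw [φ.right_inv (hB'target hz)]
  · apply Continuous.subtype_mk
    exact continuous_subtype_val.comp
      (φ.continuousOn.comp_continuous continuous_subtype_val fun u => u.2.1)
  · apply Continuous.subtype_mk
    have hc : Continuous fun z : ↥B'' => (⟨z.1, hpos' z.1 z.2⟩ : EuclideanHalfSpace n) :=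
      Continuous.subtype_mk continuous_subtype_val _
    exact φ.continuousOn_symm.comp_continuous hc fun z => hB'target z.2

/-- A point whose chart coordinate has positive first component lies in `mfdInterior`. -/
lemma mem_mfdInterior_of_chart_pos (φ : OpenPartialHomeomorph M (EuclideanHalfSpace n))
    {x : M} (hx : x ∈ φ.source) (hpos : 0 < (φ x).1 0) : x ∈ mfdInterior n M := by
  classical
  obtain ⟨O, hO, hOeq⟩ := isOpen_induced_iff.1 φ.open_target
  have hz1O : (φ x).1 ∈ O := by
    have h1 : φ x ∈ φ.target := φ.map_source hx
    rw [← hOeq] at h1; exact h1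
  have hGpos : IsOpen {z : EuclideanSpace ℝ (Fin n) | 0 < z 0} :=
    isOpen_lt continuous_const (EuclideanSpace.proj (0 : Fin n)).continuous
  obtain ⟨ρ, hρ, hball⟩ := Metric.isOpen_iff.1 (hO.inter hGpos) _ ⟨hz1O, hpos⟩
  have hB'open : IsOpen (Subtype.val ⁻¹' (ball (φ x).1 ρ) : Set (EuclideanHalfSpace n)) :=
    isOpen_ball.preimage continuous_subtype_val
  have hB'target : (Subtype.val ⁻¹' (ball (φ x).1 ρ) : Set (EuclideanHalfSpace n)) ⊆ φ.target := by
    intro y hy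
    rw [← hOeq]
    exact (hball hy).1
  have hpos' : ∀ z ∈ ball (φ x).1 ρ, 0 ≤ z 0 := fun z hz => (hball hz).2.le
  have hUopen : IsOpen (φ.source ∩ φ ⁻¹' (Subtype.val ⁻¹' (ball (φ x).1 ρ))) :=
    φ.isOpen_inter_preimage hB'open
  have hxU : x ∈ φ.source ∩ φ ⁻¹' (Subtype.val ⁻¹' (ball (φ x).1 ρ)) := by
    refine ⟨hx, ?_⟩
    show (φ x).1 ∈ ball (φ x).1 ρ
    simp [hρ]
  obtain ⟨e1⟩ := halfSpace_chart_homeo φ (ball (φ x).1 ρ) hpos' hB'target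
  have e2 : EuclideanSpace ℝ (Fin n) ≃ₜ ↥(ball (φ x).1 ρ) := by
    refine (Homeomorph.Set.univ _).symm.trans ?_
    refine (Homeomorph.setCongr (OpenPartialHomeomorph.univBall_source (φ x).1 ρ).symm).trans ?_
    exact (OpenPartialHomeomorph.univBall (φ x).1 ρ).toHomeomorphSourceTarget.trans
      (Homeomorph.setCongr (OpenPartialHomeomorph.univBall_target (φ x).1 hρ))
  exact ⟨_, hUopen, hxU, ⟨e1.trans e2.symm⟩⟩


variable [T2Space M] [ChartedSpace (EuclideanHalfSpace n) M]


lemma exists_push (Qs : Set M) (hQs : Qs.Finite) (p : M) (hp : p ∉ Qs) :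
    ∃ (ψ : unitInterval → M → M) (W : Set M),
      IsOpen W ∧ p ∈ W ∧
      Continuous (fun q : unitInterval × M => ψ q.1 q.2) ∧
      (∀ x, ψ 0 x = x) ∧
      (∀ t, Function.Injective (ψ t)) ∧
      (∀ t, ∀ q ∈ Qs, ψ t q = q) ∧
      (∀ t x, ψ t x = x ∨ ψ t x ∈ mfdInterior n M) ∧
      (∀ x ∈ W, ψ 1 x ∈ mfdInterior n M) := by
  classical
  set φ := chartAt (EuclideanHalfSpace n) p with hφdef
  have hps : p ∈ φ.source := mem_chart_source _ p
  -- ε-neighborhood of the chart center inside the target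
  obtain ⟨ε, hε, hT⟩ : ∃ ε > 0, ∀ y : EuclideanHalfSpace n,
      dist y.1 (φ p).1 < ε → y ∈ φ.target := by
    obtain ⟨O, hO, hOeq⟩ := isOpen_induced_iff.1 φ.open_target
    have hmem : (φ p).1 ∈ O := by
      have h1 : φ p ∈ φ.target := φ.map_source hps
      rw [← hOeq] at h1; exact h1
    obtain ⟨ε, hε, hball⟩ := Metric.isOpen_iff.1 hO _ hmem
    exact ⟨ε, hε, fun y hy => by rw [← hOeq]; exact hball hy⟩
  -- positive distance to the punctures
  obtain ⟨m, hm, hQm⟩ : ∃ m > 0, ∀ q ∈ Qs, q ∈ φ.source → m ≤ dist (φ q).1 (φ p).1 := by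
    by_cases hne : (Qs ∩ φ.source).Nonempty
    · obtain ⟨q0, hq0, hmin⟩ := Set.exists_min_image (Qs ∩ φ.source)
        (fun q => dist (φ q).1 (φ p).1) (hQs.inter_of_left _) hne
      refine ⟨_, dist_pos.mpr fun hEq => ?_, fun q hq hqs => hmin q ⟨hq, hqs⟩⟩
      have h2 : φ q0 = φ p := Subtype.ext hEq
      have h3 : q0 = p := φ.injOn hq0.2 hps h2
      exact hp (h3 ▸ hq0.1)
    · exact ⟨1, one_pos, fun q hq hqs => ((hne ⟨q, hq, hqs⟩).elim)⟩
  -- the radius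
  obtain ⟨r, hr, hrε, hrm⟩ : ∃ r > 0, 5 * r ≤ ε ∧ 3 * r ≤ m :=
    ⟨min (ε / 5) (m / 3), by positivity, by
      have := min_le_left (ε / 5) (m / 3); linarith, by
      have := min_le_right (ε / 5) (m / 3); linarith⟩
  have hrT : ∀ y : EuclideanHalfSpace n, dist y.1 (φ p).1 ≤ 2 * r → y ∈ φ.target :=
    fun y hy => hT y (lt_of_le_of_lt hy (by linarith))
  have hrQ : ∀ q ∈ Qs, q ∈ φ.source → r < dist (φ q).1 (φ p).1 :=
    fun q hq hqs => lt_of_lt_of_le (by linarith) (hQm q hq hqs)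
  -- the bump function
  obtain ⟨δ, hδdef⟩ : ∃ δ : EuclideanSpace ℝ (Fin n) → ℝ,
      δ = fun z => max 0 (r - dist z (φ p).1) / 2 := ⟨_, rfl⟩
  have hδcont : Continuous δ := by
    rw [hδdef]
    exact (continuous_const.max (continuous_const.sub
      (continuous_id.dist continuous_const))).div_const 2
  have hδ0 : ∀ z, 0 ≤ δ z := by
    intro z; rw [hδdef]; exact div_nonneg (le_max_left _ _) two_pos.le
  have hδle : ∀ z, δ z ≤ r / 2 := by
    intro z; rw [hδdef]
    have h1 : max 0 (r - dist z (φ p).1) ≤ r :=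
      max_le hr.le (by have := dist_nonneg (x := z) (y := (φ p).1); linarith)
    simp only
    linarith
  have hδeq0 : ∀ z, r ≤ dist z (φ p).1 → δ z = 0 := by
    intro z hz; rw [hδdef]
    simp only
    rw [max_eq_left (by linarith)]
    norm_num
  have hδpos : ∀ z, dist z (φ p).1 < r → 0 < δ z := by
    intro z hz; rw [hδdef]
    simp only
    rw [max_eq_right (by linarith)]
    linarith
  have hδlip : ∀ z w, |δ z - δ w| ≤ dist z w / 2 := by
    intro z w; rw [hδdef]
    simp only
    rw [div_sub_div_same, abs_div, abs_two]
    have h1 : |max 0 (r - dist z (φ p).1) - max 0 (r - dist w (φ p).1)| ≤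
        |(r - dist z (φ p).1) - (r - dist w (φ p).1)| := by
      rw [max_comm 0 (r - dist z (φ p).1), max_comm 0 (r - dist w (φ p).1)]
      exact abs_max_sub_max_le_abs _ _ 0
    have h2 : |(r - dist z (φ p).1) - (r - dist w (φ p).1)| = |dist w (φ p).1 - dist z (φ p).1| := by
      ring_nf
    have h3 : |dist w (φ p).1 - dist z (φ p).1| ≤ dist w z := abs_dist_sub_le _ _ _
    rw [dist_comm z w]
    have := h1.trans (h2 ▸ h3)
    linarith [abs_nonneg (max 0 (r - dist z (φ p).1) - max 0 (r - dist w (φ p).1))]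
  -- the basis vector
  have he0 : ‖EuclideanSpace.single (0 : Fin n) (1 : ℝ)‖ = 1 := by
    rw [EuclideanSpace.norm_single]; norm_num
  have hnorm : ∀ c : ℝ, ‖c • EuclideanSpace.single (0 : Fin n) (1 : ℝ)‖ = |c| := by
    intro c; rw [norm_smul, he0, mul_one, Real.norm_eq_abs]
  have happ : ∀ (z : EuclideanSpace ℝ (Fin n)) (c : ℝ),
      (z + c • EuclideanSpace.single (0 : Fin n) (1 : ℝ)) 0 = z 0 + c := by
    intro z c
    simp [EuclideanSpace.single_apply]
  -- the model push
  obtain ⟨θ, hθdef⟩ : ∃ θ : unitInterval → EuclideanHalfSpace n → EuclideanHalfSpace n,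
      θ = fun t y => ⟨y.1 + ((t : ℝ) * δ y.1) • EuclideanSpace.single (0 : Fin n) (1 : ℝ), by
        rw [happ]
        exact add_nonneg y.2 (mul_nonneg t.2.1 (hδ0 _))⟩ := ⟨_, rfl⟩
  have hθval : ∀ t y, (θ t y).1 =
      y.1 + ((t : ℝ) * δ y.1) • EuclideanSpace.single (0 : Fin n) (1 : ℝ) := by
    intro t y; rw [hθdef]
  have hθcoord : ∀ t y, (θ t y).1 0 = y.1 0 + (t : ℝ) * δ y.1 := by
    intro t y; rw [hθval, happ]
  have hθeq_self : ∀ (t : unitInterval) y, (t : ℝ) * δ y.1 = 0 → θ t y = y := by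
    intro t y h
    apply Subtype.ext
    rw [hθval, h, zero_smul, add_zero]
  have hθ0 : ∀ y, θ 0 y = y := fun y => hθeq_self 0 y (by norm_num)
  have hθfix : ∀ t y, r ≤ dist y.1 (φ p).1 → θ t y = y :=
    fun t y h => hθeq_self t y (by rw [hδeq0 _ h, mul_zero])
  have hθdist : ∀ t y, dist (θ t y).1 y.1 = (t : ℝ) * δ y.1 := by
    intro t y
    rw [dist_eq_norm, hθval, add_sub_cancel_left, hnorm,
      abs_of_nonneg (mul_nonneg t.2.1 (hδ0 _))]
  have hθT : ∀ t y, y ∈ φ.target → θ t y ∈ φ.target := by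
    intro t y hy
    by_cases hc : (t : ℝ) * δ y.1 = 0
    · rw [hθeq_self t y hc]; exact hy
    · have hδp : 0 < δ y.1 := lt_of_le_of_ne (hδ0 _) fun h => hc (by rw [← h, mul_zero])
      have hd : dist y.1 (φ p).1 < r := by
        by_contra hcon
        exact absurd (hδeq0 _ (not_lt.1 hcon)) (ne_of_gt hδp)
      apply hrT
      calc dist (θ t y).1 (φ p).1 ≤ dist (θ t y).1 y.1 + dist y.1 (φ p).1 := dist_triangle _ _ _
        _ ≤ r / 2 + r := by
            rw [hθdist]
            have h1 : (t : ℝ) * δ y.1 ≤ δ y.1 := by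
              nlinarith [t.2.2, t.2.1, hδ0 y.1]
            have := hδle y.1
            linarith
        _ ≤ 2 * r := by linarith
  have hθinj : ∀ t, Function.Injective (θ t) := by
    intro t y w h
    have hval : y.1 + ((t : ℝ) * δ y.1) • EuclideanSpace.single (0 : Fin n) (1 : ℝ) =
        w.1 + ((t : ℝ) * δ w.1) • EuclideanSpace.single (0 : Fin n) (1 : ℝ) := by
      rw [← hθval, ← hθval, h]
    have hsub : y.1 - w.1 = (((t : ℝ) * δ w.1) - ((t : ℝ) * δ y.1)) •
        EuclideanSpace.single (0 : Fin n) (1 : ℝ) := by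
      rw [sub_smul, sub_eq_sub_iff_add_eq_add, hval, add_comm]
    have hdy : dist y.1 w.1 ≤ dist y.1 w.1 / 2 := by
      have h1 : dist y.1 w.1 = |(t : ℝ) * δ w.1 - (t : ℝ) * δ y.1| := by
        rw [dist_eq_norm, hsub, hnorm]
      have h2 : |(t : ℝ) * δ w.1 - (t : ℝ) * δ y.1| = (t : ℝ) * |δ w.1 - δ y.1| := by
        rw [← mul_sub, abs_mul, abs_of_nonneg t.2.1]
      have h3 : |δ w.1 - δ y.1| ≤ dist w.1 y.1 / 2 := hδlip _ _
      have h4 : (t : ℝ) * |δ w.1 - δ y.1| ≤ |δ w.1 - δ y.1| := by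
        nlinarith [t.2.2, t.2.1, abs_nonneg (δ w.1 - δ y.1)]
      calc dist y.1 w.1 = |(t : ℝ) * δ w.1 - (t : ℝ) * δ y.1| := h1
        _ = (t : ℝ) * |δ w.1 - δ y.1| := h2
        _ ≤ |δ w.1 - δ y.1| := h4
        _ ≤ dist w.1 y.1 / 2 := h3
        _ = dist y.1 w.1 / 2 := by rw [dist_comm]
    have h5 : dist y.1 w.1 = 0 := by linarith [dist_nonneg (x := y.1) (y := w.1)]
    exact Subtype.ext (by rwa [dist_eq_zero] at h5)
  have hθcont : Continuous fun q : unitInterval × EuclideanHalfSpace n => θ q.1 q.2 := by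
    rw [hθdef]
    apply Continuous.subtype_mk
    refine Continuous.add (continuous_subtype_val.comp continuous_snd) ?_
    refine Continuous.smul (f := fun q : unitInterval × EuclideanHalfSpace n => (q.1 : ℝ) * δ q.2.1) ?_ (continuous_const (y := EuclideanSpace.single (0 : Fin n) (1 : ℝ)))
    exact ((continuous_subtype_val.comp continuous_fst).mul
      (hδcont.comp (continuous_subtype_val.comp continuous_snd)))
  -- the compact support
  have hval_ind : Topology.IsInducing (Subtype.val :
      EuclideanHalfSpace n → EuclideanSpace ℝ (Fin n)) := ⟨rfl⟩
  have hSco : IsCompact (Subtype.val ⁻¹' (closedBall (φ p).1 (2 * r)) :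
      Set (EuclideanHalfSpace n)) := by
    refine hval_ind.isCompact_preimage ?_ (isCompact_closedBall _ _)
    rw [Subtype.range_coe_subtype]
    exact isClosed_le continuous_const (EuclideanSpace.proj (0 : Fin n)).continuous
  have hST : (Subtype.val ⁻¹' (closedBall (φ p).1 (2 * r)) : Set (EuclideanHalfSpace n)) ⊆
      φ.target := fun y hy => hrT y (by simpa [mem_closedBall] using hy)
  have hKco : IsCompact (φ.symm '' (Subtype.val ⁻¹' (closedBall (φ p).1 (2 * r)))) :=
    hSco.image_of_continuousOn (φ.continuousOn_symm.mono hST)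
  have hKcl : IsClosed (φ.symm '' (Subtype.val ⁻¹' (closedBall (φ p).1 (2 * r)))) :=
    hKco.isClosed
  have hKs : (φ.symm '' (Subtype.val ⁻¹' (closedBall (φ p).1 (2 * r)))) ⊆ φ.source := by
    rintro _ ⟨y, hy, rfl⟩; exact φ.map_target (hST hy)
  -- the push on M
  obtain ⟨ψ, hψdef⟩ : ∃ ψ : unitInterval → M → M,
      ψ = fun t x => if x ∈ φ.source then φ.symm (θ t (φ x)) else x := ⟨_, rfl⟩
  have hψin : ∀ t x, x ∈ φ.source → ψ t x = φ.symm (θ t (φ x)) := by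
    intro t x h; rw [hψdef]; exact if_pos h
  have hψout : ∀ t x, x ∉ φ.source → ψ t x = x := by
    intro t x h; rw [hψdef]; exact if_neg h
  have hψsrc : ∀ t x, x ∈ φ.source → ψ t x ∈ φ.source := by
    intro t x h; rw [hψin t x h]; exact φ.map_target (hθT _ _ (φ.map_source h))
  have hψfixK : ∀ t x, x ∉ (φ.symm '' (Subtype.val ⁻¹' (closedBall (φ p).1 (2 * r)))) →
      ψ t x = x := by
    intro t x hK
    by_cases hx : x ∈ φ.source
    · have hxS : (φ x).1 ∉ closedBall (φ p).1 (2 * r) := by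
        intro h
        exact hK ⟨φ x, h, φ.left_inv hx⟩
      rw [mem_closedBall, not_le] at hxS
      rw [hψin t x hx, hθfix t _ (by linarith), φ.left_inv hx]
    · exact hψout t x hx
  have hψ0 : ∀ x, ψ 0 x = x := by
    intro x
    by_cases hx : x ∈ φ.source
    · rw [hψin 0 x hx, hθ0, φ.left_inv hx]
    · exact hψout 0 x hx
  have hψinj : ∀ t, Function.Injective (ψ t) := by
    intro t x y h
    by_cases hx : x ∈ φ.source <;> by_cases hy : y ∈ φ.source
    · rw [hψin t x hx, hψin t y hy] at h
      have h1 : θ t (φ x) = θ t (φ y) :=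
        φ.symm.injOn (by rw [φ.symm_source]; exact hθT _ _ (φ.map_source hx))
          (by rw [φ.symm_source]; exact hθT _ _ (φ.map_source hy)) h
      exact φ.injOn hx hy (hθinj t h1)
    · have h2 := hψsrc t x hx
      rw [h, hψout t y hy] at h2
      exact absurd h2 hy
    · have h2 := hψsrc t y hy
      rw [← h, hψout t x hx] at h2
      exact absurd h2 hx
    · rw [hψout t x hx, hψout t y hy] at h; exact h
  have hψQ : ∀ t, ∀ q ∈ Qs, ψ t q = q := by
    intro t q hq
    by_cases hqs : q ∈ φ.source
    · rw [hψin t q hqs, hθfix t _ (hrQ q hq hqs).le, φ.left_inv hqs]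
    · exact hψout t q hqs
  have hψposmem : ∀ (t : unitInterval) x, x ∈ φ.source → 0 < (t : ℝ) * δ (φ x).1 →
      ψ t x ∈ mfdInterior n M := by
    intro t x hx hc
    have hθmem : θ t (φ x) ∈ φ.target := hθT _ _ (φ.map_source hx)
    refine mem_mfdInterior_of_chart_pos φ (hψsrc t x hx) ?_
    rw [hψin t x hx, φ.right_inv hθmem, hθcoord]
    have := (φ x).2
    linarith
  have hψfixOr : ∀ t x, ψ t x = x ∨ ψ t x ∈ mfdInterior n M := by
    intro t x
    by_cases hx : x ∈ φ.source
    · by_cases hc : (t : ℝ) * δ (φ x).1 = 0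
      · left; rw [hψin t x hx, hθeq_self t _ hc, φ.left_inv hx]
      · right
        exact hψposmem t x hx (lt_of_le_of_ne (mul_nonneg t.2.1 (hδ0 _)) (Ne.symm hc))
    · left; exact hψout t x hx
  have hψcont : Continuous fun q : unitInterval × M => ψ q.1 q.2 := by
    rw [continuous_iff_continuousAt]
    rintro ⟨t, x⟩
    by_cases hx : x ∈ φ.source
    · have hmem : (univ ×ˢ φ.source) ∈ 𝓝 ((t, x) : unitInterval × M) :=
        prod_mem_nhds Filter.univ_mem (φ.open_source.mem_nhds hx)
      have heq : (fun q : unitInterval × M => ψ q.1 q.2) =ᶠ[𝓝 (t, x)]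
          fun q => φ.symm (θ q.1 (φ q.2)) :=
        Filter.eventually_of_mem hmem fun q hq => hψin q.1 q.2 hq.2
      have h1 : ContinuousAt (fun q : unitInterval × M => θ q.1 (φ q.2)) (t, x) :=
        hθcont.continuousAt.comp (g := fun q : unitInterval × EuclideanHalfSpace n => θ q.1 q.2)
          (f := fun q : unitInterval × M => (q.1, φ q.2))
          (continuousAt_fst.prodMk ((φ.continuousAt hx).comp continuousAt_snd))
      have h2 : ContinuousAt (fun q : unitInterval × M => φ.symm (θ q.1 (φ q.2))) (t, x) :=
        ContinuousAt.comp (g := ↑φ.symm)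
          (f := fun q : unitInterval × M => θ q.1 (φ q.2))
          (φ.continuousAt_symm (hθT t _ (φ.map_source hx))) h1
      exact h2.congr heq.symm
    · have hxK : x ∉ (φ.symm '' (Subtype.val ⁻¹' (closedBall (φ p).1 (2 * r)))) :=
        fun h => hx (hKs h)
      have hmem : (univ ×ˢ (φ.symm '' (Subtype.val ⁻¹' (closedBall (φ p).1 (2 * r))))ᶜ) ∈
          𝓝 ((t, x) : unitInterval × M) :=
        prod_mem_nhds Filter.univ_mem (hKcl.isOpen_compl.mem_nhds hxK)
      have heq : (fun q : unitInterval × M => ψ q.1 q.2) =ᶠ[𝓝 (t, x)] fun q => q.2 :=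
        Filter.eventually_of_mem hmem fun q hq => hψfixK q.1 q.2 hq.2
      exact continuousAt_snd.congr heq.symm
  -- the region of guaranteed push
  refine ⟨ψ, φ.source ∩ φ ⁻¹' (Subtype.val ⁻¹' (ball (φ p).1 r)), ?_, ?_, hψcont, hψ0,
    hψinj, hψQ, hψfixOr, ?_⟩
  · exact φ.isOpen_inter_preimage (isOpen_ball.preimage continuous_subtype_val)
  · exact ⟨hps, by show (φ p).1 ∈ ball (φ p).1 r; simp [hr]⟩
  · intro x hx
    refine hψposmem 1 x hx.1 ?_
    have hd : dist (φ x).1 (φ p).1 < r := hx.2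
    have h1 : ((1 : unitInterval) : ℝ) = 1 := rfl
    rw [h1, one_mul]
    exact hδpos _ hd


end chartsA

section chartsB

variable {n : ℕ} [NeZero n] {M : Type} [TopologicalSpace M] [T2Space M]
  [CompactSpace M] [ChartedSpace (EuclideanHalfSpace n) M]

/-- The global inward isotopy of a compact manifold, fixing a finite set of
interior punctures. -/
lemma exists_global_isotopy (Q : Finset M) (hQ : (↑Q : Set M) ⊆ mfdInterior n M) :
    ∃ Ψ : unitInterval → M → M,
      Continuous (fun q : unitInterval × M => Ψ q.1 q.2) ∧
      (∀ x, Ψ 0 x = x) ∧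
      (∀ t, Function.Injective (Ψ t)) ∧
      (∀ t, ∀ q ∈ (↑Q : Set M), Ψ t q = q) ∧
      (∀ t x, Ψ t x = x ∨ Ψ t x ∈ mfdInterior n M) ∧
      (∀ x, Ψ 1 x ∈ mfdInterior n M) := by
  classical
  have hC : IsCompact ((mfdInterior n M)ᶜ) :=
    (isOpen_mfdInterior.isClosed_compl).isCompact
  have hpnotQ : ∀ p : ↥((mfdInterior n M)ᶜ), p.1 ∉ (↑Q : Set M) :=
    fun p hq => p.2 (hQ hq)
  choose ψf Wf hWopen hWmem hcont h0 hinj hQfix hfixOr hpush using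
    fun p : ↥((mfdInterior n M)ᶜ) =>
      exists_push (n := n) (↑Q : Set M) Q.finite_toSet p.1 (hpnotQ p)
  obtain ⟨s, hs⟩ := hC.elim_finite_subcover Wf hWopen
    (fun x hx => mem_iUnion.2 ⟨⟨x, hx⟩, hWmem _⟩)
  -- iterated push
  obtain ⟨F, hFnil, hFcons⟩ :
      ∃ F : List ↥((mfdInterior n M)ᶜ) → unitInterval → M → M,
        (∀ t x, F [] t x = x) ∧
        (∀ p L t x, F (p :: L) t x = ψf p t (F L t x)) :=
    ⟨fun L t x => L.foldr (fun p g => ψf p t ∘ g) id x, fun _ _ => rfl,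
      fun _ _ _ _ => rfl⟩
  have hFcont : ∀ L, Continuous fun q : unitInterval × M => F L q.1 q.2 := by
    intro L
    induction L with
    | nil => simp only [hFnil]; exact continuous_snd
    | cons p L IH =>
      simp only [hFcons]
      exact (hcont p).comp (continuous_fst.prodMk IH)
  have hF0 : ∀ L x, F L 0 x = x := by
    intro L x
    induction L with
    | nil => exact hFnil 0 x
    | cons p L IH => rw [hFcons, IH, h0]
  have hFinj : ∀ L t, Function.Injective (F L t) := by
    intro L t
    induction L with
    | nil => intro a b hab; rwa [hFnil, hFnil] at hab
    | cons p L IH =>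
      intro a b hab
      rw [hFcons, hFcons] at hab
      exact IH (hinj p t hab)
  have hFQ : ∀ L t, ∀ q ∈ (↑Q : Set M), F L t q = q := by
    intro L t q hq
    induction L with
    | nil => exact hFnil t q
    | cons p L IH => rw [hFcons, IH, hQfix p t q hq]
  have hFor : ∀ L t x, F L t x = x ∨ F L t x ∈ mfdInterior n M := by
    intro L t x
    induction L with
    | nil => left; exact hFnil t x
    | cons p L IH =>
      rw [hFcons]
      rcases IH with h | h
      · rw [h]; exact hfixOr p t x
      · rcases hfixOr p t (F L t x) with h2 | h2
        · rw [h2]; exact Or.inr h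
        · exact Or.inr h2
  have hFpush : ∀ L x, (∃ p ∈ L, x ∈ Wf p) → F L 1 x ∈ mfdInterior n M := by
    intro L
    induction L with
    | nil => rintro x ⟨p, hp, -⟩; exact absurd hp (List.not_mem_nil (a := p))
    | cons p L IH =>
      rintro x ⟨p', hp', hxW⟩
      rw [hFcons]
      rcases List.mem_cons.1 hp' with rfl | hmem
      · rcases hFor L 1 x with h | h
        · rw [h]; exact hpush p' x hxW
        · rcases hfixOr p' 1 (F L 1 x) with h2 | h2
          · rw [h2]; exact h
          · exact h2
      · have h := IH x ⟨p', hmem, hxW⟩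
        rcases hfixOr p 1 (F L 1 x) with h2 | h2
        · rw [h2]; exact h
        · exact h2
  refine ⟨F s.toList, hFcont _, hF0 _, hFinj _, hFQ _, hFor _, ?_⟩
  intro x
  by_cases hx : x ∈ mfdInterior n M
  · rcases hFor s.toList 1 x with h | h
    · rw [h]; exact hx
    · exact h
  · obtain ⟨p, hps, hxW⟩ := mem_iUnion₂.1 (hs hx)
    exact hFpush _ x ⟨p, Finset.mem_toList.2 hps, hxW⟩


end chartsB
end auxiliaries

/-- For a punctured manifold: if `Q` is a set of `m` distinct points in
`Int(M)`, then for every `k ≥ 1` the inclusion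
`F(Int(M) − Q, k) → F(M − Q, k)` is a homotopy equivalence. -/
theorem stmt2 (n : ℕ) [NeZero n] (M : Type) [TopologicalSpace M] [T2Space M]
    [SecondCountableTopology M] [CompactSpace M] [ConnectedSpace M]
    [ChartedSpace (EuclideanHalfSpace n) M]
    (hbd : ((mfdInterior n M)ᶜ : Set M).Nonempty)
    (m : ℕ) (Q : Finset M) (hQcard : Q.card = m)
    (hQ : (↑Q : Set M) ⊆ mfdInterior n M)
    (k : ℕ) (hk : 1 ≤ k) :
    IsHomotopyEquiv
      (confInclOf (show mfdInterior n M \ (↑Q : Set M) ⊆ (↑Q : Set M)ᶜ from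
        fun _ hx => hx.2) k) := by
  classical
  obtain ⟨Ψ, hcont, h0, hinj, hQfix, hfixOr, h1⟩ := exists_global_isotopy Q hQ
  have hnotQ : ∀ (t : unitInterval) (x : M), x ∉ (↑Q : Set M) → Ψ t x ∉ (↑Q : Set M) := by
    intro t x hx hmem
    have hfix : Ψ t (Ψ t x) = Ψ t x := hQfix t _ hmem
    have := hinj t hfix
    exact hx (this ▸ hmem)
  refine conf_homotopyEquiv_of_isotopy _ k
    ⟨fun q => ⟨Ψ q.1 q.2.1, hnotQ q.1 q.2.1 q.2.2⟩, ?_⟩ ?_ ?_ ?_ ?_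
  · apply Continuous.subtype_mk
    exact hcont.comp (continuous_fst.prodMk (continuous_subtype_val.comp continuous_snd))
  · exact fun x => Subtype.ext (h0 x.1)
  · intro t a b hab
    exact Subtype.ext (hinj t (congrArg Subtype.val hab))
  · rintro t x ⟨hxI, hxQ⟩
    refine ⟨?_, hnotQ t x.1 x.2⟩
    show Ψ t x.1 ∈ mfdInterior n M
    rcases hfixOr t x.1 with h | h
    · rw [h]; exact hxI
    · exact h
  · exact fun x => ⟨h1 x.1, hnotQ 1 x.1 x.2⟩
end

section
/- Let M be a nonempty connected compact topological n-dimensional manifold with nonempty boundary and let Int(M) = M − ∂M. For every integer k ≥ 1 and every choice of basepoints y_0 ∈ (Int(M))^k ⊆ M^k, the homotopy fiber I_{i_k(M)} of the inclusion i_k(M) : F(M,k) → M^k over y_0 has the same homotopy type as the homotopy fiber I_{i_k(Int(M))} of the inclusion i_k(Int(M)) : F(Int(M),k) → (Int(M))^k over y_0. -/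
open scoped Topology

set_option synthInstance.maxHeartbeats 1000000
set_option maxHeartbeats 1000000

/-- The inclusion `i_k(X) : F(X,k) → X^k` of the configuration space into the
product. -/
def confToPi (X : Type*) [TopologicalSpace X] (k : ℕ) : C(Conf X k, Fin k → X) :=
  ⟨fun f => f.1, continuous_subtype_val⟩

/-- The homotopy fiber of `f : X → Y` over `y₀ ∈ Y`: pairs `(x, γ)` of a point
of `X` and a path in `Y` from `f x` to `y₀`, where the path space carries the
compact-open topology. -/
abbrev homotopyFiber {X Y : Type*} [TopologicalSpace X] [TopologicalSpace Y]
    (f : C(X, Y)) (y₀ : Y) : Type _ :=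
  {p : X × C(unitInterval, Y) // p.2 0 = f p.1 ∧ p.2 1 = y₀}

namespace Stmt6

/-- A clamped self-push of a space: a family of injective self maps starting at the identity. -/
structure Push (X : Type*) [TopologicalSpace X] where
  K : C(ℝ × X, X)
  K0 : ∀ x, K (0, x) = x
  inj : ∀ t : ℝ, Function.Injective fun x => K (t, x)

variable {X : Type*} [TopologicalSpace X] {k : ℕ}

open Set unitInterval

/-- Underlying two-variable map of the path component of `theta`. -/
noncomputable def pathsRaw (P : Push X) (y₀ : Fin k → X) :
    C((homotopyFiber (confToPi X k) y₀) × unitInterval, Fin k → X) :=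
  ⟨fun q i => P.K (min 1 (2 - 2 * (q.2 : ℝ)),
      q.1.1.2 (projIcc 0 1 zero_le_one (2 * (q.2 : ℝ))) i), by
    apply continuous_pi; intro i
    refine P.K.continuous.comp (Continuous.prodMk ?_ ?_)
    · exact continuous_const.min (continuous_const.sub
        (continuous_const.mul (continuous_subtype_val.comp continuous_snd)))
    · refine (continuous_apply i).comp (continuous_eval.comp (Continuous.prodMk ?_ ?_))
      · exact (continuous_snd.comp continuous_subtype_val).comp continuous_fst
      · exact (continuous_projIcc (h := zero_le_one)).comp (continuous_const.mul
          (continuous_subtype_val.comp continuous_snd))⟩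

/-- The standard self-map of the homotopy fiber induced by a push. -/
noncomputable def theta (P : Push X) (y₀ : Fin k → X) :
    C(homotopyFiber (confToPi X k) y₀, homotopyFiber (confToPi X k) y₀) :=
  ⟨fun p => ⟨(⟨fun i => P.K (1, p.1.1.1 i), (P.inj 1).comp p.1.1.2⟩,
      (pathsRaw P y₀).curry p),
    by
      constructor
      · ext i
        show P.K (min 1 (2 - 2 * ((0 : unitInterval) : ℝ)),
            p.1.2 (projIcc 0 1 zero_le_one (2 * ((0 : unitInterval) : ℝ))) i) = _
        have h1 : min (1:ℝ) (2 - 2 * ((0 : unitInterval) : ℝ)) = 1 := by norm_num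
        have h2 : projIcc (0:ℝ) 1 zero_le_one (2 * ((0 : unitInterval) : ℝ)) = 0 := by
          apply Subtype.ext; simp [coe_projIcc]
        rw [h1, h2, p.2.1]
        rfl
      · ext i
        show P.K (min 1 (2 - 2 * ((1 : unitInterval) : ℝ)),
            p.1.2 (projIcc 0 1 zero_le_one (2 * ((1 : unitInterval) : ℝ))) i) = _
        have h1 : min (1:ℝ) (2 - 2 * ((1 : unitInterval) : ℝ)) = 0 := by norm_num
        have h2 : projIcc (0:ℝ) 1 zero_le_one (2 * ((1 : unitInterval) : ℝ)) = 1 := by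
          apply Subtype.ext; simp [coe_projIcc]
        rw [h1, h2, p.2.2, P.K0]⟩,
    by
      refine Continuous.subtype_mk (Continuous.prodMk ?_ ?_) _
      · refine Continuous.subtype_mk (continuous_pi fun i => ?_)  _
        exact P.K.continuous.comp (continuous_const.prodMk
          ((continuous_apply i).comp (continuous_subtype_val.comp
            (continuous_fst.comp continuous_subtype_val))))
      · exact ((pathsRaw P y₀).curry).continuous ⟩

end Stmt6

namespace Stmt6
open Set unitInterval
variable {X : Type*} [TopologicalSpace X] {k : ℕ}

noncomputable def bigRaw (P : Push X) (y₀ : Fin k → X) :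
    C((unitInterval × homotopyFiber (confToPi X k) y₀) × unitInterval, Fin k → X) :=
  ⟨fun q i => P.K ((q.1.1 : ℝ) * min 1 (2 - 2 * (q.2 : ℝ)),
      q.1.2.1.2 (projIcc 0 1 zero_le_one ((1 + (q.1.1 : ℝ)) * (q.2 : ℝ))) i), by
    apply continuous_pi; intro i
    refine P.K.continuous.comp (Continuous.prodMk ?_ ?_)
    · exact ((continuous_subtype_val.comp (continuous_fst.comp continuous_fst)).mul
        (continuous_const.min (continuous_const.sub
          (continuous_const.mul (continuous_subtype_val.comp continuous_snd)))))
    · refine (continuous_apply i).comp (continuous_eval.comp (Continuous.prodMk ?_ ?_))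
      · exact (continuous_snd.comp continuous_subtype_val).comp
          (continuous_snd.comp continuous_fst)
      · exact (continuous_projIcc (h := zero_le_one)).comp
          (((continuous_const.add (continuous_subtype_val.comp
            (continuous_fst.comp continuous_fst))).mul
            (continuous_subtype_val.comp continuous_snd)))⟩

noncomputable def bigHomotopy (P : Push X) (y₀ : Fin k → X) :
    ContinuousMap.Homotopy (ContinuousMap.id _) (theta P y₀) where
  toFun := fun q => ⟨(⟨fun i => P.K ((q.1 : ℝ), q.2.1.1.1 i), (P.inj _).comp q.2.1.1.2⟩,
      (bigRaw P y₀).curry q),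
    by
      constructor
      · ext i
        show P.K ((q.1 : ℝ) * min 1 (2 - 2 * ((0 : unitInterval) : ℝ)),
            q.2.1.2 (projIcc 0 1 zero_le_one ((1 + (q.1 : ℝ)) * ((0 : unitInterval) : ℝ))) i) = _
        have h1 : (q.1 : ℝ) * min 1 (2 - 2 * ((0 : unitInterval) : ℝ)) = (q.1 : ℝ) := by norm_num
        have h2 : projIcc (0:ℝ) 1 zero_le_one ((1 + (q.1 : ℝ)) * ((0 : unitInterval) : ℝ)) = 0 := by
          apply Subtype.ext; simp [coe_projIcc]
        rw [h1, h2, q.2.2.1]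
        rfl
      · ext i
        show P.K ((q.1 : ℝ) * min 1 (2 - 2 * ((1 : unitInterval) : ℝ)),
            q.2.1.2 (projIcc 0 1 zero_le_one ((1 + (q.1 : ℝ)) * ((1 : unitInterval) : ℝ))) i) = _
        have h1 : (q.1 : ℝ) * min 1 (2 - 2 * ((1 : unitInterval) : ℝ)) = 0 := by norm_num
        have h2 : projIcc (0:ℝ) 1 zero_le_one ((1 + (q.1 : ℝ)) * ((1 : unitInterval) : ℝ)) = 1 := by
          apply projIcc_of_right_le
          have h := q.1.2.1
          have : ((1 : unitInterval) : ℝ) = 1 := rfl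
          rw [this]; nlinarith
        rw [h1, h2, q.2.2.2, P.K0]⟩
  continuous_toFun := by
    refine Continuous.subtype_mk (Continuous.prodMk ?_ ?_) _
    · refine Continuous.subtype_mk (continuous_pi fun i => ?_) _
      refine P.K.continuous.comp (Continuous.prodMk ?_ ?_)
      · exact continuous_subtype_val.comp continuous_fst
      · exact (continuous_apply i).comp (continuous_subtype_val.comp
          (continuous_fst.comp (continuous_subtype_val.comp continuous_snd)))
    · exact ((bigRaw P y₀).curry).continuous
  map_zero_left := by
    intro p
    refine Subtype.ext (Prod.ext ?_ ?_)
    · apply Subtype.ext; funext i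
      exact P.K0 _
    · ext t i
      show P.K (((0 : unitInterval) : ℝ) * min 1 (2 - 2 * (t : ℝ)),
          p.1.2 (projIcc 0 1 zero_le_one ((1 + ((0 : unitInterval) : ℝ)) * (t : ℝ))) i) = _
      have h1 : ((0 : unitInterval) : ℝ) * min 1 (2 - 2 * (t : ℝ)) = 0 := by norm_num
      have h2 : projIcc (0:ℝ) 1 zero_le_one ((1 + ((0 : unitInterval) : ℝ)) * (t : ℝ)) = t := by
        have : ((0 : unitInterval) : ℝ) = 0 := rfl
        rw [this]
        rw [show (1 + (0:ℝ)) * (t:ℝ) = (t:ℝ) by ring]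
        rw [projIcc_of_mem _ t.2]
      rw [h1, h2, P.K0]
      rfl
  map_one_left := by
    intro p
    refine Subtype.ext (Prod.ext ?_ ?_)
    · apply Subtype.ext; funext i
      rfl
    · ext t i
      show P.K (((1 : unitInterval) : ℝ) * min 1 (2 - 2 * (t : ℝ)),
          p.1.2 (projIcc 0 1 zero_le_one ((1 + ((1 : unitInterval) : ℝ)) * (t : ℝ))) i) = _
      have h1 : ((1 : unitInterval) : ℝ) * min 1 (2 - 2 * (t : ℝ)) = min 1 (2 - 2 * (t : ℝ)) := by
        norm_num
      have h2 : (1 + ((1 : unitInterval) : ℝ)) * (t : ℝ) = 2 * (t : ℝ) := by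
        have : ((1 : unitInterval) : ℝ) = 1 := rfl
        rw [this]; ring
      rw [h1, h2]
      rfl

theorem theta_homotopic_id (P : Push X) (y₀ : Fin k → X) :
    (theta P y₀).Homotopic (ContinuousMap.id _) :=
  (ContinuousMap.Homotopic.symm ⟨bigHomotopy P y₀⟩)

end Stmt6

namespace Stmt6

open Set Metric

lemma coordDistLe {n : ℕ} (y z : EuclideanSpace ℝ (Fin n)) (i : Fin n) :
    dist (y i) (z i) ≤ dist y z := by
  rw [EuclideanSpace.dist_eq]
  rw [show dist (y i) (z i) = Real.sqrt (dist (y i) (z i) ^ 2) from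
    (Real.sqrt_sq dist_nonneg).symm]
  apply Real.sqrt_le_sqrt
  exact Finset.single_le_sum (f := fun j => dist (y j) (z j) ^ 2)
    (fun j _ => sq_nonneg _) (Finset.mem_univ i)

noncomputable def ballHomeo {n : ℕ} (c : EuclideanSpace ℝ (Fin n)) {r : ℝ} (hr : 0 < r) :
    EuclideanSpace ℝ (Fin n) ≃ₜ (Metric.ball c r) :=
  (Homeomorph.Set.univ _).symm.trans <|
    (Homeomorph.setCongr (OpenPartialHomeomorph.univBall_source c r).symm).trans <|
      (OpenPartialHomeomorph.univBall c r).toHomeomorphSourceTarget.trans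
        (Homeomorph.setCongr (OpenPartialHomeomorph.univBall_target c hr))

theorem mem_mfdInterior_of_chart {n : ℕ} [NeZero n] {M : Type*} [TopologicalSpace M]
    (φ : OpenPartialHomeomorph M (EuclideanHalfSpace n)) {x : M} (hx : x ∈ φ.source)
    (hpos : 0 < (φ x).1 0) : x ∈ mfdInterior n M := by
  obtain ⟨V, hVopen, hVeq⟩ := isOpen_induced_iff.mp φ.open_target
  have hpV : (φ x).1 ∈ V := by
    have h := φ.map_source hx
    rw [← hVeq] at h
    exact h
  obtain ⟨r, hr, hball⟩ := Metric.isOpen_iff.mp hVopen _ hpV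
  set p : EuclideanSpace ℝ (Fin n) := (φ x).1 with hp
  set ε : ℝ := min r (p 0) with hεdef
  have hε0 : 0 < ε := lt_min hr hpos
  have haux : ∀ y : EuclideanSpace ℝ (Fin n), y ∈ Metric.ball p ε → 0 < y 0 := by
    intro y hy
    have h1 : dist (y 0) (p 0) ≤ dist y p := coordDistLe y p 0
    have h2 : dist y p < ε := mem_ball.mp hy
    have h3 : ε ≤ p 0 := min_le_right _ _
    have := abs_lt.mp (by rw [← Real.dist_eq]; linarith : |y 0 - p 0| < ε)
    linarith [this.1]
  set B : Set (EuclideanHalfSpace n) := Subtype.val ⁻¹' (Metric.ball p ε) with hB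
  have hBopen : IsOpen B := Metric.isOpen_ball.preimage continuous_subtype_val
  have hBtarget : B ⊆ φ.target := by
    intro y hy
    rw [← hVeq]
    exact hball (Metric.ball_subset_ball (min_le_left _ _) hy)
  set U : Set M := φ.source ∩ φ ⁻¹' B with hU
  have hUopen : IsOpen U := φ.isOpen_inter_preimage hBopen
  have hxU : x ∈ U := ⟨hx, by
    show (φ x).1 ∈ Metric.ball p ε
    rw [← hp]
    exact Metric.mem_ball_self hε0⟩
  have homeoU : U ≃ₜ (Metric.ball p ε) := by
    refine Homeomorph.mk (Equiv.mk
      (fun u => ⟨(φ u.1).1, u.2.2⟩)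
      (fun b => ⟨φ.symm ⟨b.1, le_of_lt (haux b.1 b.2)⟩,
        φ.map_target (hBtarget (by exact b.2 : (⟨b.1, _⟩ : EuclideanHalfSpace n) ∈ B)),
        by
          show φ (φ.symm ⟨b.1, _⟩) ∈ B
          rw [φ.right_inv (hBtarget (by exact b.2))]
          exact b.2⟩)
      ?_ ?_) ?_ ?_
    · intro u
      apply Subtype.ext
      exact φ.left_inv u.2.1
    · intro b
      apply Subtype.ext
      show (φ (φ.symm ⟨b.1, _⟩)).1 = b.1
      rw [φ.right_inv (hBtarget (by exact b.2))]
    · exact Continuous.subtype_mk (continuous_subtype_val.comp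
        (φ.continuousOn.comp_continuous continuous_subtype_val fun u => u.2.1)) _
    · apply Continuous.subtype_mk
      apply φ.continuousOn_symm.comp_continuous
        (Continuous.subtype_mk continuous_subtype_val _)
      intro b
      exact hBtarget (show (⟨b.1, le_of_lt (haux b.1 b.2)⟩ : EuclideanHalfSpace n) ∈ B from b.2)
  · exact ⟨U, hUopen, hxU, ⟨homeoU.trans (ballHomeo p hε0).symm⟩⟩

end Stmt6

namespace Stmt6

open Set Metric

variable {n : ℕ} [NeZero n] {M : Type*} [TopologicalSpace M] [T2Space M]
  [ChartedSpace (EuclideanHalfSpace n) M]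

theorem exists_localPush {x : M} (hx : x ∉ mfdInterior n M) :
    ∃ (F : C(ℝ × M, M)) (V : Set M), IsOpen V ∧ x ∈ V ∧
      (∀ z, F (0, z) = z) ∧ (∀ t : ℝ, Function.Injective fun z => F (t, z)) ∧
      (∀ t z, F (t, z) = z ∨ F (t, z) ∈ mfdInterior n M) ∧
      (∀ z ∈ V, F (1, z) ∈ mfdInterior n M) := by
  classical
  set φ : OpenPartialHomeomorph M (EuclideanHalfSpace n) := chartAt (EuclideanHalfSpace n) x with hφ
  have hsx : x ∈ φ.source := mem_chart_source _ x
  set p : EuclideanSpace ℝ (Fin n) := (φ x).1 with hpdef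
  -- the target contains a halfspace-ball around `p`
  obtain ⟨V, hVopen, hVeq⟩ := isOpen_induced_iff.mp φ.open_target
  have hpV : p ∈ V := by
    have h := φ.map_source hsx
    rw [← hVeq] at h
    exact h
  obtain ⟨ε, hε, hball⟩ := Metric.isOpen_iff.mp hVopen _ hpV
  set δ : ℝ := ε / 3 with hδdef
  have hδ : 0 < δ := by positivity
  -- time clamp
  set τ : ℝ → ℝ := fun t => max 0 (min 1 t) with hτdef
  have hτcont : Continuous τ := continuous_const.max (continuous_const.min continuous_id)
  have hτ0 : τ 0 = 0 := by norm_num [hτdef]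
  have hτ1 : τ 1 = 1 := by norm_num [hτdef]
  have hτmem : ∀ t, 0 ≤ τ t ∧ τ t ≤ 1 := fun t =>
    ⟨le_max_left _ _, max_le zero_le_one (min_le_left _ _)⟩
  -- bump
  set lam : EuclideanSpace ℝ (Fin n) → ℝ := fun y => max 0 ((δ - dist y p) / 2) with hlamdef
  have hlamcont : Continuous lam :=
    continuous_const.max ((continuous_const.sub (continuous_id.dist continuous_const)).div_const 2)
  have hlam0 : ∀ y, 0 ≤ lam y := fun y => le_max_left _ _
  have hlamle : ∀ y, lam y ≤ δ / 2 := fun y =>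
    max_le (by positivity) (by have := dist_nonneg (x := y) (y := p); linarith)
  have hlamlip : ∀ y z, |lam y - lam z| ≤ dist y z / 2 := by
    intro y z
    have h1 : |lam y - lam z| ≤ |(δ - dist y p) / 2 - (δ - dist z p) / 2| := by
      rw [hlamdef]
      simpa [max_comm] using
        abs_max_sub_max_le_abs ((δ - dist y p) / 2) ((δ - dist z p) / 2) 0
    have h2 : |(δ - dist y p) / 2 - (δ - dist z p) / 2| = |dist z p - dist y p| / 2 := by
      rw [show (δ - dist y p) / 2 - (δ - dist z p) / 2 = (dist z p - dist y p) / 2 by ring,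
        abs_div]
      norm_num
    have h3 : |dist z p - dist y p| ≤ dist z y := abs_dist_sub_le z y p
    rw [h2] at h1
    calc |lam y - lam z| ≤ |dist z p - dist y p| / 2 := h1
      _ ≤ dist z y / 2 := by linarith
      _ = dist y z / 2 := by rw [dist_comm]
  have hlampos : ∀ y, dist y p < δ → 0 < lam y := by
    intro y h
    exact lt_max_of_lt_right (by linarith)
  have hlamzero : ∀ y, 0 < lam y → dist y p < δ := by
    intro y h
    by_contra hc
    push_neg at hc
    have h2 : lam y = 0 := max_eq_left (by linarith)
    rw [h2] at h
    exact lt_irrefl _ h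
  -- the push map on Euclidean space
  set e0 : EuclideanSpace ℝ (Fin n) := EuclideanSpace.single (0 : Fin n) (1 : ℝ) with he0def
  have he0norm : ‖e0‖ = 1 := by
    rw [he0def, EuclideanSpace.norm_single, norm_one]
  set pushE : ℝ → EuclideanSpace ℝ (Fin n) → EuclideanSpace ℝ (Fin n) := fun t y => y + (τ t * lam y) • e0 with hpushEdef
  have hpushEcont : Continuous fun q : ℝ × EuclideanSpace ℝ (Fin n) => pushE q.1 q.2 := by
    apply Continuous.add continuous_snd
    exact (((hτcont.comp continuous_fst).mul (hlamcont.comp continuous_snd)).smul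
      continuous_const)
  have hcoord : ∀ t y, pushE t y 0 = y 0 + τ t * lam y := by
    intro t y
    rw [hpushEdef]
    simp [PiLp.add_apply, PiLp.smul_apply, he0def, EuclideanSpace.single_apply]
  have hfix : ∀ t y, τ t * lam y = 0 → pushE t y = y := by
    intro t y h
    rw [hpushEdef]
    simp [h]
  have hdistpush : ∀ t y, dist (pushE t y) y = τ t * lam y := by
    intro t y
    rw [hpushEdef, dist_eq_norm]
    simp only [add_sub_cancel_left]
    rw [norm_smul, he0norm, mul_one, Real.norm_eq_abs,
      abs_of_nonneg (mul_nonneg (hτmem t).1 (hlam0 y))]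
  have hpushinj : ∀ t, Function.Injective (pushE t) := by
    intro t y z h
    have hyz : y - z = (τ t * lam z - τ t * lam y) • e0 := by
      have := h
      rw [hpushEdef] at this
      have h2 : y - z = (τ t * lam z) • e0 - (τ t * lam y) • e0 := by
        rw [← sub_eq_zero] at this ⊢
        rw [← this]; beta_reduce; abel
      rw [h2, ← sub_smul]
    have hnorm : ‖y - z‖ = |τ t * lam z - τ t * lam y| := by
      rw [hyz, norm_smul, he0norm, mul_one, Real.norm_eq_abs]
    have hbound : |τ t * lam z - τ t * lam y| ≤ ‖y - z‖ / 2 := by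
      rw [show τ t * lam z - τ t * lam y = τ t * (lam z - lam y) by ring, abs_mul,
        abs_of_nonneg (hτmem t).1]
      calc τ t * |lam z - lam y| ≤ 1 * |lam z - lam y| :=
            mul_le_mul_of_nonneg_right (hτmem t).2 (abs_nonneg _)
        _ = |lam z - lam y| := one_mul _
        _ ≤ dist z y / 2 := hlamlip z y
        _ = ‖y - z‖ / 2 := by rw [dist_eq_norm, norm_sub_rev]
    have : ‖y - z‖ ≤ ‖y - z‖ / 2 := hnorm ▸ (hnorm ▸ hbound)
    have h0 : ‖y - z‖ = 0 := by
      have := norm_nonneg (y - z)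
      linarith
    have := norm_eq_zero.mp h0
    exact sub_eq_zero.mp this
  -- the push map on the half space
  have hpushnonneg : ∀ (t : ℝ) (y : EuclideanHalfSpace n), 0 ≤ pushE t y.1 0 := by
    intro t y
    rw [hcoord]
    exact add_nonneg y.2 (mul_nonneg (hτmem t).1 (hlam0 _))
  set pushH : ℝ → EuclideanHalfSpace n → EuclideanHalfSpace n :=
    fun t y => ⟨pushE t y.1, hpushnonneg t y⟩ with hpushHdef
  -- the compact support region
  set S : Set (EuclideanHalfSpace n) := Subtype.val ⁻¹' (Metric.closedBall p (2 * δ)) with hSdef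
  have hclosedhalf : IsClosed {y : EuclideanSpace ℝ (Fin n) | 0 ≤ y 0} := by
    apply isClosed_le continuous_const
    exact LipschitzWith.continuous (K := 1) (LipschitzWith.of_dist_le_mul (fun a b => by
      simpa using coordDistLe a b 0))
  have hvalemb : Topology.IsClosedEmbedding
      (Subtype.val : EuclideanHalfSpace n → EuclideanSpace ℝ (Fin n)) :=
    IsClosed.isClosedEmbedding_subtypeVal hclosedhalf
  have hScompact : IsCompact S :=
    hvalemb.isCompact_preimage (isCompact_closedBall p (2 * δ))
  have hStarget : S ⊆ φ.target := by
    intro y hy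
    rw [← hVeq]
    apply hball
    have : dist y.1 p ≤ 2 * δ := mem_closedBall.mp hy
    have h2 : 2 * δ < ε := by rw [hδdef]; linarith
    exact mem_ball.mpr (lt_of_le_of_lt this h2)
  have hmovedS : ∀ (t : ℝ) (y : EuclideanHalfSpace n), pushE t y.1 ≠ y.1 →
      dist y.1 p < δ ∧ pushH t y ∈ S := by
    intro t y hmv
    have hlt : 0 < τ t * lam y.1 := by
      rcases lt_or_eq_of_le (mul_nonneg (hτmem t).1 (hlam0 y.1)) with h | h
      · exact h
      · exact absurd (hfix t y.1 h.symm) hmv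
    have hltlam : 0 < lam y.1 := by
      rcases lt_or_eq_of_le (hlam0 y.1) with h | h
      · exact h
      · rw [← h] at hlt; simp at hlt
    have hd : dist y.1 p < δ := hlamzero _ hltlam
    constructor
    · exact hd
    · show pushE t y.1 ∈ Metric.closedBall p (2 * δ)
      rw [mem_closedBall]
      calc dist (pushE t y.1) p ≤ dist (pushE t y.1) y.1 + dist y.1 p := dist_triangle _ _ _
        _ ≤ τ t * lam y.1 + δ := by
            rw [hdistpush]
            have := hd.le
            linarith
        _ ≤ δ / 2 + δ := by
            have h1 : τ t * lam y.1 ≤ 1 * (δ / 2) :=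
              mul_le_mul (hτmem t).2 (hlamle y.1) (hlam0 y.1) zero_le_one
            linarith
        _ ≤ 2 * δ := by linarith
  have hpushtarget : ∀ (t : ℝ) (y : EuclideanHalfSpace n), y ∈ φ.target →
      pushH t y ∈ φ.target := by
    intro t y hy
    by_cases hmv : pushE t y.1 = y.1
    · have : pushH t y = y := Subtype.ext hmv
      rw [this]; exact hy
    · exact hStarget (hmovedS t y hmv).2
  -- compact support in M
  set Cpt : Set M := φ.symm '' S with hCptdef
  have hCptcompact : IsCompact Cpt :=
    hScompact.image_of_continuousOn (φ.continuousOn_symm.mono hStarget)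
  have hCptclosed : IsClosed Cpt := hCptcompact.isClosed
  have hnotCpt : ∀ z, z ∈ φ.source → z ∉ Cpt → φ z ∉ S := by
    intro z hzs hzc hS0
    exact hzc ⟨φ z, hS0, φ.left_inv hzs⟩
  -- the global push
  set F : ℝ × M → M := fun q =>
    if q.2 ∈ φ.source then φ.symm (pushH q.1 (φ q.2)) else q.2 with hFdef
  have hFsource : ∀ (t : ℝ) z, z ∈ φ.source →
      F (t, z) ∈ φ.source ∧ φ (F (t, z)) = pushH t (φ z) := by
    intro t z hz
    have h1 : F (t, z) = φ.symm (pushH t (φ z)) := if_pos hz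
    have h2 : pushH t (φ z) ∈ φ.target := hpushtarget t _ (φ.map_source hz)
    rw [h1]
    exact ⟨φ.map_target h2, φ.right_inv h2⟩
  have hFnot : ∀ (t : ℝ) z, z ∉ φ.source → F (t, z) = z := fun t z hz => if_neg hz
  -- continuity of F
  have hFcont : Continuous F := by
    rw [continuous_iff_continuousAt]
    rintro ⟨t, z⟩
    by_cases hz : z ∈ Cpt
    · have hzs : z ∈ φ.source := by
        obtain ⟨y, hyS, hyz⟩ := hz
        rw [← hyz]
        exact φ.map_target (hStarget hyS)
      have hopen : IsOpen {q : ℝ × M | q.2 ∈ φ.source} :=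
        φ.open_source.preimage continuous_snd
      have hmem : {q : ℝ × M | q.2 ∈ φ.source} ∈ 𝓝 (t, z) := hopen.mem_nhds hzs
      have h1 : ContinuousOn (fun q : ℝ × M => φ q.2) {q : ℝ × M | q.2 ∈ φ.source} :=
        φ.continuousOn.comp continuous_snd.continuousOn (fun q hq => hq)
      have h2 : ContinuousOn (fun q : ℝ × M => (φ q.2).1) {q : ℝ × M | q.2 ∈ φ.source} :=
        continuous_subtype_val.comp_continuousOn h1
      have hpushHcont : Continuous (fun q : ℝ × EuclideanHalfSpace n => pushH q.1 q.2) :=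
        Continuous.subtype_mk (hpushEcont.comp
          (continuous_fst.prodMk (continuous_subtype_val.comp continuous_snd))) _
      have h4 : ContinuousOn (fun q : ℝ × M => pushH q.1 (φ q.2))
          {q : ℝ × M | q.2 ∈ φ.source} :=
        hpushHcont.comp_continuousOn (continuousOn_fst.prodMk h1)
      have hco : ContinuousOn (fun q : ℝ × M => φ.symm (pushH q.1 (φ q.2)))
          {q : ℝ × M | q.2 ∈ φ.source} :=
        φ.continuousOn_symm.comp h4 (fun q hq => hpushtarget q.1 _ (φ.map_source hq))
      exact ContinuousAt.congr (hco.continuousAt hmem)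
        (Filter.eventuallyEq_of_mem hmem fun q hq => (if_pos hq).symm)
    · have hopen : IsOpen {q : ℝ × M | q.2 ∉ Cpt} :=
        hCptclosed.isOpen_compl.preimage continuous_snd
      have hmem : {q : ℝ × M | q.2 ∉ Cpt} ∈ 𝓝 (t, z) := hopen.mem_nhds hz
      have heq : ∀ q ∈ {q : ℝ × M | q.2 ∉ Cpt}, F q = q.2 := by
        intro q hq
        by_cases hqs : q.2 ∈ φ.source
        · have hfix2 : pushE q.1 (φ q.2).1 = (φ q.2).1 := by
            by_contra hmv
            have hd := (hmovedS q.1 (φ q.2) hmv).1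
            have hmemS : φ q.2 ∈ S := by
              show (φ q.2).1 ∈ Metric.closedBall p (2 * δ)
              rw [mem_closedBall]
              linarith
            exact (hnotCpt q.2 hqs hq) hmemS
          have hfix3 : pushH q.1 (φ q.2) = φ q.2 := Subtype.ext hfix2
          show (if q.2 ∈ φ.source then φ.symm (pushH q.1 (φ q.2)) else q.2) = q.2
          rw [if_pos hqs, hfix3, φ.left_inv hqs]
        · exact if_neg hqs
      exact ContinuousAt.congr continuousAt_snd
        (Filter.eventuallyEq_of_mem hmem fun q hq => (heq q hq).symm)
  -- F at time 0 is the identity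
  have hF0 : ∀ z, F (0, z) = z := by
    intro z
    by_cases hz : z ∈ φ.source
    · have h1 : pushH 0 (φ z) = φ z := Subtype.ext (hfix 0 _ (by rw [hτ0, zero_mul]))
      show (if z ∈ φ.source then φ.symm (pushH 0 (φ z)) else z) = z
      rw [if_pos hz, h1, φ.left_inv hz]
    · exact hFnot 0 z hz
  -- injectivity of each time slice
  have hpushHinj : ∀ t : ℝ, Function.Injective (pushH t) := by
    intro t y z h
    exact Subtype.ext (hpushinj t (congrArg Subtype.val h))
  have hFinj : ∀ t : ℝ, Function.Injective fun z => F (t, z) := by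
    intro t z1 z2 h
    have h' : F (t, z1) = F (t, z2) := h
    by_cases h1 : z1 ∈ φ.source <;> by_cases h2 : z2 ∈ φ.source
    · have e1 := (hFsource t z1 h1).2
      have e2 := (hFsource t z2 h2).2
      have : pushH t (φ z1) = pushH t (φ z2) := by rw [← e1, ← e2, h']
      exact φ.injOn h1 h2 (hpushHinj t this)
    · exfalso
      have := (hFsource t z1 h1).1
      rw [h', hFnot t z2 h2] at this
      exact h2 this
    · exfalso
      have := (hFsource t z2 h2).1
      rw [← h', hFnot t z1 h1] at this
      exact h1 this
    · rw [hFnot t z1 h1, hFnot t z2 h2] at h'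
      exact h'
  -- each point is fixed or moved into the interior
  have hFfixInt : ∀ (t : ℝ) z, F (t, z) = z ∨ F (t, z) ∈ mfdInterior n M := by
    intro t z
    by_cases hz : z ∈ φ.source
    · by_cases hmv : pushE t (φ z).1 = (φ z).1
      · left
        have h1 : pushH t (φ z) = φ z := Subtype.ext hmv
        show (if z ∈ φ.source then φ.symm (pushH t (φ z)) else z) = z
        rw [if_pos hz, h1, φ.left_inv hz]
      · right
        have hc : 0 < τ t * lam (φ z).1 := by
          rcases lt_or_eq_of_le (mul_nonneg (hτmem t).1 (hlam0 (φ z).1)) with h | h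
          · exact h
          · exact absurd (hfix t (φ z).1 h.symm) hmv
        have hcoordpos : 0 < (pushH t (φ z)).1 0 := by
          show 0 < pushE t (φ z).1 0
          rw [hcoord]
          have := (φ z).2
          linarith
        obtain ⟨hFs, hFeq⟩ := hFsource t z hz
        apply mem_mfdInterior_of_chart φ hFs
        rw [hFeq]
        exact hcoordpos
    · left; exact hFnot t z hz
  -- the region pushed into the interior
  set W : Set M := φ.source ∩ φ ⁻¹' (Subtype.val ⁻¹' (Metric.ball p δ)) with hWdef
  have hWopen : IsOpen W :=
    φ.isOpen_inter_preimage (Metric.isOpen_ball.preimage continuous_subtype_val)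
  have hxW : x ∈ W := by
    refine ⟨hsx, ?_⟩
    show (φ x).1 ∈ Metric.ball p δ
    rw [← hpdef]
    exact Metric.mem_ball_self hδ
  have hWint : ∀ z ∈ W, F (1, z) ∈ mfdInterior n M := by
    rintro z ⟨hz, hzb⟩
    have hlamz : 0 < lam (φ z).1 := hlampos _ (mem_ball.mp hzb)
    have hc : 0 < τ 1 * lam (φ z).1 := by rw [hτ1]; linarith
    have hcoordpos : 0 < (pushH 1 (φ z)).1 0 := by
      show 0 < pushE 1 (φ z).1 0
      rw [hcoord]
      have := (φ z).2
      linarith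
    obtain ⟨hFs, hFeq⟩ := hFsource 1 z hz
    apply mem_mfdInterior_of_chart φ hFs
    rw [hFeq]
    exact hcoordpos
  exact ⟨⟨F, hFcont⟩, W, hWopen, hxW, hF0, hFinj, hFfixInt, hWint⟩


/-- Composition of a list of time-parametrized self-maps (all at the same time). -/
def compPush {M : Type*} [TopologicalSpace M] : List C(ℝ × M, M) → ℝ × M → M
  | [], q => q.2
  | f :: L, q => compPush L (q.1, f q)

lemma compPush_continuous {M : Type*} [TopologicalSpace M] (L : List C(ℝ × M, M)) :
    Continuous (compPush L) := by
  induction L with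
  | nil => exact continuous_snd
  | cons f L ih => exact ih.comp (continuous_fst.prodMk f.continuous)

lemma compPush_zero {M : Type*} [TopologicalSpace M] (L : List C(ℝ × M, M))
    (h : ∀ f ∈ L, ∀ z, f (0, z) = z) : ∀ z, compPush L (0, z) = z := by
  induction L with
  | nil => intro z; rfl
  | cons f L ih =>
      intro z
      show compPush L (0, f (0, z)) = z
      rw [h f (List.mem_cons_self) z]
      exact ih (fun g hg => h g (List.mem_cons_of_mem f hg)) z

lemma compPush_inj {M : Type*} [TopologicalSpace M] (L : List C(ℝ × M, M))
    (h : ∀ f ∈ L, ∀ t : ℝ, Function.Injective fun z => f (t, z)) :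
    ∀ t : ℝ, Function.Injective fun z => compPush L (t, z) := by
  induction L with
  | nil => intro t z1 z2 hz; exact hz
  | cons f L ih =>
      intro t z1 z2 hz
      have h2 : f (t, z1) = f (t, z2) :=
        ih (fun g hg => h g (List.mem_cons_of_mem f hg)) t hz
      exact h f (List.mem_cons_self) t h2

lemma compPush_mem {M : Type*} [TopologicalSpace M] (S : Set M) (L : List C(ℝ × M, M))
    (h : ∀ f ∈ L, ∀ (t : ℝ) z, f (t, z) = z ∨ f (t, z) ∈ S) :
    ∀ (t : ℝ) z, z ∈ S → compPush L (t, z) ∈ S := by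
  induction L with
  | nil => intro t z hz; exact hz
  | cons f L ih =>
      intro t z hz
      show compPush L (t, f (t, z)) ∈ S
      rcases h f (List.mem_cons_self) t z with h1 | h1
      · rw [h1]; exact ih (fun g hg => h g (List.mem_cons_of_mem f hg)) t z hz
      · exact ih (fun g hg => h g (List.mem_cons_of_mem f hg)) t _ h1

lemma compPush_fixOrMem {M : Type*} [TopologicalSpace M] (S : Set M) (L : List C(ℝ × M, M))
    (h : ∀ f ∈ L, ∀ (t : ℝ) z, f (t, z) = z ∨ f (t, z) ∈ S) :
    ∀ (t : ℝ) z, compPush L (t, z) = z ∨ compPush L (t, z) ∈ S := by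
  induction L with
  | nil => intro t z; left; rfl
  | cons f L ih =>
      intro t z
      show compPush L (t, f (t, z)) = z ∨ compPush L (t, f (t, z)) ∈ S
      rcases h f (List.mem_cons_self) t z with h1 | h1
      · rw [h1]; exact ih (fun g hg => h g (List.mem_cons_of_mem f hg)) t z
      · right
        exact compPush_mem S L (fun g hg => h g (List.mem_cons_of_mem f hg)) t _ h1

lemma compPush_cover {M : Type*} [TopologicalSpace M] (S : Set M)
    (L : List (C(ℝ × M, M) × Set M))
    (h : ∀ e ∈ L, ∀ (t : ℝ) z, e.1 (t, z) = z ∨ e.1 (t, z) ∈ S)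
    (hV : ∀ e ∈ L, ∀ z ∈ e.2, e.1 (1, z) ∈ S) :
    ∀ z, (z ∈ S ∨ ∃ e ∈ L, z ∈ e.2) → compPush (L.map Prod.fst) (1, z) ∈ S := by
  induction L with
  | nil =>
      rintro z (hz | ⟨e, he, _⟩)
      · exact hz
      · exact absurd he List.not_mem_nil
  | cons e L ih =>
      have hmemtail : ∀ g ∈ L.map Prod.fst, ∀ (t : ℝ) z, g (t, z) = z ∨ g (t, z) ∈ S := by
        intro g hg t z
        obtain ⟨e', he', rfl⟩ := List.mem_map.mp hg
        exact h e' (List.mem_cons_of_mem e he') t z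
      rintro z (hz | ⟨e', he', hze'⟩)
      · show compPush (L.map Prod.fst) (1, e.1 (1, z)) ∈ S
        rcases h e (List.mem_cons_self) 1 z with h1 | h1
        · rw [h1]
          exact ih (fun e' he' => h e' (List.mem_cons_of_mem e he'))
            (fun e' he' => hV e' (List.mem_cons_of_mem e he')) z (Or.inl hz)
        · exact compPush_mem S _ hmemtail 1 _ h1
      · show compPush (L.map Prod.fst) (1, e.1 (1, z)) ∈ S
        rcases List.mem_cons.mp he' with rfl | he'tail
        · exact compPush_mem S _ hmemtail 1 _ (hV e' (List.mem_cons_self) z hze')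
        · rcases h e (List.mem_cons_self) 1 z with h1 | h1
          · rw [h1]
            exact ih (fun a ha => h a (List.mem_cons_of_mem e ha))
              (fun a ha => hV a (List.mem_cons_of_mem e ha)) z (Or.inr ⟨e', he'tail, hze'⟩)
          · exact compPush_mem S _ hmemtail 1 _ h1

lemma isOpen_mfdInterior (n : ℕ) (M : Type*) [TopologicalSpace M] :
    IsOpen (mfdInterior n M) := by
  rw [isOpen_iff_forall_mem_open]
  rintro x ⟨U, hU, hxU, he⟩
  exact ⟨U, fun y hy => ⟨U, hU, hy, he⟩, hU, hxU⟩

theorem exists_nicePush (n : ℕ) [NeZero n] (M : Type*) [TopologicalSpace M] [T2Space M]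
    [CompactSpace M] [ChartedSpace (EuclideanHalfSpace n) M] :
    ∃ K : C(ℝ × M, M), (∀ z, K (0, z) = z) ∧
      (∀ t : ℝ, Function.Injective fun z => K (t, z)) ∧
      (∀ (t : ℝ) z, z ∈ mfdInterior n M → K (t, z) ∈ mfdInterior n M) ∧
      (∀ z, K (1, z) ∈ mfdInterior n M) := by
  classical
  set S := mfdInterior n M with hSdef
  set Bd := Sᶜ with hBddef
  have hBdcompact : IsCompact Bd :=
    (isOpen_mfdInterior n M).isClosed_compl.isCompact
  choose F V hVopen hxV hF0 hFinj hFfix hFint using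
    fun x : Bd => exists_localPush (x.2 : x.1 ∉ mfdInterior n M)
  have hcover : Bd ⊆ ⋃ x : Bd, V x := fun z hz => Set.mem_iUnion.mpr ⟨⟨z, hz⟩, hxV _⟩
  obtain ⟨s, hs⟩ := hBdcompact.elim_finite_subcover (fun x : Bd => V x)
    (fun x => hVopen x) hcover
  set L : List (C(ℝ × M, M) × Set M) := s.toList.map (fun i => (F i, V i)) with hLdef
  have hGen : ∀ e ∈ L, (∀ z, e.1 (0, z) = z) ∧
      (∀ t : ℝ, Function.Injective fun z => e.1 (t, z)) ∧
      (∀ (t : ℝ) z, e.1 (t, z) = z ∨ e.1 (t, z) ∈ S) ∧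
      (∀ z ∈ e.2, e.1 (1, z) ∈ S) := by
    intro e he
    obtain ⟨i, _, rfl⟩ := List.mem_map.mp he
    exact ⟨hF0 i, hFinj i, hFfix i, hFint i⟩
  refine ⟨⟨compPush (L.map Prod.fst), compPush_continuous _⟩, ?_, ?_, ?_, ?_⟩
  · exact compPush_zero _ (fun f hf => by
      obtain ⟨e, he, rfl⟩ := List.mem_map.mp hf
      exact (hGen e he).1)
  · exact compPush_inj _ (fun f hf => by
      obtain ⟨e, he, rfl⟩ := List.mem_map.mp hf
      exact (hGen e he).2.1)
  · exact fun t z hz => compPush_mem S _ (fun f hf => by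
      obtain ⟨e, he, rfl⟩ := List.mem_map.mp hf
      exact (hGen e he).2.2.1) t z hz
  · intro z
    apply compPush_cover S L (fun e he => (hGen e he).2.2.1) (fun e he => (hGen e he).2.2.2)
    by_cases hz : z ∈ S
    · exact Or.inl hz
    · right
      have := hs hz
      rw [Set.mem_iUnion₂] at this
      obtain ⟨i, hi, hzi⟩ := this
      exact ⟨(F i, V i), by
        rw [hLdef]
        exact List.mem_map.mpr ⟨i, Finset.mem_toList.mpr hi, rfl⟩, hzi⟩


section PhiPsiAll
variable {X : Type*} [TopologicalSpace X] {k : ℕ}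

/-- Restriction of a push to an invariant subset. -/
noncomputable def pushRestrict (P : Push X) (A : Set X)
    (hA : ∀ (t : ℝ) x, x ∈ A → P.K (t, x) ∈ A) : Push ↥A where
  K := ⟨fun q => ⟨P.K (q.1, q.2.1), hA _ _ q.2.2⟩,
    Continuous.subtype_mk (P.K.continuous.comp
      (continuous_fst.prodMk (continuous_subtype_val.comp continuous_snd))) _⟩
  K0 := fun x => Subtype.ext (P.K0 x.1)
  inj := fun t a b h => Subtype.ext (P.inj t (congrArg Subtype.val h))

section PhiPsi

variable (P : Push X) (A : Set X)
  (hA : ∀ (t : ℝ) x, x ∈ A → P.K (t, x) ∈ A)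
  (h1 : ∀ x, P.K (1, x) ∈ A) (y₀ : Fin k → ↥A)

/-- Two-variable version of the path component of `phi`. -/
noncomputable def phiRaw :
    C((homotopyFiber (confToPi X k) (fun i => (y₀ i : X))) × unitInterval, Fin k → ↥A) :=
  ⟨fun q i => ⟨P.K (min 1 (2 - 2 * (q.2 : ℝ)),
      q.1.1.2 (projIcc 0 1 zero_le_one (2 * (q.2 : ℝ))) i), by
    rcases le_or_gt 1 (2 - 2 * (q.2 : ℝ)) with h | h
    · rw [min_eq_left h]
      exact h1 _
    · have h2 : (2 : ℝ) * (q.2 : ℝ) ≥ 1 := by linarith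
      have ht : projIcc (0 : ℝ) 1 zero_le_one (2 * (q.2 : ℝ)) = 1 :=
        projIcc_of_right_le _ h2
      rw [ht, q.1.2.2]
      exact hA _ _ (y₀ i).2⟩, by
    apply continuous_pi; intro i
    refine Continuous.subtype_mk ?_ _
    refine P.K.continuous.comp (Continuous.prodMk ?_ ?_)
    · exact continuous_const.min (continuous_const.sub
        (continuous_const.mul (continuous_subtype_val.comp continuous_snd)))
    · refine (continuous_apply i).comp (continuous_eval.comp (Continuous.prodMk ?_ ?_))
      · exact (continuous_snd.comp continuous_subtype_val).comp continuous_fst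
      · exact (continuous_projIcc (h := zero_le_one)).comp (continuous_const.mul
          (continuous_subtype_val.comp continuous_snd))⟩

/-- The comparison map from the homotopy fiber over `X` to the one over `A`. -/
noncomputable def phi :
    C(homotopyFiber (confToPi X k) (fun i => (y₀ i : X)),
      homotopyFiber (confToPi (↥A) k) y₀) :=
  ⟨fun p => ⟨(⟨fun i => ⟨P.K (1, p.1.1.1 i), h1 _⟩, by
      intro a b hab
      exact p.1.1.2 (P.inj 1 (congrArg Subtype.val hab))⟩,
      (phiRaw P A hA h1 y₀).curry p),
    by
      constructor
      · ext i
        show P.K (min 1 (2 - 2 * ((0 : unitInterval) : ℝ)),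
            p.1.2 (projIcc 0 1 zero_le_one (2 * ((0 : unitInterval) : ℝ))) i) = _
        have ha : min (1:ℝ) (2 - 2 * ((0 : unitInterval) : ℝ)) = 1 := by norm_num
        have hb : projIcc (0:ℝ) 1 zero_le_one (2 * ((0 : unitInterval) : ℝ)) = 0 := by
          apply Subtype.ext; simp [coe_projIcc]
        rw [ha, hb, p.2.1]
        rfl
      · ext i
        show P.K (min 1 (2 - 2 * ((1 : unitInterval) : ℝ)),
            p.1.2 (projIcc 0 1 zero_le_one (2 * ((1 : unitInterval) : ℝ))) i) = _
        have ha : min (1:ℝ) (2 - 2 * ((1 : unitInterval) : ℝ)) = 0 := by norm_num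
        have hb : projIcc (0:ℝ) 1 zero_le_one (2 * ((1 : unitInterval) : ℝ)) = 1 := by
          apply Subtype.ext; simp [coe_projIcc]
        rw [ha, hb, p.2.2, P.K0]⟩,
    by
      refine Continuous.subtype_mk (Continuous.prodMk ?_ ?_) _
      · refine Continuous.subtype_mk (continuous_pi fun i => ?_) _
        refine Continuous.subtype_mk ?_ _
        exact P.K.continuous.comp (continuous_const.prodMk
          ((continuous_apply i).comp (continuous_subtype_val.comp
            (continuous_fst.comp continuous_subtype_val))))
      · exact ((phiRaw P A hA h1 y₀).curry).continuous⟩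

/-- Two-variable version of the path component of `psi`. -/
noncomputable def psiRaw :
    C((homotopyFiber (confToPi (↥A) k) y₀) × unitInterval, Fin k → X) :=
  ⟨fun q i => (q.1.1.2 q.2 i : X), by
    apply continuous_pi; intro i
    have he : Continuous fun q : (homotopyFiber (confToPi (↥A) k) y₀) × unitInterval =>
        q.1.1.2 q.2 :=
      continuous_eval.comp (Continuous.prodMk ((continuous_snd.comp
        continuous_subtype_val).comp continuous_fst) continuous_snd)
    exact continuous_subtype_val.comp ((continuous_apply i).comp he)⟩

/-- The inclusion of homotopy fibers induced by `A ⊆ X`. -/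
noncomputable def psi :
    C(homotopyFiber (confToPi (↥A) k) y₀,
      homotopyFiber (confToPi X k) (fun i => (y₀ i : X))) :=
  ⟨fun q => ⟨(⟨fun i => (q.1.1.1 i : X), fun a b hab =>
      q.1.1.2 (Subtype.val_injective hab)⟩,
      (psiRaw A y₀).curry q),
    by
      constructor
      · ext i
        show ((q.1.2 0 i : ↥A) : X) = _
        rw [q.2.1]
        rfl
      · ext i
        show ((q.1.2 1 i : ↥A) : X) = _
        rw [q.2.2]⟩,
    by
      refine Continuous.subtype_mk (Continuous.prodMk ?_ ?_) _
      · refine Continuous.subtype_mk (continuous_pi fun i => ?_) _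
        exact continuous_subtype_val.comp ((continuous_apply i).comp
          (continuous_subtype_val.comp (continuous_fst.comp continuous_subtype_val)))
      · exact ((psiRaw A y₀).curry).continuous⟩

lemma psi_comp_phi :
    (psi A y₀).comp (phi P A hA h1 y₀) = theta P (fun i => (y₀ i : X)) := rfl

lemma phi_comp_psi :
    (phi P A hA h1 y₀).comp (psi A y₀) = theta (pushRestrict P A hA) y₀ := rfl

end PhiPsi
end PhiPsiAll

end Stmt6

/-- The homotopy fiber of `i_k(M) : F(M,k) → M^k` has the homotopy type of the
homotopy fiber of `i_k(Int(M)) : F(Int(M),k) → Int(M)^k`. -/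
theorem stmt6 (n : ℕ) [NeZero n] (M : Type) [TopologicalSpace M] [T2Space M]
    [SecondCountableTopology M] [CompactSpace M] [ConnectedSpace M]
    [ChartedSpace (EuclideanHalfSpace n) M]
    (hbd : ((mfdInterior n M)ᶜ : Set M).Nonempty)
    (k : ℕ) (hk : 1 ≤ k) (y₀ : Fin k → ↥(mfdInterior n M)) :
    Nonempty (ContinuousMap.HomotopyEquiv
      (homotopyFiber (confToPi M k) (fun i => (y₀ i : M)))
      (homotopyFiber (confToPi (↥(mfdInterior n M)) k) y₀)) := by
  obtain ⟨K, hK0, hKinj, hKint, hK1⟩ := Stmt6.exists_nicePush n M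
  set P : Stmt6.Push M := ⟨K, hK0, hKinj⟩ with hP
  refine ⟨{
    toFun := Stmt6.phi P (mfdInterior n M) hKint hK1 y₀
    invFun := Stmt6.psi (mfdInterior n M) y₀
    left_inv := by
      rw [Stmt6.psi_comp_phi]
      exact Stmt6.theta_homotopic_id P _
    right_inv := by
      rw [Stmt6.phi_comp_psi]
      exact Stmt6.theta_homotopic_id _ _ }⟩
end

section
/- Let M be a nonempty connected compact topological n-dimensional manifold with nonempty boundary, let Int(M) = M − ∂M, and let Q_m be a finite set of m distinct points contained in Int(M). For every integer k ≥ 1 and every choice of basepoints in (Int(M) − Q_m)^k, the homotopy fiber I_{i_k(M − Q_m)} of the inclusion F(M − Q_m, k) → (M − Q_m)^k has the same homotopy type as the homotopy fiber I_{i_k(Int(M) − Q_m)} of the inclusion F(Int(M) − Q_m, k) → (Int(M) − Q_m)^k. -/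
open scoped Topology

namespace Stmt8Aux

open Metric Set

variable {n : ℕ} [NeZero n] {M : Type} [TopologicalSpace M] [T2Space M]

instance : T2Space (EuclideanHalfSpace n) :=
  show T2Space {x : EuclideanSpace ℝ (Fin n) // 0 ≤ x 0} by infer_instance

lemma coord_dist_le (x y : EuclideanSpace ℝ (Fin n)) (i : Fin n) : |x i - y i| ≤ dist x y := by
  rw [EuclideanSpace.dist_eq, ← Real.sqrt_sq_eq_abs]
  refine Real.sqrt_le_sqrt ?_
  have h : (x i - y i) ^ 2 = dist (x i) (y i) ^ 2 := by rw [Real.dist_eq, sq_abs]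
  rw [h]
  exact Finset.single_le_sum (f := fun j => dist (x j) (y j) ^ 2)
    (fun j _ => sq_nonneg _) (Finset.mem_univ i)

lemma mem_mfdInterior_of_chart_pos (e : OpenPartialHomeomorph M (EuclideanHalfSpace n))
    (z : EuclideanHalfSpace n) (hz : z ∈ e.target) (hz0 : 0 < z.1 0) :
    e.symm z ∈ mfdInterior n M := by
  obtain ⟨O, hO, hOpre⟩ : ∃ O, IsOpen O ∧ Subtype.val ⁻¹' O = e.target :=
    isOpen_induced_iff.mp e.open_target
  have hzO : z.1 ∈ O := by rw [← hOpre] at hz; exact hz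
  obtain ⟨r1, hr1, hball1⟩ := Metric.isOpen_iff.mp hO z.1 hzO
  set ρ : ℝ := min r1 (z.1 0) with hρdef
  have hρ : 0 < ρ := lt_min hr1 hz0
  have hρz : ρ ≤ z.1 0 := min_le_right _ _
  have hballpos : ∀ w : EuclideanSpace ℝ (Fin n), w ∈ ball z.1 ρ → 0 < w 0 := by
    intro w hw
    have h1 : |w 0 - z.1 0| ≤ dist w z.1 := coord_dist_le _ _ 0
    have h2 : dist w z.1 < ρ := mem_ball.mp hw
    have h3 : -(ρ) < w 0 - z.1 0 := by
      have := abs_lt.mp (lt_of_le_of_lt h1 h2)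
      exact this.1
    linarith
  set S : Set (EuclideanHalfSpace n) := Subtype.val ⁻¹' (ball z.1 ρ) with hSdef
  have hSopen : IsOpen S := isOpen_ball.preimage continuous_subtype_val
  have hStarget : S ⊆ e.target := by
    rw [← hOpre]
    exact fun w hw => hball1 (ball_subset_ball (min_le_left _ _) hw)
  have hzS : z ∈ S := by
    simp only [hSdef, mem_preimage, mem_ball, dist_self]
    exact hρ
  set U : Set M := e.symm '' S with hUdef
  have hUopen : IsOpen U := by
    rw [hUdef, e.symm_image_eq_source_inter_preimage hStarget]
    exact e.isOpen_inter_preimage hSopen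
  have hmem : e.symm z ∈ U := ⟨z, hzS, rfl⟩
  have hUsub : U ⊆ e.source := by
    rintro u ⟨w, hw, rfl⟩
    exact e.map_target (hStarget hw)
  have hES : ∀ u : M, u ∈ U → e u ∈ S := by
    rintro u ⟨w, hw, rfl⟩
    rw [e.right_inv (hStarget hw)]
    exact hw
  let homeo1 : (U : Set M) ≃ₜ (S : Set (EuclideanHalfSpace n)) :=
  { toFun := fun u => ⟨e u.1, hES u.1 u.2⟩
    invFun := fun s => ⟨e.symm s.1, s.1, s.2, rfl⟩
    left_inv := fun u => Subtype.ext (e.left_inv (hUsub u.2))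
    right_inv := fun s => Subtype.ext (e.right_inv (hStarget s.2))
    continuous_toFun := ((e.continuousOn.mono hUsub).restrict).subtype_mk _
    continuous_invFun := ((e.symm.continuousOn.mono hStarget).restrict).subtype_mk _ }
  let homeo2 : (S : Set (EuclideanHalfSpace n)) ≃ₜ (ball z.1 ρ : Set (EuclideanSpace ℝ (Fin n))) :=
  { toFun := fun w => ⟨w.1.1, w.2⟩
    invFun := fun v => ⟨⟨v.1, (hballpos v.1 v.2).le⟩, v.2⟩
    left_inv := fun w => Subtype.ext (Subtype.ext rfl)
    right_inv := fun v => rfl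
    continuous_toFun := (continuous_subtype_val.comp continuous_subtype_val).subtype_mk _
    continuous_invFun := (continuous_subtype_val.subtype_mk _).subtype_mk _ }
  let homeo3 : (ball z.1 ρ : Set (EuclideanSpace ℝ (Fin n))) ≃ₜ EuclideanSpace ℝ (Fin n) :=
    (Homeomorph.setCongr (OpenPartialHomeomorph.univBall_target z.1 hρ).symm).trans
      ((OpenPartialHomeomorph.univBall z.1 ρ).toHomeomorphSourceTarget.symm.trans
        ((Homeomorph.setCongr (OpenPartialHomeomorph.univBall_source z.1 ρ)).trans
          (Homeomorph.Set.univ (EuclideanSpace ℝ (Fin n)))))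
  exact ⟨U, hUopen, hmem, ⟨homeo1.trans (homeo2.trans homeo3)⟩⟩

lemma chart_coord_eq_zero [ChartedSpace (EuclideanHalfSpace n) M] {p : M}
    (hp : p ∉ mfdInterior n M) : ((chartAt (EuclideanHalfSpace n) p) p).1 0 = 0 := by
  by_contra h
  have h0 : 0 < ((chartAt (EuclideanHalfSpace n) p) p).1 0 :=
    lt_of_le_of_ne ((chartAt (EuclideanHalfSpace n) p) p).2 (Ne.symm h)
  have hmem := mem_mfdInterior_of_chart_pos (chartAt (EuclideanHalfSpace n) p) _
    (OpenPartialHomeomorph.map_source _ (mem_chart_source _ p)) h0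
  rw [OpenPartialHomeomorph.left_inv _ (mem_chart_source _ p)] at hmem
  exact hp hmem

variable [ChartedSpace (EuclideanHalfSpace n) M]

lemma exists_gadget (Q : Set M) (hQfin : Q.Finite) (hQint : Q ⊆ mfdInterior n M)
    {p : M} (hp : p ∉ mfdInterior n M) :
    ∃ (g : C(unitInterval × M, M)) (W : Set M),
      IsOpen W ∧ p ∈ W ∧
      (∀ x, g (0, x) = x) ∧
      (∀ t, Function.Injective (fun x => g (t, x))) ∧
      (∀ t x, g (t, x) = x ∨ g (t, x) ∈ mfdInterior n M) ∧
      (∀ t x, x ∈ mfdInterior n M → g (t, x) ∈ mfdInterior n M) ∧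
      (∀ t q, q ∈ Q → g (t, q) = q) ∧
      (∀ x ∈ W, g (1, x) ∈ mfdInterior n M) := by
  classical
  set c := chartAt (EuclideanHalfSpace n) p with hcdef
  have hps : p ∈ c.source := mem_chart_source _ p
  set z : EuclideanHalfSpace n := c p with hzdef
  have hz0 : z.1 0 = 0 := chart_coord_eq_zero hp
  -- the good open target piece avoiding Q
  set T' : Set (EuclideanHalfSpace n) := c.target \ (c '' (Q ∩ c.source)) with hT'def
  have hT'open : IsOpen T' :=
    c.open_target.sdiff (((hQfin.inter_of_left _).image _).isClosed)
  have hzT' : z ∈ T' := by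
    refine ⟨c.map_source hps, ?_⟩
    rintro ⟨q, ⟨hqQ, hqs⟩, heq⟩
    have : q = p := c.injOn hqs hps heq
    exact hp (hQint (this ▸ hqQ))
  obtain ⟨O, hO, hOpre⟩ : ∃ O, IsOpen O ∧ Subtype.val ⁻¹' O = T' :=
    isOpen_induced_iff.mp hT'open
  have hzO : z.1 ∈ O := by rw [← hOpre] at hzT'; exact hzT'
  obtain ⟨r0, hr0, hball0⟩ := Metric.isOpen_iff.mp hO z.1 hzO
  set r : ℝ := r0 / 2 with hrdef
  have hr : 0 < r := by positivity
  have hball2r : ball z.1 (2 * r) ⊆ O := by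
    have : 2 * r = r0 := by rw [hrdef]; ring
    rw [this]; exact hball0
  have hsub2r : Subtype.val ⁻¹' (ball z.1 (2 * r)) ⊆ T' := by
    rw [← hOpre]; exact preimage_mono hball2r
  -- the bump function
  set μ : EuclideanSpace ℝ (Fin n) → ℝ := fun w => (max 0 (r - dist w z.1)) / 2 with hμdef
  have hμcont : Continuous μ := by
    apply Continuous.div_const
    exact continuous_const.max (continuous_const.sub (continuous_id.dist continuous_const))
  have hμ0 : ∀ w, 0 ≤ μ w := fun w => by
    simp only [hμdef]; positivity
  have hμpos : ∀ w, dist w z.1 < r → 0 < μ w := fun w hw => by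
    simp only [hμdef]
    have : 0 < r - dist w z.1 := by linarith
    have h2 : max 0 (r - dist w z.1) = r - dist w z.1 := max_eq_right this.le
    rw [h2]; linarith
  have hμzero : ∀ w, ¬ dist w z.1 < r → μ w = 0 := fun w hw => by
    simp only [hμdef]
    have : r - dist w z.1 ≤ 0 := by push_neg at hw; linarith
    rw [max_eq_left this]; norm_num
  have hμle : ∀ w, 0 < μ w → μ w ≤ (r - dist w z.1) / 2 := fun w hw => by
    by_cases h : dist w z.1 < r
    · simp only [hμdef]
      have h2 : max 0 (r - dist w z.1) = r - dist w z.1 := max_eq_right (by linarith)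
      rw [h2]
    · exact absurd (hμzero w h) (by linarith)
  have hμlip : ∀ w v, |μ w - μ v| ≤ dist w v / 2 := by
    intro w v
    have h1 : |max (r - dist w z.1) 0 - max (r - dist v z.1) 0|
        ≤ |(r - dist w z.1) - (r - dist v z.1)| := abs_max_sub_max_le_abs _ _ _
    have h2 : |(r - dist w z.1) - (r - dist v z.1)| = |dist v z.1 - dist w z.1| := by
      congr 1; ring
    have h3 : |dist v z.1 - dist w z.1| ≤ dist v w := abs_dist_sub_le _ _ _
    simp only [hμdef]
    rw [max_comm 0 (r - dist w z.1), max_comm 0 (r - dist v z.1), div_sub_div_same, abs_div]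
    have : |(2:ℝ)| = 2 := by norm_num
    rw [this]
    have := h1.trans (h2 ▸ h3)
    rw [dist_comm v w] at this
    linarith
  -- the direction vector
  set e0 : EuclideanSpace ℝ (Fin n) := EuclideanSpace.single (0 : Fin n) (1 : ℝ) with he0def
  have hcoord0 : ∀ (w : EuclideanSpace ℝ (Fin n)) (a : ℝ), (w + a • e0) 0 = w 0 + a := by
    intro w a
    rw [he0def, PiLp.add_apply, PiLp.smul_apply, EuclideanSpace.single_apply]
    simp
  have hcoordi : ∀ (w : EuclideanSpace ℝ (Fin n)) (a : ℝ) (i : Fin n), i ≠ 0 →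
      (w + a • e0) i = w i := by
    intro w a i hi
    rw [he0def, PiLp.add_apply, PiLp.smul_apply, EuclideanSpace.single_apply]
    simp [hi]
  have hdist_add : ∀ (w : EuclideanSpace ℝ (Fin n)) (a : ℝ), dist (w + a • e0) w = |a| := by
    intro w a
    rw [dist_eq_norm, add_sub_cancel_left, norm_smul, he0def, EuclideanSpace.norm_single]
    simp [Real.norm_eq_abs]
  -- the push map on the half-space
  have hPmem : ∀ (t : unitInterval) (w : EuclideanHalfSpace n),
      0 ≤ (w.1 + ((t : ℝ) * μ w.1) • e0) 0 := by
    intro t w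
    rw [hcoord0]
    exact add_nonneg w.2 (mul_nonneg t.2.1 (hμ0 _))
  set P : unitInterval × EuclideanHalfSpace n → EuclideanHalfSpace n :=
    fun tw => ⟨tw.2.1 + ((tw.1 : ℝ) * μ tw.2.1) • e0, hPmem tw.1 tw.2⟩ with hPdef
  have hPcont : Continuous P := by
    apply Continuous.subtype_mk
    apply Continuous.add
    · exact continuous_subtype_val.comp continuous_snd
    · apply Continuous.fun_smul
      · apply Continuous.mul
        · exact continuous_subtype_val.comp continuous_fst
        · exact hμcont.comp (continuous_subtype_val.comp continuous_snd)
      · exact continuous_const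
  have hP0 : ∀ w, P (0, w) = w := by
    intro w; apply Subtype.ext
    simp [hPdef]
  have hPfix : ∀ (t : unitInterval) w, μ w.1 = 0 → P (t, w) = w := by
    intro t w hw; apply Subtype.ext
    simp [hPdef, hw]
  have hPball : ∀ (t : unitInterval) (w : EuclideanHalfSpace n), 0 < μ w.1 →
      dist (P (t, w)).1 z.1 < 2 * r := by
    intro t w hw
    have h1 : dist (P (t, w)).1 z.1 ≤ dist (P (t, w)).1 w.1 + dist w.1 z.1 := dist_triangle _ _ _
    have h2 : dist (P (t, w)).1 w.1 = |(t : ℝ) * μ w.1| := hdist_add _ _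
    have h3 : |(t : ℝ) * μ w.1| ≤ μ w.1 := by
      rw [abs_of_nonneg (mul_nonneg t.2.1 (hμ0 _))]
      calc (t : ℝ) * μ w.1 ≤ 1 * μ w.1 := mul_le_mul_of_nonneg_right t.2.2 (hμ0 _)
        _ = μ w.1 := one_mul _
    have h4 := hμle w.1 hw
    have h5 : 0 < r - dist w.1 z.1 := by
      by_contra h
      exact absurd (hμzero w.1 (by push_neg at h ⊢; linarith)) (by linarith)
    calc dist (P (t, w)).1 z.1 ≤ |(t : ℝ) * μ w.1| + dist w.1 z.1 := by rw [← h2]; exact h1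
      _ ≤ μ w.1 + dist w.1 z.1 := by linarith
      _ ≤ (r - dist w.1 z.1) / 2 + dist w.1 z.1 := by linarith
      _ < 2 * r := by linarith
  have hPT' : ∀ (t : unitInterval) (w : EuclideanHalfSpace n), 0 < μ w.1 → P (t, w) ∈ T' := by
    intro t w hw
    exact hsub2r (mem_ball.mpr (hPball t w hw))
  have hPtarget : ∀ (t : unitInterval) (w : EuclideanHalfSpace n), w ∈ c.target →
      P (t, w) ∈ c.target := by
    intro t w hw
    rcases (hμ0 w.1).eq_or_lt with h | h
    · rw [hPfix t w h.symm]; exact hw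
    · exact (hPT' t w h).1
  -- distance collapse lemma
  have hdist_le : ∀ w v : EuclideanSpace ℝ (Fin n), (∀ i : Fin n, i ≠ 0 → w i = v i) →
      dist w v ≤ |w 0 - v 0| := by
    intro w v hwv
    rw [EuclideanSpace.dist_eq]
    have hsum : ∑ i, dist (w i) (v i) ^ 2 = dist (w 0) (v 0) ^ 2 := by
      apply Finset.sum_eq_single_of_mem (0 : Fin n) (Finset.mem_univ _)
      intro i _ hi
      rw [hwv i hi, dist_self]
      norm_num
    rw [hsum, Real.dist_eq, Real.sqrt_sq_eq_abs, abs_abs]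
  have hPinj : ∀ t : unitInterval, Function.Injective (fun w => P (t, w)) := by
    intro t w v h
    have hval : w.1 + ((t : ℝ) * μ w.1) • e0 = v.1 + ((t : ℝ) * μ v.1) • e0 :=
      Subtype.ext_iff.mp h
    have hco : ∀ i : Fin n, i ≠ 0 → w.1 i = v.1 i := by
      intro i hi
      have := congrArg (fun x : EuclideanSpace ℝ (Fin n) => x i) hval
      simpa [hcoordi _ _ _ hi] using this
    have h0 : w.1 0 + (t : ℝ) * μ w.1 = v.1 0 + (t : ℝ) * μ v.1 := by
      have := congrArg (fun x : EuclideanSpace ℝ (Fin n) => x 0) hval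
      simpa [hcoord0] using this
    have hd : dist w.1 v.1 ≤ |w.1 0 - v.1 0| := hdist_le _ _ hco
    have habs : |w.1 0 - v.1 0| = |(t : ℝ)| * |μ w.1 - μ v.1| := by
      have hh : w.1 0 - v.1 0 = -((t : ℝ) * (μ w.1 - μ v.1)) := by linear_combination h0
      rw [hh, abs_neg, abs_mul]
    have ht1 : |(t : ℝ)| ≤ 1 := by rw [abs_of_nonneg t.2.1]; exact t.2.2
    have hlip := hμlip w.1 v.1
    have hz : |w.1 0 - v.1 0| = 0 := by
      have h1 : |w.1 0 - v.1 0| ≤ |μ w.1 - μ v.1| := by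
        rw [habs]
        calc |(t : ℝ)| * |μ w.1 - μ v.1| ≤ 1 * |μ w.1 - μ v.1| :=
          mul_le_mul_of_nonneg_right ht1 (abs_nonneg _)
          _ = _ := one_mul _
      have h2 : |μ w.1 - μ v.1| ≤ |w.1 0 - v.1 0| / 2 := hlip.trans (by linarith)
      have := abs_nonneg (w.1 0 - v.1 0)
      linarith
    have h00 : w.1 0 = v.1 0 := by
      have := abs_eq_zero.mp hz
      linarith
    apply Subtype.ext
    apply PiLp.ext; intro i
    by_cases hi : i = 0
    · rw [hi]; exact h00
    · exact hco i hi
  -- the gadget map on M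
  set gfun : unitInterval × M → M :=
    fun tx => if h : tx.2 ∈ c.source then c.symm (P (tx.1, c tx.2)) else tx.2 with hgdef
  have hgsrc : ∀ (t : unitInterval) (x : M) (_ : x ∈ c.source),
      gfun (t, x) = c.symm (P (t, c x)) := by
    intro t x hx; rw [hgdef]; exact dif_pos hx
  have hgnot : ∀ (t : unitInterval) (x : M) (_ : x ∉ c.source), gfun (t, x) = x := by
    intro t x hx; rw [hgdef]; exact dif_neg hx
  have hginsrc : ∀ (t : unitInterval) (x : M), x ∈ c.source → gfun (t, x) ∈ c.source := by
    intro t x hx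
    rw [hgsrc t x hx]
    exact c.map_target (hPtarget t _ (c.map_source hx))
  have hg0 : ∀ x, gfun (0, x) = x := by
    intro x
    by_cases hx : x ∈ c.source
    · rw [hgsrc 0 x hx, hP0, c.left_inv hx]
    · exact hgnot 0 x hx
  have hgfix : ∀ (t : unitInterval) (x : M), x ∈ c.source → μ (c x).1 = 0 → gfun (t, x) = x := by
    intro t x hx hμx
    rw [hgsrc t x hx, hPfix t _ hμx, c.left_inv hx]
  have hgmoved : ∀ (t : unitInterval) (x : M), x ∈ c.source → 0 < (t : ℝ) * μ (c x).1 →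
      gfun (t, x) ∈ mfdInterior n M := by
    intro t x hx htμ
    rw [hgsrc t x hx]
    refine mem_mfdInterior_of_chart_pos c _ (hPtarget t _ (c.map_source hx)) ?_
    show 0 < ((c x).1 + ((t : ℝ) * μ (c x).1) • e0) 0
    rw [hcoord0]
    have h2 := (c x).2
    linarith
  have hgfix_or : ∀ (t : unitInterval) (x : M), gfun (t, x) = x ∨ gfun (t, x) ∈ mfdInterior n M := by
    intro t x
    by_cases hx : x ∈ c.source
    · rcases eq_or_lt_of_le (mul_nonneg t.2.1 (hμ0 (c x).1)) with h | h
      · left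
        rcases mul_eq_zero.mp h.symm with ht | hμx
        · have ht0 : t = 0 := Subtype.ext ht
          rw [ht0]; exact hg0 x
        · exact hgfix t x hx hμx
      · right; exact hgmoved t x hx h
    · left; exact hgnot t x hx
  have hgint : ∀ (t : unitInterval) (x : M), x ∈ mfdInterior n M →
      gfun (t, x) ∈ mfdInterior n M := by
    intro t x hx
    rcases hgfix_or t x with h | h
    · rw [h]; exact hx
    · exact h
  have hgQ : ∀ (t : unitInterval) (q : M), q ∈ Q → gfun (t, q) = q := by
    intro t q hq
    by_cases hqs : q ∈ c.source
    · refine hgfix t q hqs ?_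
      by_contra hμq
      have hlt : dist (c q).1 z.1 < r := by
        by_contra hge
        exact hμq (hμzero _ hge)
      have hmem : (c q : EuclideanHalfSpace n) ∈ T' := hsub2r (by
        simp only [mem_preimage]
        exact mem_ball.mpr (hlt.trans_le (by linarith)))
      exact hmem.2 ⟨q, ⟨hq, hqs⟩, rfl⟩
    · exact hgnot t q hqs
  have hginj : ∀ t : unitInterval, Function.Injective (fun x => gfun (t, x)) := by
    intro t a b hab
    simp only at hab
    by_cases ha : a ∈ c.source <;> by_cases hb : b ∈ c.source
    · rw [hgsrc t a ha, hgsrc t b hb] at hab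
      have hPa := hPtarget t _ (c.map_source ha)
      have hPb := hPtarget t _ (c.map_source hb)
      have h1 : P (t, c a) = P (t, c b) :=
        c.symm.injOn (by rwa [OpenPartialHomeomorph.symm_source])
          (by rwa [OpenPartialHomeomorph.symm_source]) hab
      have h2 : (c a : EuclideanHalfSpace n) = c b := hPinj t h1
      exact c.injOn ha hb h2
    · exfalso
      have h1 : gfun (t, a) ∈ c.source := hginsrc t a ha
      rw [hab, hgnot t b hb] at h1
      exact hb h1
    · exfalso
      have h1 : gfun (t, b) ∈ c.source := hginsrc t b hb
      rw [← hab, hgnot t a ha] at h1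
      exact ha h1
    · rw [hgnot t a ha, hgnot t b hb] at hab; exact hab
  -- compact support and continuity
  set K : Set M := c.symm '' (Subtype.val ⁻¹' (closedBall z.1 r)) with hKdef
  have hcb_sub : (Subtype.val ⁻¹' (closedBall z.1 r) : Set (EuclideanHalfSpace n)) ⊆ c.target := by
    intro w hw
    have h2 : w ∈ Subtype.val ⁻¹' (ball z.1 (2 * r)) := by
      simp only [mem_preimage] at hw ⊢
      exact lt_of_le_of_lt (mem_closedBall.mp hw) (by linarith)
    exact (hsub2r h2).1
  have hcoordcont : Continuous (fun x : EuclideanSpace ℝ (Fin n) => x 0) := by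
    have hlip : LipschitzWith 1 (fun x : EuclideanSpace ℝ (Fin n) => x 0) := by
      apply LipschitzWith.of_dist_le_mul
      intro x y
      rw [Real.dist_eq, NNReal.coe_one, one_mul]
      exact coord_dist_le x y 0
    exact hlip.continuous
  have hKcompact : IsCompact K := by
    have h1 : IsCompact (Subtype.val ⁻¹' (closedBall z.1 r) : Set (EuclideanHalfSpace n)) := by
      rw [Subtype.isCompact_iff, Set.image_preimage_eq_inter_range]
      apply (isCompact_closedBall _ _).inter_right
      rw [Subtype.range_coe_subtype]
      exact isClosed_le continuous_const hcoordcont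
    exact h1.image_of_continuousOn (c.symm.continuousOn.mono hcb_sub)
  have hKsub : K ⊆ c.source := by
    rintro x ⟨w, hw, rfl⟩; exact c.map_target (hcb_sub hw)
  have hgcont : Continuous gfun := by
    rw [continuous_iff_continuousAt]
    rintro ⟨t, x⟩
    by_cases hx : x ∈ c.source
    · have hopen : IsOpen (Prod.snd ⁻¹' c.source : Set (unitInterval × M)) :=
        c.open_source.preimage continuous_snd
      have hmain : ContinuousOn (fun tx : unitInterval × M => c.symm (P (tx.1, c tx.2)))
          (Prod.snd ⁻¹' c.source) := by
        apply c.symm.continuousOn.comp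
        · apply hPcont.comp_continuousOn
          apply ContinuousOn.prodMk
          · exact continuous_fst.continuousOn
          · exact c.continuousOn.comp continuous_snd.continuousOn (fun tx htx => htx)
        · intro tx htx
          exact hPtarget tx.1 _ (c.map_source htx)
      have heq : Set.EqOn gfun (fun tx : unitInterval × M => c.symm (P (tx.1, c tx.2)))
          (Prod.snd ⁻¹' c.source) := by
        rintro ⟨t', x'⟩ htx; exact hgsrc t' x' htx
      exact (hmain.congr heq).continuousAt (hopen.mem_nhds hx)
    · have hxK : x ∉ K := fun hK => hx (hKsub hK)
      have hopen : IsOpen (Prod.snd ⁻¹' Kᶜ : Set (unitInterval × M)) :=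
        hKcompact.isClosed.isOpen_compl.preimage continuous_snd
      have heq : Set.EqOn gfun (fun tx : unitInterval × M => tx.2)
          (Prod.snd ⁻¹' Kᶜ : Set (unitInterval × M)) := by
        rintro ⟨t', x'⟩ htx
        by_cases hx' : x' ∈ c.source
        · apply hgfix t' x' hx'
          by_contra hμx
          have hlt : dist (c x').1 z.1 < r := by
            by_contra hge; exact hμx (hμzero _ hge)
          have hK : x' ∈ K := by
            refine ⟨c x', ?_, c.left_inv hx'⟩
            simp only [mem_preimage]
            exact mem_closedBall.mpr hlt.le
          exact htx hK
        · exact hgnot t' x' hx'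
      exact (continuous_snd.continuousOn.congr heq).continuousAt (hopen.mem_nhds hxK)
  -- the covering neighborhood
  set W : Set M := c.symm '' (Subtype.val ⁻¹' (ball z.1 r)) with hWdef
  have hWsub : (Subtype.val ⁻¹' (ball z.1 r) : Set (EuclideanHalfSpace n)) ⊆ c.target := by
    intro w hw
    apply hcb_sub
    simp only [mem_preimage] at hw ⊢
    exact ball_subset_closedBall hw
  have hWopen : IsOpen W := by
    rw [hWdef, c.symm_image_eq_source_inter_preimage hWsub]
    exact c.isOpen_inter_preimage (isOpen_ball.preimage continuous_subtype_val)
  have hpW : p ∈ W := by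
    refine ⟨z, ?_, c.left_inv hps⟩
    simp only [mem_preimage, mem_ball, dist_self]
    exact hr
  have hone : ((1 : unitInterval) : ℝ) = 1 := rfl
  have hmove : ∀ x ∈ W, gfun (1, x) ∈ mfdInterior n M := by
    rintro x ⟨w, hw, rfl⟩
    have hws : c.symm w ∈ c.source := c.map_target (hWsub hw)
    have hcw : c (c.symm w) = w := c.right_inv (hWsub hw)
    apply hgmoved 1 _ hws
    rw [hcw, hone, one_mul]
    simp only [mem_preimage] at hw
    exact hμpos w.1 (mem_ball.mp hw)
  exact ⟨⟨gfun, hgcont⟩, W, hWopen, hpW, hg0, hginj, hgfix_or, hgint, hgQ, hmove⟩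

lemma isOpen_mfdInterior' : IsOpen (mfdInterior n M) := by
  apply isOpen_iff_forall_mem_open.mpr
  rintro x ⟨U, hU, hxU, hne⟩
  exact ⟨U, fun y hy => ⟨U, hU, hy, hne⟩, hU, hxU⟩

lemma exists_squeeze [CompactSpace M] (Q : Set M) (hQfin : Q.Finite)
    (hQint : Q ⊆ mfdInterior n M) :
    ∃ G : C(unitInterval × M, M),
      (∀ x, G (0, x) = x) ∧
      (∀ t, Function.Injective (fun x => G (t, x))) ∧
      (∀ t x, x ∈ mfdInterior n M → G (t, x) ∈ mfdInterior n M) ∧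
      (∀ t q, q ∈ Q → G (t, q) = q) ∧
      (∀ x, G (1, x) ∈ mfdInterior n M) := by
  classical
  set B : Set M := (mfdInterior n M)ᶜ with hBdef
  have hBcompact : IsCompact B := (isOpen_mfdInterior'.isClosed_compl).isCompact
  choose g W hWopen hpW hg0 hginj hgfix_or hgint hgQ hgmove using
    fun p : ↥B => exists_gadget Q hQfin hQint p.2
  have hcover : B ⊆ ⋃ p : ↥B, W p := fun x hx => Set.mem_iUnion.mpr ⟨⟨x, hx⟩, hpW ⟨x, hx⟩⟩
  obtain ⟨s, hs⟩ := hBcompact.elim_finite_subcover W hWopen hcover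
  have key : ∀ s : Finset ↥B, ∃ G : C(unitInterval × M, M),
      (∀ x, G (0, x) = x) ∧
      (∀ t, Function.Injective (fun x => G (t, x))) ∧
      (∀ t x, G (t, x) = x ∨ G (t, x) ∈ mfdInterior n M) ∧
      (∀ t x, x ∈ mfdInterior n M → G (t, x) ∈ mfdInterior n M) ∧
      (∀ t q, q ∈ Q → G (t, q) = q) ∧
      (∀ x ∈ ⋃ p ∈ s, W p, G (1, x) ∈ mfdInterior n M) := by
    intro s
    induction s using Finset.induction_on with
    | empty =>
      refine ⟨⟨Prod.snd, continuous_snd⟩, fun x => rfl, fun t a b hab => hab,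
        fun t x => Or.inl rfl, fun t x hx => hx, fun t q _ => rfl, ?_⟩
      intro x hx
      simp at hx
    | insert _ _ ha ih =>
      obtain ⟨Gs, hGs0, hGsinj, hGsfix_or, hGsint, hGsQ, hGsmove⟩ := ih
      rename_i a s'
      refine ⟨⟨fun tx => Gs (tx.1, (g a) (tx.1, tx.2)),
        Gs.continuous.comp (continuous_fst.prodMk ((g a).continuous))⟩, ?_, ?_, ?_, ?_, ?_, ?_⟩
      · intro x
        show Gs (0, (g a) (0, x)) = x
        rw [hg0 a x, hGs0 x]
      · intro t x y hxy
        simp only [ContinuousMap.coe_mk] at hxy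
        exact hginj a t (hGsinj t hxy)
      · intro t x
        show Gs (t, (g a) (t, x)) = x ∨ Gs (t, (g a) (t, x)) ∈ mfdInterior n M
        rcases hgfix_or a t x with h | h
        · rw [h]; exact hGsfix_or t x
        · exact Or.inr (hGsint t _ h)
      · intro t x hx
        exact hGsint t _ (hgint a t x hx)
      · intro t q hq
        show Gs (t, (g a) (t, q)) = q
        rw [hgQ a t q hq, hGsQ t q hq]
      · intro x hx
        show Gs (1, (g a) (1, x)) ∈ mfdInterior n M
        rcases Set.mem_iUnion₂.mp hx with ⟨p, hp, hxp⟩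
        rcases Finset.mem_insert.mp hp with rfl | hp'
        · exact hGsint 1 _ (hgmove p x hxp)
        · rcases hgfix_or a 1 x with h | h
          · rw [h]
            exact hGsmove x (Set.mem_iUnion₂.mpr ⟨p, hp', hxp⟩)
          · exact hGsint 1 _ h
  obtain ⟨G, hG0, hGinj, _, hGint, hGQ, hGmove⟩ := key s
  refine ⟨G, hG0, hGinj, hGint, hGQ, ?_⟩
  intro x
  by_cases hx : x ∈ mfdInterior n M
  · exact hGint 1 x hx
  · exact hGmove x (hs hx)

noncomputable def tA (s t : unitInterval) : unitInterval :=
  Set.projIcc 0 1 zero_le_one (min (s : ℝ) (2 - 2 * (t : ℝ)))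

noncomputable def tB (s t : unitInterval) : unitInterval :=
  Set.projIcc 0 1 zero_le_one ((1 + (s : ℝ)) * (t : ℝ))

lemma tA_cont : Continuous fun st : unitInterval × unitInterval => tA st.1 st.2 := by
  apply continuous_projIcc.comp
  exact (continuous_subtype_val.comp continuous_fst).min
    (continuous_const.sub (continuous_const.mul (continuous_subtype_val.comp continuous_snd)))

lemma tB_cont : Continuous fun st : unitInterval × unitInterval => tB st.1 st.2 := by
  apply continuous_projIcc.comp
  exact (continuous_const.add (continuous_subtype_val.comp continuous_fst)).mul
    (continuous_subtype_val.comp continuous_snd)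

lemma tA_zero_right (s : unitInterval) : tA s 0 = s := by
  unfold tA
  have h1 : ((0 : unitInterval) : ℝ) = 0 := rfl
  rw [h1]
  have h2 : min (s : ℝ) (2 - 2 * 0) = (s : ℝ) := min_eq_left (by nlinarith [s.2.2])
  rw [h2, Set.projIcc_of_mem zero_le_one s.2]

lemma tA_one_right (s : unitInterval) : tA s 1 = 0 := by
  unfold tA
  have h1 : ((1 : unitInterval) : ℝ) = 1 := rfl
  rw [h1]
  have h2 : min (s : ℝ) (2 - 2 * 1) = 0 := by
    rw [show (2 : ℝ) - 2 * 1 = 0 by ring]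
    exact min_eq_right s.2.1
  rw [h2, Set.projIcc_of_mem zero_le_one (by norm_num : (0:ℝ) ∈ Set.Icc (0:ℝ) 1)]
  rfl

lemma tA_zero_left (t : unitInterval) : tA 0 t = 0 := by
  unfold tA
  have h1 : ((0 : unitInterval) : ℝ) = 0 := rfl
  rw [h1]
  have h2 : min (0 : ℝ) (2 - 2 * (t : ℝ)) = 0 := min_eq_left (by nlinarith [t.2.2])
  rw [h2, Set.projIcc_of_mem zero_le_one (by norm_num : (0:ℝ) ∈ Set.Icc (0:ℝ) 1)]
  rfl

lemma tB_zero_right (s : unitInterval) : tB s 0 = 0 := by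
  unfold tB
  have h1 : ((0 : unitInterval) : ℝ) = 0 := rfl
  rw [h1, mul_zero, Set.projIcc_of_mem zero_le_one (by norm_num : (0:ℝ) ∈ Set.Icc (0:ℝ) 1)]
  rfl

lemma tB_one_right (s : unitInterval) : tB s 1 = 1 := by
  unfold tB
  have h1 : ((1 : unitInterval) : ℝ) = 1 := rfl
  rw [h1, mul_one, Set.projIcc_of_right_le zero_le_one (by nlinarith [s.2.1])]
  rfl

lemma tB_zero_left (t : unitInterval) : tB 0 t = t := by
  unfold tB
  have h1 : ((0 : unitInterval) : ℝ) = 0 := rfl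
  rw [h1, add_zero, one_mul, Set.projIcc_of_mem zero_le_one t.2]

lemma tAB_one (t : unitInterval) : tA 1 t = 1 ∨ tB 1 t = 1 := by
  by_cases h : (t : ℝ) ≤ 1 / 2
  · left
    unfold tA
    have h1 : ((1 : unitInterval) : ℝ) = 1 := rfl
    rw [h1]
    have h2 : min (1 : ℝ) (2 - 2 * (t : ℝ)) = 1 := min_eq_left (by linarith)
    rw [h2, Set.projIcc_of_mem zero_le_one (by norm_num : (1:ℝ) ∈ Set.Icc (0:ℝ) 1)]
    rfl
  · right
    unfold tB
    have h1 : ((1 : unitInterval) : ℝ) = 1 := rfl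
    rw [h1, Set.projIcc_of_right_le zero_le_one (by push_neg at h; linarith)]
    rfl

section Generic

variable {Z : Type} [TopologicalSpace Z] {k : ℕ} (yb : Fin k → Z)
variable (G : C(unitInterval × Z, Z))

/-- The master two-parameter family of paths. -/
noncomputable def master :
    C((unitInterval × homotopyFiber (confToPi Z k) yb) × unitInterval, Fin k → Z) := by
  refine ⟨fun q i => G (tA q.1.1 q.2, (q.1.2.1.2 (tB q.1.1 q.2)) i), ?_⟩
  apply continuous_pi
  intro i
  apply G.continuous.comp
  apply Continuous.prodMk
  · exact tA_cont.comp ((continuous_fst.comp continuous_fst).prodMk continuous_snd)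
  · refine (continuous_apply i).comp ?_
    refine continuous_eval.comp (Continuous.prodMk ?_ ?_)
    · exact continuous_snd.comp (continuous_subtype_val.comp (continuous_snd.comp continuous_fst))
    · exact tB_cont.comp ((continuous_fst.comp continuous_fst).prodMk continuous_snd)

variable (h0 : ∀ z, G (0, z) = z) (hinj : ∀ t, Function.Injective fun z => G (t, z))

/-- The squeezing self-homotopy of a homotopy fiber. -/
noncomputable def bigH :
    C(unitInterval × homotopyFiber (confToPi Z k) yb, homotopyFiber (confToPi Z k) yb) := by
  refine ⟨fun sx => ⟨(⟨fun i => G (sx.1, sx.2.1.1.1 i), ?_⟩, (master yb G).curry sx), ?_, ?_⟩, ?_⟩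
  · -- injectivity
    intro i j hij
    exact sx.2.1.1.2 (hinj sx.1 hij)
  · -- starting point condition
    funext i
    show G (tA sx.1 0, sx.2.1.2 (tB sx.1 0) i) = _
    rw [tA_zero_right, tB_zero_right]
    have h := congrFun sx.2.2.1 i
    show G (sx.1, sx.2.1.2 0 i) = _
    rw [h]
    rfl
  · -- end point condition
    funext i
    show G (tA sx.1 1, sx.2.1.2 (tB sx.1 1) i) = yb i
    rw [tA_one_right, tB_one_right]
    have h := congrFun sx.2.2.2 i
    rw [h, h0]
  · -- continuity
    apply Continuous.subtype_mk
    apply Continuous.prodMk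
    · apply Continuous.subtype_mk
      apply continuous_pi
      intro i
      apply G.continuous.comp
      apply Continuous.prodMk
      · exact continuous_fst
      · exact (continuous_apply i).comp (continuous_subtype_val.comp
          (continuous_fst.comp (continuous_subtype_val.comp continuous_snd)))
    · exact ((master yb G).curry).continuous

lemma bigH_zero (x : homotopyFiber (confToPi Z k) yb) : bigH yb G h0 hinj (0, x) = x := by
  apply Subtype.ext
  apply Prod.ext
  · apply Subtype.ext
    funext i
    exact h0 _
  · apply ContinuousMap.ext
    intro t
    funext i
    show G (tA 0 t, x.1.2 (tB 0 t) i) = x.1.2 t i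
    rw [tA_zero_left, tB_zero_left, h0]

lemma bigH_one_fst (x : homotopyFiber (confToPi Z k) yb) (i : Fin k) :
    ((bigH yb G h0 hinj (1, x)).1.1.1 i) = G (1, x.1.1.1 i) := rfl

lemma bigH_one_snd (x : homotopyFiber (confToPi Z k) yb) (t : unitInterval) (i : Fin k) :
    ((bigH yb G h0 hinj (1, x)).1.2 t i) = G (tA 1 t, x.1.2 (tB 1 t) i) := rfl

end Generic

section Main

variable {Z : Type} [TopologicalSpace Z]

set_option maxHeartbeats 1000000 in
set_option synthInstance.maxHeartbeats 1000000 in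
theorem main_equiv (S T : Set Z) (hTS : T ⊆ S) (G : C(unitInterval × Z, Z))
    (hG0 : ∀ x, G (0, x) = x)
    (hGinj : ∀ t : unitInterval, Function.Injective fun x => G (t, x))
    (hGS : ∀ (t : unitInterval) x, x ∈ S → G (t, x) ∈ S)
    (hGT : ∀ (t : unitInterval) x, x ∈ T → G (t, x) ∈ T)
    (hG1 : ∀ x, x ∈ S → G (1, x) ∈ T)
    {k : ℕ} (y₀ : Fin k → ↥T) :
    Nonempty (ContinuousMap.HomotopyEquiv
      (homotopyFiber (confToPi (↥S) k) (fun i => ⟨(y₀ i : Z), hTS (y₀ i).2⟩))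
      (homotopyFiber (confToPi (↥T) k) y₀)) := by
  classical
  set ybX : Fin k → ↥S := fun i => ⟨(y₀ i : Z), hTS (y₀ i).2⟩ with hybXdef
  set GX : C(unitInterval × ↥S, ↥S) :=
    ⟨fun tx => ⟨G (tx.1, tx.2.1), hGS tx.1 tx.2.1 tx.2.2⟩,
      (G.continuous.comp (continuous_fst.prodMk
        (continuous_subtype_val.comp continuous_snd))).subtype_mk _⟩ with hGXdef
  set GA : C(unitInterval × ↥T, ↥T) :=
    ⟨fun tx => ⟨G (tx.1, tx.2.1), hGT tx.1 tx.2.1 tx.2.2⟩,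
      (G.continuous.comp (continuous_fst.prodMk
        (continuous_subtype_val.comp continuous_snd))).subtype_mk _⟩ with hGAdef
  have h0X : ∀ x, GX (0, x) = x := fun x => Subtype.ext (hG0 x.1)
  have h0A : ∀ x, GA (0, x) = x := fun x => Subtype.ext (hG0 x.1)
  have hinjX : ∀ t, Function.Injective fun x : ↥S => GX (t, x) := by
    intro t a b hab
    exact Subtype.ext (hGinj t (Subtype.ext_iff.mp hab))
  have hinjA : ∀ t, Function.Injective fun x : ↥T => GA (t, x) := by
    intro t a b hab
    exact Subtype.ext (hGinj t (Subtype.ext_iff.mp hab))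
  -- the inclusion-induced map Phi : HF_A → HF_X
  set masterPhi : C(homotopyFiber (confToPi (↥T) k) y₀ × unitInterval, Fin k → ↥S) :=
    ⟨fun q i => ⟨(q.1.1.2 q.2 i).1, hTS (q.1.1.2 q.2 i).2⟩, by
      apply continuous_pi
      intro i
      apply Continuous.subtype_mk
      refine continuous_subtype_val.comp ((continuous_apply i).comp ?_)
      refine continuous_eval.comp (Continuous.prodMk ?_ ?_)
      · exact continuous_snd.comp (continuous_subtype_val.comp continuous_fst)
      · exact continuous_snd⟩ with hmasterPhidef
  set Phi : C(homotopyFiber (confToPi (↥T) k) y₀,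
      homotopyFiber (confToPi (↥S) k) ybX) :=
    ⟨fun x => ⟨(⟨fun i => ⟨(x.1.1.1 i).1, hTS (x.1.1.1 i).2⟩, by
        intro i j hij
        have h2 : ((x.1.1.1 i : ↥T) : Z) = ((x.1.1.1 j : ↥T) : Z) :=
          congrArg (fun w : ↥S => (w : Z)) hij
        exact x.1.1.2 (Subtype.ext h2)⟩, masterPhi.curry x), by
        funext i
        apply Subtype.ext
        show (x.1.2 0 i).1 = (x.1.1.1 i).1
        exact congrArg Subtype.val (congrFun x.2.1 i), by
        funext i
        apply Subtype.ext
        show (x.1.2 1 i).1 = (y₀ i).1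
        exact congrArg Subtype.val (congrFun x.2.2 i)⟩, by
      apply Continuous.subtype_mk
      apply Continuous.prodMk
      · apply Continuous.subtype_mk
        apply continuous_pi
        intro i
        apply Continuous.subtype_mk
        exact continuous_subtype_val.comp ((continuous_apply i).comp
          (continuous_subtype_val.comp (continuous_fst.comp continuous_subtype_val)))
      · exact (masterPhi.curry).continuous⟩ with hPhidef
  -- the squeeze-induced map Psi : HF_X → HF_A
  have hmemA : ∀ (x : homotopyFiber (confToPi (↥S) k) ybX) (t : unitInterval) (i : Fin k),
      G (tA 1 t, (x.1.2 (tB 1 t) i).1) ∈ T := by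
    intro x t i
    rcases tAB_one t with h | h
    · rw [h]
      exact hG1 _ (x.1.2 (tB 1 t) i).2
    · rw [h]
      rw [show x.1.2 1 i = ybX i from congrFun x.2.2 i]
      exact hGT _ _ (y₀ i).2
  set masterPsi : C(homotopyFiber (confToPi (↥S) k) ybX × unitInterval, Fin k → ↥T) :=
    ⟨fun q i => ⟨G (tA 1 q.2, (q.1.1.2 (tB 1 q.2) i).1), hmemA q.1 q.2 i⟩, by
      apply continuous_pi
      intro i
      apply Continuous.subtype_mk
      apply G.continuous.comp
      apply Continuous.prodMk
      · exact tA_cont.comp (continuous_const.prodMk continuous_snd)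
      · refine continuous_subtype_val.comp ?_
        refine (continuous_apply i).comp ?_
        refine continuous_eval.comp (Continuous.prodMk ?_ ?_)
        · exact continuous_snd.comp (continuous_subtype_val.comp continuous_fst)
        · exact tB_cont.comp (continuous_const.prodMk continuous_snd)⟩ with hmasterPsidef
  set Psi : C(homotopyFiber (confToPi (↥S) k) ybX,
      homotopyFiber (confToPi (↥T) k) y₀) :=
    ⟨fun x => ⟨(⟨fun i => ⟨G (1, (x.1.1.1 i).1), hG1 _ (x.1.1.1 i).2⟩, by
        intro i j hij
        have h2 : G (1, ((x.1.1.1 i : ↥S) : Z)) = G (1, ((x.1.1.1 j : ↥S) : Z)) :=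
          congrArg (fun w : ↥T => (w : Z)) hij
        exact x.1.1.2 (Subtype.ext (hGinj 1 h2))⟩, masterPsi.curry x), by
        funext i
        apply Subtype.ext
        show G (tA 1 0, (x.1.2 (tB 1 0) i).1) = G (1, (x.1.1.1 i).1)
        rw [tA_zero_right, tB_zero_right,
          show x.1.2 0 i = x.1.1.1 i from congrFun x.2.1 i], by
        funext i
        apply Subtype.ext
        show G (tA 1 1, (x.1.2 (tB 1 1) i).1) = (y₀ i).1
        rw [tA_one_right, tB_one_right,
          show x.1.2 1 i = ybX i from congrFun x.2.2 i]
        exact hG0 _⟩, by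
      apply Continuous.subtype_mk
      apply Continuous.prodMk
      · apply Continuous.subtype_mk
        apply continuous_pi
        intro i
        apply Continuous.subtype_mk
        apply G.continuous.comp
        apply Continuous.prodMk
        · exact continuous_const
        · exact continuous_subtype_val.comp ((continuous_apply i).comp
            (continuous_subtype_val.comp (continuous_fst.comp continuous_subtype_val)))
      · exact (masterPsi.curry).continuous⟩ with hPsidef
  -- identification with the generic squeeze homotopies at time 1
  have hPhiPsi : Phi.comp Psi = ⟨fun x => bigH ybX GX h0X hinjX (1, x),
      (bigH ybX GX h0X hinjX).continuous.comp (continuous_const.prodMk continuous_id)⟩ := by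
    apply ContinuousMap.ext
    intro x
    apply Subtype.ext
    apply Prod.ext
    · apply Subtype.ext
      funext i
      apply Subtype.ext
      rfl
    · apply ContinuousMap.ext
      intro t
      funext i
      apply Subtype.ext
      rfl
  have hPsiPhi : Psi.comp Phi = ⟨fun x => bigH y₀ GA h0A hinjA (1, x),
      (bigH y₀ GA h0A hinjA).continuous.comp (continuous_const.prodMk continuous_id)⟩ := by
    apply ContinuousMap.ext
    intro x
    apply Subtype.ext
    apply Prod.ext
    · apply Subtype.ext
      funext i
      apply Subtype.ext
      rfl
    · apply ContinuousMap.ext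
      intro t
      funext i
      apply Subtype.ext
      rfl
  refine ⟨⟨Psi, Phi, ?_, ?_⟩⟩
  · have h1 : ContinuousMap.Homotopic (ContinuousMap.id _) (Phi.comp Psi) := by
      rw [hPhiPsi]
      exact ⟨{ toContinuousMap := bigH ybX GX h0X hinjX
               map_zero_left := bigH_zero ybX GX h0X hinjX
               map_one_left := fun x => rfl }⟩
    exact h1.symm
  · have h1 : ContinuousMap.Homotopic (ContinuousMap.id _) (Psi.comp Phi) := by
      rw [hPsiPhi]
      exact ⟨{ toContinuousMap := bigH y₀ GA h0A hinjA
               map_zero_left := bigH_zero y₀ GA h0A hinjA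
               map_one_left := fun x => rfl }⟩
    exact h1.symm

end Main

end Stmt8Aux

/-- For a punctured manifold, the homotopy fiber of
`i_k(M − Q) : F(M − Q, k) → (M − Q)^k` has the homotopy type of the homotopy
fiber of `i_k(Int(M) − Q) : F(Int(M) − Q, k) → (Int(M) − Q)^k`. -/
theorem stmt8 (n : ℕ) [NeZero n] (M : Type) [TopologicalSpace M] [T2Space M]
    [SecondCountableTopology M] [CompactSpace M] [ConnectedSpace M]
    [ChartedSpace (EuclideanHalfSpace n) M]
    (hbd : ((mfdInterior n M)ᶜ : Set M).Nonempty)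
    (m : ℕ) (Q : Finset M) (hQcard : Q.card = m)
    (hQ : (↑Q : Set M) ⊆ mfdInterior n M)
    (k : ℕ) (hk : 1 ≤ k)
    (y₀ : Fin k → ↥(mfdInterior n M \ (↑Q : Set M))) :
    Nonempty (ContinuousMap.HomotopyEquiv
      (homotopyFiber (confToPi (↥((↑Q : Set M)ᶜ)) k)
        (fun i => (⟨(y₀ i : M), (y₀ i).2.2⟩ : ↥((↑Q : Set M)ᶜ))))
      (homotopyFiber (confToPi (↥(mfdInterior n M \ (↑Q : Set M))) k) y₀)) := by
  obtain ⟨G, hG0, hGinj, hGint, hGQ, hG1⟩ :=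
    Stmt8Aux.exists_squeeze (M := M) (↑Q : Set M) Q.finite_toSet hQ
  have hGnotQ : ∀ (t : unitInterval) (x : M), x ∉ (↑Q : Set M) → G (t, x) ∉ (↑Q : Set M) := by
    intro t x hx hmem
    have h1 : G (t, G (t, x)) = G (t, x) := hGQ t _ hmem
    have h2 : G (t, x) = x := hGinj t h1
    rw [h2] at hmem
    exact hx hmem
  exact Stmt8Aux.main_equiv ((↑Q : Set M)ᶜ) (mfdInterior n M \ (↑Q : Set M))
    (fun x hx => hx.2) G hG0 hGinj
    (fun t x hx => hGnotQ t x hx)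
    (fun t x hx => ⟨hGint t x hx.1, hGnotQ t x hx.2⟩)
    (fun x hx => ⟨hG1 x, hGnotQ 1 x hx⟩)
    y₀
end
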